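/- arXiv:1803.04529 — 6 statements merged into one kernel-verified Lean document; each statement's English description precedes it below -/
import Mathlib

section
/- For any r ∈ ℕ and n ∈ ℕ_+, (r+1)·D_{r+1}(n) = (n-r)·D_r(n) + n·D_r(n-1) (equivalently, D_{r+1}(n) = ((n-r)/(r+1))·D_r(n) + (n/(r+1))·D_r(n-1)). -/
open Equiv Equiv.Perm

section General

set_option linter.unusedSectionVars false

variable {α : Type*} [Finite α] [DecidableEq α]

theorem sameCycle_iff_exists_nat_pow {f : Perm α} {x y : α} :
    f.SameCycle x y ↔ ∃ k : ℕ, (f ^ k) x = y := by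
  constructor
  · intro h
    obtain ⟨i, _, hi⟩ := h.exists_pow_eq'
    exact ⟨i, hi⟩
  · rintro ⟨k, rfl⟩
    exact ⟨(k : ℤ), by simp [zpow_natCast]⟩

theorem pow_eq_of_agree_on_cycle {σ₁ σ₂ : Perm α} {x : α}
    (h : ∀ z, σ₁.SameCycle x z → σ₂ z = σ₁ z) (k : ℕ) : (σ₂ ^ k) x = (σ₁ ^ k) x := by
  induction k with
  | zero => rfl
  | succ k ih =>
    rw [pow_succ', pow_succ', Perm.mul_apply, Perm.mul_apply, ih,
      h _ ⟨(k : ℤ), by simp [zpow_natCast]⟩]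

theorem sameCycle_iff_of_agree_on_cycle {σ₁ σ₂ : Perm α} {x : α}
    (h : ∀ z, σ₁.SameCycle x z → σ₂ z = σ₁ z) (y : α) :
    σ₂.SameCycle x y ↔ σ₁.SameCycle x y := by
  rw [sameCycle_iff_exists_nat_pow, sameCycle_iff_exists_nat_pow]
  exact exists_congr fun k => by rw [pow_eq_of_agree_on_cycle h]

theorem sameCycle_fixed {σ : Perm α} {x y : α} (hx : σ x = x) :
    σ.SameCycle x y ↔ y = x := by
  constructor
  · intro h
    rw [sameCycle_iff_exists_nat_pow] at h
    obtain ⟨k, rfl⟩ := h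
    induction k with
    | zero => rfl
    | succ k ih => rw [pow_succ', Perm.mul_apply, ih, hx]
  · rintro rfl; exact Perm.SameCycle.refl _ _

theorem sameCycle_swap_mul_or {π : Perm α} {x y z : α}
    (h : π.SameCycle x z) :
    (swap x y * π).SameCycle x z ∨ (swap x y * π).SameCycle y z := by
  rw [sameCycle_iff_exists_nat_pow] at h
  obtain ⟨k, rfl⟩ := h
  induction k with
  | zero => exact Or.inl (Perm.SameCycle.refl _ _)
  | succ k ih =>
    rw [pow_succ', Perm.mul_apply]
    set w := (π ^ k) x with hw
    by_cases h1 : π w = x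
    · rw [h1]; exact Or.inl (Perm.SameCycle.refl _ _)
    by_cases h2 : π w = y
    · rw [h2]; exact Or.inr (Perm.SameCycle.refl _ _)
    have hstep : (swap x y * π) w = π w := by
      rw [Perm.mul_apply, swap_apply_of_ne_of_ne h1 h2]
    have hsc : (swap x y * π).SameCycle w (π w) := by
      rw [← hstep]; exact ⟨1, by simp⟩
    rcases ih with h' | h'
    · exact Or.inl (h'.trans hsc)
    · exact Or.inr (h'.trans hsc)

theorem pow_mul_self_eq {σ : Perm α} {x : α} {s : ℕ} (hs : (σ ^ s) x = x) (q : ℕ) :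
    (σ ^ (s * q)) x = x := by
  induction q with
  | zero => simp
  | succ q ih => rw [Nat.mul_succ, pow_add, Perm.mul_apply, hs, ih]

theorem pow_mod_of_pow_eq {σ : Perm α} {x : α} {s : ℕ} (hs : (σ ^ s) x = x) (k : ℕ) :
    (σ ^ k) x = (σ ^ (k % s)) x := by
  conv_lhs => rw [← Nat.mod_add_div k s]
  rw [pow_add, Perm.mul_apply, pow_mul_self_eq hs]

theorem sameCycle_swap_mul_of_not_sameCycle {π : Perm α} {x y : α}
    (hxy : x ≠ y) (h : ¬ π.SameCycle x y) : (swap x y * π).SameCycle x y := by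
  classical
  have hper : ∃ t : ℕ, 0 < t ∧ (π ^ t) x = x :=
    ⟨orderOf π, orderOf_pos π, by rw [pow_orderOf_eq_one]; rfl⟩
  obtain ⟨t, ⟨ht0, htx⟩, hminp⟩ :
      ∃ t, (0 < t ∧ (π ^ t) x = x) ∧ ∀ j < t, ¬(0 < j ∧ (π ^ j) x = x) :=
    ⟨Nat.find hper, Nat.find_spec hper, fun j hj => Nat.find_min hper hj⟩
  have hmin : ∀ j, 0 < j → j < t → (π ^ j) x ≠ x := fun j hj0 hjt hjx =>
    hminp j hjt ⟨hj0, hjx⟩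
  have hpow : ∀ j, j < t → ((swap x y * π) ^ j) x = (π ^ j) x := by
    intro j hj
    induction j with
    | zero => rfl
    | succ j ih =>
      rw [pow_succ', Perm.mul_apply, ih (by omega), Perm.mul_apply, pow_succ', Perm.mul_apply]
      have h1 : π ((π ^ j) x) ≠ x := by
        rw [← Perm.mul_apply, ← pow_succ']
        exact hmin _ (by omega) (by omega)
      have h2 : π ((π ^ j) x) ≠ y := by
        intro hc
        exact h (hc ▸ Perm.SameCycle.apply_right ⟨(j:ℤ), by simp [zpow_natCast]⟩)
      rw [swap_apply_of_ne_of_ne h1 h2]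
  have hfin : ((swap x y * π) ^ t) x = y := by
    obtain ⟨t', rfl⟩ : ∃ t', t = t' + 1 := ⟨t - 1, by omega⟩
    rw [pow_succ', Perm.mul_apply, hpow t' (by omega)]
    have hx' : π ((π ^ t') x) = x := by rw [← Perm.mul_apply, ← pow_succ']; exact htx
    rw [Perm.mul_apply, hx', swap_apply_left]
  exact ⟨(t : ℤ), by rw [zpow_natCast]; exact hfin⟩

theorem not_sameCycle_swap_mul_of_sameCycle {π : Perm α} {x y : α}
    (hxy : x ≠ y) (h : π.SameCycle x y) : ¬ (swap x y * π).SameCycle x y := by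
  classical
  have hex : ∃ s : ℕ, 0 < s ∧ ((π ^ s) x = x ∨ (π ^ s) x = y) := by
    obtain ⟨k, hk⟩ := sameCycle_iff_exists_nat_pow.mp h
    refine ⟨k, ?_, Or.inr hk⟩
    rcases Nat.eq_zero_or_pos k with rfl | h'
    · exact absurd hk hxy
    · exact h'
  obtain ⟨s, ⟨hs0, hsx⟩, hminp⟩ :
      ∃ s, (0 < s ∧ ((π ^ s) x = x ∨ (π ^ s) x = y)) ∧
        ∀ j < s, ¬(0 < j ∧ ((π ^ j) x = x ∨ (π ^ j) x = y)) :=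
    ⟨Nat.find hex, Nat.find_spec hex, fun j hj => Nat.find_min hex hj⟩
  have hmin : ∀ j, 0 < j → j < s → (π ^ j) x ≠ x ∧ (π ^ j) x ≠ y := by
    intro j hj0 hjs
    constructor <;> intro hc
    · exact hminp j hjs ⟨hj0, Or.inl hc⟩
    · exact hminp j hjs ⟨hj0, Or.inr hc⟩
  have hsy : (π ^ s) x = y := by
    rcases hsx with hx' | hy'
    · exfalso
      obtain ⟨k, hk⟩ := sameCycle_iff_exists_nat_pow.mp h
      rw [pow_mod_of_pow_eq hx' k] at hk
      rcases Nat.eq_zero_or_pos (k % s) with hz | hp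
      · rw [hz] at hk; exact hxy hk
      · exact (hmin _ hp (Nat.mod_lt _ hs0)).2 hk
    · exact hy'
  have hpow : ∀ j, j < s → ((swap x y * π) ^ j) x = (π ^ j) x := by
    intro j hj
    induction j with
    | zero => rfl
    | succ j ih =>
      rw [pow_succ', Perm.mul_apply, ih (by omega), Perm.mul_apply, pow_succ', Perm.mul_apply]
      have h1 : π ((π ^ j) x) ≠ x := by
        rw [← Perm.mul_apply, ← pow_succ']
        exact (hmin (j+1) (by omega) hj).1
      have h2 : π ((π ^ j) x) ≠ y := by
        rw [← Perm.mul_apply, ← pow_succ']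
        exact (hmin (j+1) (by omega) hj).2
      rw [swap_apply_of_ne_of_ne h1 h2]
  have hret : ((swap x y * π) ^ s) x = x := by
    obtain ⟨s', rfl⟩ : ∃ s', s = s' + 1 := ⟨s - 1, by omega⟩
    rw [pow_succ', Perm.mul_apply, hpow s' (by omega)]
    have hy' : π ((π ^ s') x) = y := by rw [← Perm.mul_apply, ← pow_succ']; exact hsy
    rw [Perm.mul_apply, hy', swap_apply_right]
  intro hc
  obtain ⟨k, hk⟩ := sameCycle_iff_exists_nat_pow.mp hc
  rw [pow_mod_of_pow_eq hret k] at hk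
  rcases Nat.eq_zero_or_pos (k % s) with hz | hp
  · rw [hz] at hk; exact hxy hk
  · have hpp := hpow (k % s) (Nat.mod_lt _ hs0)
    rw [hk] at hpp
    exact (hmin _ hp (Nat.mod_lt _ hs0)).2 hpp.symm

end General

open Equiv Equiv.Perm

/-- The `r`-derangement number `D_r(n)`: the number of fixed-point-free permutations
of `n + r` elements such that the first `r` (distinguished) elements lie in pairwise
distinct cycles of the cycle decomposition. -/
noncomputable def rDerangement (r n : ℕ) : ℕ :=
  Nat.card {σ : Equiv.Perm (Fin (n + r)) //
    (∀ x, σ x ≠ x) ∧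
    ∀ i j : Fin (n + r), (i : ℕ) < r → (j : ℕ) < r → i ≠ j → ¬ σ.SameCycle i j}

def PCond {α : Type*} (p : α → Prop) (σ : Perm α) : Prop :=
  (∀ x, σ x ≠ x) ∧ ∀ i j, p i → p j → i ≠ j → ¬ σ.SameCycle i j

theorem rDerangement_eq_card (r n : ℕ) :
    rDerangement r n = Nat.card {σ : Perm (Fin (n + r)) // PCond (fun x : Fin (n + r) => (x : ℕ) < r) σ} :=
  rfl

section Transfer

theorem sameCycle_iff_exists_nat_pow' {α : Type*} [Finite α] {f : Perm α} {x y : α} :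
    f.SameCycle x y ↔ ∃ k : ℕ, (f ^ k) x = y := by
  constructor
  · intro h
    obtain ⟨i, _, hi⟩ := h.exists_pow_eq'
    exact ⟨i, hi⟩
  · rintro ⟨k, rfl⟩
    exact ⟨(k : ℤ), by simp [zpow_natCast]⟩

theorem permCongr_pow {α β : Type*} (E : α ≃ β) (σ : Perm α) (k : ℕ) :
    (E.permCongr σ) ^ k = E.permCongr (σ ^ k) := by
  induction k with
  | zero => ext x; simp [Equiv.permCongr_apply]
  | succ k ih => rw [pow_succ, pow_succ, ih]; ext x; simp [Equiv.permCongr_apply]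

theorem sameCycle_permCongr {α β : Type*} [Finite α] [Finite β] (E : α ≃ β) (σ : Perm α)
    (x y : α) : (E.permCongr σ).SameCycle (E x) (E y) ↔ σ.SameCycle x y := by
  rw [sameCycle_iff_exists_nat_pow', sameCycle_iff_exists_nat_pow']
  refine exists_congr fun k => ?_
  rw [permCongr_pow]
  simp only [Equiv.permCongr_apply, Equiv.symm_apply_apply]
  exact ⟨fun h => by simpa using congrArg E.symm h, fun h => by rw [h]⟩

theorem card_pcond_congr {α β : Type*} [Finite α] [Finite β] (E : α ≃ β)
    (p : α → Prop) (q : β → Prop) (hpq : ∀ x, p x ↔ q (E x)) :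
    Nat.card {σ : Perm α // PCond p σ} = Nat.card {σ : Perm β // PCond q σ} := by
  refine Nat.card_congr ((E.permCongr).subtypeEquiv fun σ => ?_)
  unfold PCond
  constructor
  · rintro ⟨h1, h2⟩
    constructor
    · intro y
      have := h1 (E.symm y)
      simp only [Equiv.permCongr_apply]
      intro hc
      exact this (by simpa using congrArg E.symm hc)
    · intro i j hi hj hij hsc
      have hi' : p (E.symm i) := (hpq _).mpr (by simpa using hi)
      have hj' : p (E.symm j) := (hpq _).mpr (by simpa using hj)
      refine h2 _ _ hi' hj' (fun hc => hij (by simpa using congrArg E hc)) ?_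
      have := (sameCycle_permCongr E σ (E.symm i) (E.symm j))
      simp only [Equiv.apply_symm_apply] at this
      exact this.mp hsc
  · rintro ⟨h1, h2⟩
    constructor
    · intro y hc
      exact h1 (E y) (by simp [Equiv.permCongr_apply, hc])
    · intro i j hi hj hij hsc
      refine h2 (E i) (E j) ((hpq _).mp hi) ((hpq _).mp hj)
        (fun hc => hij (E.injective hc)) ?_
      exact (sameCycle_permCongr E σ i j).mpr hsc

theorem card_pcond_subtype {α : Type*} [Finite α] (p : α → Prop) [DecidablePred p]
    (Dist : α → Prop) (hD : ∀ i, Dist i → p i) :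
    Nat.card {τ : Perm α // (∀ x, ¬p x → τ x = x) ∧ (∀ x, p x → τ x ≠ x) ∧
        (∀ i j, Dist i → Dist j → i ≠ j → ¬ τ.SameCycle i j)} =
      Nat.card {σ : Perm (Subtype p) // PCond (fun x => Dist x.1) σ} := by
  refine Nat.card_congr ?_
  have hmem : ∀ (τ : Perm α), (∀ x, ¬p x → τ x = x) → ∀ x, p x ↔ p (τ x) := by
    intro τ hfix x
    constructor
    · intro hx
      by_contra hc
      have h' := hfix _ hc
      have := τ.injective h'
      rw [← this] at hx
      exact hc hx
    · intro hx
      by_contra hc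
      rw [hfix x hc] at hx
      exact hc hx
  refine
    { toFun := fun τ => ⟨τ.1.subtypePerm (fun x => (hmem τ.1 τ.2.1 x).symm), ?_, ?_⟩
      invFun := fun σ => ⟨ofSubtype σ.1, ?_, ?_, ?_⟩
      left_inv := ?_
      right_inv := ?_ }
  · intro x
    obtain ⟨τ, h1, h2, h3⟩ := τ
    simp only [subtypePerm_apply, ne_eq, Subtype.ext_iff]
    exact h2 x.1 x.2
  · intro i j hi hj hij hsc
    obtain ⟨τ, h1, h2, h3⟩ := τ
    rw [sameCycle_subtypePerm] at hsc
    exact h3 i.1 j.1 hi hj (fun hc => hij (Subtype.ext hc)) hsc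
  · intro x hx
    exact ofSubtype_apply_of_not_mem σ.1 hx
  · intro x hx
    rw [ofSubtype_apply_of_mem σ.1 hx]
    intro hc
    exact σ.2.1 ⟨x, hx⟩ (Subtype.ext hc)
  · intro i j hi hj hij hsc
    have hi' := hD i hi
    have hj' := hD j hj
    have : (ofSubtype σ.1).subtypePerm (ofSubtype_apply_mem_iff_mem σ.1) = σ.1 :=
      subtypePerm_ofSubtype σ.1
    have hsc' : σ.1.SameCycle ⟨i, hi'⟩ ⟨j, hj'⟩ := by
      rw [← this, sameCycle_subtypePerm]
      exact hsc
    exact σ.2.2 ⟨i, hi'⟩ ⟨j, hj'⟩ hi hj (fun hc => hij (congrArg Subtype.val hc)) hsc'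
  · rintro ⟨τ, h1, h2, h3⟩
    refine Subtype.ext ?_
    show ofSubtype (τ.subtypePerm (fun x => (hmem τ h1 x).symm)) = τ
    exact ofSubtype_subtypePerm (fun x => (hmem τ h1 x).symm) (fun x hx => by_contra fun hc => hx (h1 x hc))
  · rintro ⟨σ, hσ⟩
    refine Subtype.ext ?_
    simp only
    convert subtypePerm_ofSubtype σ
theorem exists_equiv_matching {α β : Type*} [Fintype α] [Fintype β] [DecidableEq α]
    [DecidableEq β] (p : α → Prop) (q : β → Prop) [DecidablePred p] [DecidablePred q]
    (h1 : Fintype.card {x // p x} = Fintype.card {y // q y})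
    (h0 : Fintype.card α = Fintype.card β) :
    ∃ E : α ≃ β, ∀ x, p x ↔ q (E x) := by
  have h2 : Fintype.card {x // ¬p x} = Fintype.card {y // ¬q y} := by
    rw [Fintype.card_subtype_compl, Fintype.card_subtype_compl, h1, h0]
  have e1 : {x // p x} ≃ {y // q y} := Fintype.equivOfCardEq h1
  have e2 : {x // ¬p x} ≃ {y // ¬q y} := Fintype.equivOfCardEq h2
  refine ⟨(Equiv.sumCompl p).symm.trans ((e1.sumCongr e2).trans (Equiv.sumCompl q)), ?_⟩
  intro x
  by_cases hx : p x
  · simp only [Equiv.trans_apply, Equiv.sumCompl_symm_apply_of_pos hx,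
      Equiv.sumCongr_apply, Sum.map_inl, Equiv.sumCompl_apply_inl]
    exact ⟨fun _ => (e1 ⟨x, hx⟩).2, fun _ => hx⟩
  · simp only [Equiv.trans_apply, Equiv.sumCompl_symm_apply_of_neg hx,
      Equiv.sumCongr_apply, Sum.map_inr, Equiv.sumCompl_apply_inr]
    exact ⟨fun h => absurd h hx, fun h => absurd h (e2 ⟨x, hx⟩).2⟩

theorem card_val_lt {m r : ℕ} (h : r ≤ m) :
    Fintype.card {x : Fin m // (x : ℕ) < r} = r := by
  have e : {x : Fin m // (x : ℕ) < r} ≃ Fin r :=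
    { toFun := fun x => (⟨x.1.1, x.2⟩ : Fin r)
      invFun := fun k => ⟨⟨k.1, by omega⟩, k.2⟩
      left_inv := fun x => by ext; rfl
      right_inv := fun k => by ext; rfl }
  rw [Fintype.card_congr e, Fintype.card_fin]

/-- master counting lemma -/
theorem card_pcond_eq_rDerangement {α : Type*} [Fintype α] [DecidableEq α]
    (p Dist : α → Prop) [DecidablePred p] [DecidablePred Dist]
    (hD : ∀ i, Dist i → p i) (r' n' : ℕ)
    (hcard : Fintype.card {x // p x} = n' + r')
    (hdist : Fintype.card {x // Dist x} = r') :
    Nat.card {τ : Perm α // (∀ x, ¬p x → τ x = x) ∧ (∀ x, p x → τ x ≠ x) ∧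
        (∀ i j, Dist i → Dist j → i ≠ j → ¬ τ.SameCycle i j)} = rDerangement r' n' := by
  rw [card_pcond_subtype p Dist hD, rDerangement_eq_card]
  have hsub : Fintype.card {x : Subtype p // Dist x.1} = r' := by
    rw [← hdist, Fintype.card_eq_nat_card, Fintype.card_eq_nat_card]
    refine Nat.card_congr ((Equiv.subtypeSubtypeEquivSubtypeInter p Dist).trans
      (Equiv.subtypeEquivRight fun x => ?_))
    exact ⟨fun h => h.2, fun h => ⟨hD x h, h⟩⟩
  obtain ⟨E, hE⟩ := exists_equiv_matching (fun x : Subtype p => Dist x.1)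
    (fun k : Fin (n' + r') => (k : ℕ) < r')
    (by rw [hsub, card_val_lt (by omega)])
    (by rw [Fintype.card_subtype, Fintype.card_fin]; simpa [Fintype.card_subtype] using hcard)
  exact card_pcond_congr E _ _ hE
section Main

variable {r n : ℕ}

abbrev MM (r n : ℕ) := Fin (n + r + 1)

def ept (r n : ℕ) : MM r n := ⟨r, by omega⟩

abbrev ACond (σ : Perm (MM r n)) : Prop :=
  PCond (fun x : MM r n => (x : ℕ) < r + 1) σ

abbrev TCond (τ : Perm (MM r n)) : Prop :=
  τ (ept r n) = ept r n ∧ (∀ x, x ≠ ept r n → τ x ≠ x) ∧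
    ∀ i j : MM r n, (i : ℕ) < r → (j : ℕ) < r → i ≠ j → ¬ τ.SameCycle i j

theorem val_ept : ((ept r n : MM r n) : ℕ) = r := rfl

theorem dist_cases {x : MM r n} (hx : (x : ℕ) < r + 1) : (x : ℕ) < r ∨ x = ept r n := by
  rcases Nat.lt_or_ge (x : ℕ) r with h | h
  · exact Or.inl h
  · refine Or.inr (Fin.ext ?_)
    rw [val_ept]; omega

theorem sc_apply_self (σ : Perm (MM r n)) (x : MM r n) : σ.SameCycle x (σ x) :=
  ⟨1, by simp⟩

/-- in an `A`-permutation, the image of a distinguished element is non-distinguished -/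
theorem A_apply_dist {σ : Perm (MM r n)} (hσ : ACond σ) {i : MM r n}
    (hi : (i : ℕ) < r + 1) : r < ((σ i : MM r n) : ℕ) ∨ σ i = i := by
  by_cases hd : σ i = i
  · exact Or.inr hd
  left
  by_contra hc
  push_neg at hc
  have hdist : ((σ i : MM r n) : ℕ) < r + 1 := by omega
  exact hσ.2 i (σ i) hi hdist (fun h => hd h.symm) (sc_apply_self σ i)

theorem A_apply_dist' {σ : Perm (MM r n)} (hσ : ACond σ) {i : MM r n}
    (hi : (i : ℕ) < r + 1) : r < ((σ i : MM r n) : ℕ) := by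
  rcases A_apply_dist hσ hi with h | h
  · exact h
  · exact absurd h (hσ.1 i)

/-- E2 forward membership -/
theorem E2_fwd {σ : Perm (MM r n)} (hσ : ACond σ) (h2 : σ (σ (ept r n)) ≠ ept r n) :
    TCond (swap (ept r n) (σ (ept r n)) * σ) ∧ r < ((σ (ept r n) : MM r n) : ℕ) ∧
      ∀ i : MM r n, (i : ℕ) < r →
        ¬ (swap (ept r n) (σ (ept r n)) * σ).SameCycle i (σ (ept r n)) := by
  set e := ept r n with he
  set a := σ e with ha
  set τ := swap e a * σ with hτ
  have hae : a ≠ e := hσ.1 e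
  have heval0 : ((e : MM r n) : ℕ) = r := rfl
  have haval : r < (a : ℕ) := A_apply_dist' hσ (by omega)
  have heval : ((e : MM r n) : ℕ) = r := rfl
  have hiSC : ∀ i : MM r n, (i : ℕ) < r → ¬ σ.SameCycle i e := by
    intro i hi
    refine hσ.2 i e (by omega) (by omega) ?_
    intro h
    rw [h] at hi
    omega
  have hagree : ∀ i : MM r n, (i : ℕ) < r → ∀ z, σ.SameCycle i z → τ z = σ z := by
    intro i hi z hz
    rw [hτ, Perm.mul_apply]
    have h1 : σ z ≠ e := by
      intro hc
      exact hiSC i hi (hz.trans (by rw [← hc]; exact sc_apply_self σ z))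
    have h2' : σ z ≠ a := by
      intro hc
      have : z = e := σ.injective (by rw [hc, ha])
      exact hiSC i hi (this ▸ hz)
    rw [swap_apply_of_ne_of_ne h1 h2']
  have hSCiff : ∀ i : MM r n, (i : ℕ) < r → ∀ w, τ.SameCycle i w ↔ σ.SameCycle i w :=
    fun i hi w => sameCycle_iff_of_agree_on_cycle (hagree i hi) w
  refine ⟨⟨?_, ?_, ?_⟩, haval, ?_⟩
  · rw [hτ, Perm.mul_apply, ← ha, swap_apply_right]
  · intro x hx
    rw [hτ, Perm.mul_apply]
    by_cases hc1 : σ x = e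
    · rw [hc1, swap_apply_left]
      intro hc
      exact h2 (by rw [hc, hc1])
    · by_cases hc2 : σ x = a
      · exact absurd (σ.injective (hc2.trans ha)) hx
      · rw [swap_apply_of_ne_of_ne hc1 hc2]
        exact fun hc => hσ.1 x hc
  · intro i j hi hj hij hsc
    rw [hSCiff i hi] at hsc
    exact hσ.2 i j (by omega) (by omega) hij hsc
  · intro i hi hsc
    rw [hSCiff i hi] at hsc
    have : σ.SameCycle i e := hsc.trans ((sc_apply_self σ e).symm)
    exact hiSC i hi this

/-- E2 backward membership -/
theorem E2_bwd {τ : Perm (MM r n)} (hτ : TCond τ) {a : MM r n} (ha1 : r < (a : ℕ))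
    (ha2 : ∀ i : MM r n, (i : ℕ) < r → ¬ τ.SameCycle i a) :
    ACond (swap (ept r n) a * τ) ∧
      (swap (ept r n) a * τ) ((swap (ept r n) a * τ) (ept r n)) ≠ ept r n := by
  set e := ept r n with he
  set σ := swap e a * τ with hσd
  have heval : ((e : MM r n) : ℕ) = r := rfl
  have hae : a ≠ e := by
    intro hc
    rw [hc] at ha1; omega
  have hσe : σ e = a := by rw [hσd, Perm.mul_apply, hτ.1, swap_apply_left]
  have hagree : ∀ i : MM r n, (i : ℕ) < r → ∀ z, τ.SameCycle i z → σ z = τ z := by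
    intro i hi z hz
    rw [hσd, Perm.mul_apply]
    have h1 : τ z ≠ e := by
      intro hc
      have hze : z = e := τ.injective (by rw [hc, hτ.1])
      rw [hze] at hz
      have := (sameCycle_fixed hτ.1).mp hz.symm
      rw [this, val_ept] at hi; omega
    have h2 : τ z ≠ a := by
      intro hc
      exact ha2 i hi (hz.trans (by rw [← hc]; exact sc_apply_self τ z))
    rw [swap_apply_of_ne_of_ne h1 h2]
  have hSCiff : ∀ i : MM r n, (i : ℕ) < r → ∀ w, σ.SameCycle i w ↔ τ.SameCycle i w :=
    fun i hi w => sameCycle_iff_of_agree_on_cycle (hagree i hi) w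
  have hSCe : ∀ i : MM r n, (i : ℕ) < r → ¬ σ.SameCycle i e := by
    intro i hi hsc
    rw [hSCiff i hi] at hsc
    have := (sameCycle_fixed hτ.1).mp hsc.symm
    rw [this, val_ept] at hi; omega
  constructor
  · constructor
    · intro x
      by_cases hx : x = e
      · rw [hx, hσe]; exact hae
      rw [hσd, Perm.mul_apply]
      by_cases hc1 : τ x = e
      · exact absurd (τ.injective (by rw [hc1, hτ.1])) hx
      by_cases hc2 : τ x = a
      · rw [hc2, swap_apply_right]
        exact fun hc => hx hc.symm
      · rw [swap_apply_of_ne_of_ne hc1 hc2]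
        exact hτ.2.1 x hx
    · intro i j hi hj hij hsc
      rcases dist_cases hi with hi' | rfl
      · rcases dist_cases hj with hj' | rfl
        · rw [hSCiff i hi'] at hsc
          exact hτ.2.2 i j hi' hj' hij hsc
        · exact hSCe i hi' hsc
      · rcases dist_cases hj with hj' | rfl
        · exact hSCe j hj' hsc.symm
        · exact hij rfl
  · rw [hσe, hσd, Perm.mul_apply]
    have h1 : τ a ≠ e := fun hc => hae (τ.injective (by rw [hc, hτ.1]))
    have h2 : τ a ≠ a := hτ.2.1 a hae
    rw [swap_apply_of_ne_of_ne h1 h2]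
    exact h1

end Main
section Main2

variable {r n : ℕ}

abbrev CCond (d : MM r n) (τ : Perm (MM r n)) : Prop :=
  τ (ept r n) = ept r n ∧ τ d = d ∧ (∀ x, x ≠ ept r n → x ≠ d → τ x ≠ x) ∧
    ∀ i j : MM r n, (i : ℕ) < r → (j : ℕ) < r → i ≠ j → ¬ τ.SameCycle i j

/-- E3 forward membership -/
theorem E3_fwd {σ : Perm (MM r n)} (hσ : ACond σ) (h2 : σ (σ (ept r n)) = ept r n) :
    r < ((σ (ept r n) : MM r n) : ℕ) ∧
      CCond (σ (ept r n)) (swap (ept r n) (σ (ept r n)) * σ) := by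
  set e := ept r n with he
  have heval : ((e : MM r n) : ℕ) = r := rfl
  set d := σ e with hd
  set τ := swap e d * σ with hτ
  have hde : d ≠ e := hσ.1 e
  have hdval : r < (d : ℕ) := A_apply_dist' hσ (by omega)
  have hiSC : ∀ i : MM r n, (i : ℕ) < r → ¬ σ.SameCycle i e := by
    intro i hi
    refine hσ.2 i e (by omega) (by omega) ?_
    intro h; rw [h] at hi; omega
  have hagree : ∀ i : MM r n, (i : ℕ) < r → ∀ z, σ.SameCycle i z → τ z = σ z := by
    intro i hi z hz
    rw [hτ, Perm.mul_apply]
    have h1 : σ z ≠ e := by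
      intro hc
      exact hiSC i hi (hz.trans (by rw [← hc]; exact sc_apply_self σ z))
    have h2' : σ z ≠ d := by
      intro hc
      have : z = e := σ.injective (by rw [hc, hd])
      exact hiSC i hi (this ▸ hz)
    rw [swap_apply_of_ne_of_ne h1 h2']
  have hSCiff : ∀ i : MM r n, (i : ℕ) < r → ∀ w, τ.SameCycle i w ↔ σ.SameCycle i w :=
    fun i hi w => sameCycle_iff_of_agree_on_cycle (hagree i hi) w
  refine ⟨hdval, ?_, ?_, ?_, ?_⟩
  · rw [hτ, Perm.mul_apply, ← hd, swap_apply_right]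
  · rw [hτ, Perm.mul_apply, h2, swap_apply_left]
  · intro x hx hxd
    rw [hτ, Perm.mul_apply]
    by_cases hc1 : σ x = e
    · exact absurd (σ.injective (by rw [hc1, ← h2])) hxd
    by_cases hc2 : σ x = d
    · exact absurd (σ.injective (by rw [hc2, hd])) hx
    · rw [swap_apply_of_ne_of_ne hc1 hc2]
      exact hσ.1 x
  · intro i j hi hj hij hsc
    rw [hSCiff i hi] at hsc
    exact hσ.2 i j (by omega) (by omega) hij hsc

/-- E3 backward membership -/
theorem E3_bwd {d : MM r n} (hdval : r < (d : ℕ)) {τ : Perm (MM r n)} (hτ : CCond d τ) :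
    ACond (swap (ept r n) d * τ) ∧
      (swap (ept r n) d * τ) ((swap (ept r n) d * τ) (ept r n)) = ept r n := by
  set e := ept r n with he
  have heval : ((e : MM r n) : ℕ) = r := rfl
  have hde : d ≠ e := by intro hc; rw [hc] at hdval; omega
  set σ := swap e d * τ with hσd
  have hσe : σ e = d := by rw [hσd, Perm.mul_apply, hτ.1, swap_apply_left]
  have hσd' : σ d = e := by rw [hσd, Perm.mul_apply, hτ.2.1, swap_apply_right]
  have hagree : ∀ i : MM r n, (i : ℕ) < r → ∀ z, τ.SameCycle i z → σ z = τ z := by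
    intro i hi z hz
    rw [hσd, Perm.mul_apply]
    have h1 : τ z ≠ e := by
      intro hc
      have hze : z = e := τ.injective (by rw [hc, hτ.1])
      rw [hze] at hz
      have := (sameCycle_fixed hτ.1).mp hz.symm
      rw [this] at hi; omega
    have h2 : τ z ≠ d := by
      intro hc
      have hzd : z = d := τ.injective (by rw [hc, hτ.2.1])
      rw [hzd] at hz
      have := (sameCycle_fixed hτ.2.1).mp hz.symm
      rw [this] at hi; omega
    rw [swap_apply_of_ne_of_ne h1 h2]
  have hSCiff : ∀ i : MM r n, (i : ℕ) < r → ∀ w, σ.SameCycle i w ↔ τ.SameCycle i w :=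
    fun i hi w => sameCycle_iff_of_agree_on_cycle (hagree i hi) w
  have hSCe : ∀ i : MM r n, (i : ℕ) < r → ¬ σ.SameCycle i e := by
    intro i hi hsc
    rw [hSCiff i hi] at hsc
    have := (sameCycle_fixed hτ.1).mp hsc.symm
    rw [this] at hi; omega
  refine ⟨⟨?_, ?_⟩, by rw [hσe, hσd']⟩
  · intro x
    by_cases hx : x = e
    · rw [hx, hσe]; exact hde
    by_cases hxd : x = d
    · rw [hxd, hσd']; exact fun hc => hde hc.symm
    rw [hσd, Perm.mul_apply]
    by_cases hc1 : τ x = e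
    · exact absurd (τ.injective (by rw [hc1, hτ.1])) hx
    by_cases hc2 : τ x = d
    · exact absurd (τ.injective (by rw [hc2, hτ.2.1])) hxd
    · rw [swap_apply_of_ne_of_ne hc1 hc2]
      exact hτ.2.2.1 x hx hxd
  · intro i j hi hj hij hsc
    rcases dist_cases hi with hi' | rfl
    · rcases dist_cases hj with hj' | rfl
      · rw [hSCiff i hi'] at hsc
        exact hτ.2.2.2 i j hi' hj' hij hsc
      · exact hSCe i hi' hsc
    · rcases dist_cases hj with hj' | rfl
      · exact hSCe j hj' hsc.symm
      · exact hij rfl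

end Main2
section Main3

variable {r n : ℕ}

/-- E1 forward membership -/
theorem E1_fwd {σ : Perm (MM r n)} (hσ : ACond σ) {jM : MM r n} (hj : (jM : ℕ) < r) :
    TCond (swap (ept r n) (σ (ept r n)) * (swap (ept r n) (σ jM) * σ)) ∧
      r < ((σ jM : MM r n) : ℕ) ∧
      (swap (ept r n) (σ (ept r n)) * (swap (ept r n) (σ jM) * σ)).SameCycle jM (σ jM) ∧
      (swap (ept r n) (σ (ept r n)) * (swap (ept r n) (σ jM) * σ)) jM = σ (ept r n) := by
  set e := ept r n with he
  have heval : ((e : MM r n) : ℕ) = r := rfl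
  set a := σ jM with ha
  set b := σ e with hb
  set ρ := swap e a * σ with hρ
  set τ := swap e b * ρ with hτd
  have hje : jM ≠ e := by intro hc; rw [hc] at hj; omega
  have haval : r < (a : ℕ) := A_apply_dist' hσ (by omega)
  have hbval : r < (b : ℕ) := A_apply_dist' hσ (by omega)
  have hae : a ≠ e := by intro hc; rw [hc] at haval; omega
  have hbe : b ≠ e := by intro hc; rw [hc] at hbval; omega
  have hab : a ≠ b := fun hc => hje (σ.injective (by rw [← ha, ← hb, hc]))
  have hSCσje : ¬ σ.SameCycle jM e := hσ.2 jM e (by omega) (by omega) hje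
  have hSCσea : ¬ σ.SameCycle e a := by
    intro h
    rw [ha] at h
    exact hSCσje (Perm.sameCycle_apply_right.mp h).symm
  have hρe : ρ e = b := by
    rw [hρ, Perm.mul_apply, ← hb]
    exact swap_apply_of_ne_of_ne hbe (Ne.symm hab)
  have hρj : ρ jM = e := by rw [hρ, Perm.mul_apply, ← ha, swap_apply_right]
  have hSCρea : ρ.SameCycle e a :=
    sameCycle_swap_mul_of_not_sameCycle (Ne.symm hae) hSCσea
  have hSCρej : ρ.SameCycle e jM := by
    have h0 := sc_apply_self ρ jM
    rw [hρj] at h0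
    exact h0.symm
  have hτe : τ e = e := by rw [hτd, Perm.mul_apply, hρe, swap_apply_right]
  have hτj : τ jM = b := by rw [hτd, Perm.mul_apply, hρj, swap_apply_left]
  have hSCτba : τ.SameCycle b a := by
    rcases sameCycle_swap_mul_or (y := b) hSCρea with h0 | h0
    · rw [← hτd] at h0
      exact absurd ((sameCycle_fixed hτe).mp h0) hae
    · rw [← hτd] at h0
      exact h0
  have hSCτbj : τ.SameCycle b jM := by
    rcases sameCycle_swap_mul_or (y := b) hSCρej with h0 | h0
    · rw [← hτd] at h0
      exact absurd ((sameCycle_fixed hτe).mp h0) hje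
    · rw [← hτd] at h0
      exact h0
  have hlocal : ∀ i : MM r n, (i : ℕ) < r → i ≠ jM → ∀ w, τ.SameCycle i w ↔ σ.SameCycle i w := by
    intro i hi hij
    have hSCσie : ¬ σ.SameCycle i e := by
      refine hσ.2 i e (by omega) (by omega) ?_
      intro hc; rw [hc] at hi; omega
    have hSCσij : ¬ σ.SameCycle i jM := hσ.2 i jM (by omega) (by omega) hij
    have hag1 : ∀ z, σ.SameCycle i z → ρ z = σ z := by
      intro z hz
      rw [hρ, Perm.mul_apply]
      have h1 : σ z ≠ e := by
        intro hc
        exact hSCσie (hz.trans (by rw [← hc]; exact sc_apply_self σ z))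
      have h2 : σ z ≠ a := by
        intro hc
        exact hSCσij (hz.trans (by
          have : z = jM := σ.injective (by rw [hc, ha])
          rw [this]))
      exact swap_apply_of_ne_of_ne h1 h2
    have hiff1 : ∀ w, ρ.SameCycle i w ↔ σ.SameCycle i w :=
      fun w => sameCycle_iff_of_agree_on_cycle hag1 w
    have hag2 : ∀ z, ρ.SameCycle i z → τ z = ρ z := by
      intro z hz
      rw [hτd, Perm.mul_apply]
      have h1 : ρ z ≠ e := by
        intro hc
        have : ρ.SameCycle i e := hz.trans (by rw [← hc]; exact sc_apply_self ρ z)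
        exact hSCσie ((hiff1 e).mp this)
      have h2 : ρ z ≠ b := by
        intro hc
        have hz' : z = e := ρ.injective (by rw [hc, hρe])
        rw [hz'] at hz
        exact hSCσie ((hiff1 e).mp hz)
      exact swap_apply_of_ne_of_ne h1 h2
    intro w
    rw [sameCycle_iff_of_agree_on_cycle hag2 w]
    exact hiff1 w
  refine ⟨⟨hτe, ?_, ?_⟩, haval, hSCτbj.symm.trans hSCτba, hτj⟩
  · intro x hx
    by_cases hxj : x = jM
    · rw [hxj, hτj]
      intro hc
      rw [hc] at hbval
      omega
    by_cases hse : σ x = e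
    · have hτx : τ x = a := by
        rw [hτd, Perm.mul_apply, hρ, Perm.mul_apply, hse, swap_apply_left]
        exact swap_apply_of_ne_of_ne hae hab
      rw [hτx]
      intro hc
      apply hSCσje
      have h1 : σ.SameCycle jM a := by rw [ha]; exact sc_apply_self σ jM
      have h2 : σ.SameCycle a e := by
        rw [hc, ← hse]
        exact sc_apply_self σ x
      exact h1.trans h2
    · have hτx : τ x = σ x := by
        rw [hτd, Perm.mul_apply, hρ, Perm.mul_apply]
        have h2 : σ x ≠ a := fun hc => hxj (σ.injective (by rw [hc, ha]))
        rw [swap_apply_of_ne_of_ne hse h2]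
        have h3 : σ x ≠ b := fun hc => hx (σ.injective (by rw [hc, hb]))
        exact swap_apply_of_ne_of_ne hse h3
      rw [hτx]
      exact hσ.1 x
  · intro i j hi hj' hij hsc
    by_cases hiJ : i = jM
    · have hjne : j ≠ jM := fun hc => hij (hiJ.trans hc.symm)
      have h0 : σ.SameCycle j i := by
        rw [← hlocal j hj' hjne]
        exact hsc.symm
      exact hσ.2 j i (by omega) (by omega) (Ne.symm hij) h0
    · rw [hlocal i hi hiJ] at hsc
      exact hσ.2 i j (by omega) (by omega) hij hsc

end Main3
section Main4

variable {r n : ℕ}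

/-- E1 backward membership -/
theorem E1_bwd {τ : Perm (MM r n)} (hτ : TCond τ) {a jM : MM r n} (ha : r < (a : ℕ))
    (hj : (jM : ℕ) < r) (hsc : τ.SameCycle jM a) (hne : a ≠ τ jM) :
    ACond (swap (ept r n) a * (swap (ept r n) (τ jM) * τ)) ∧
      (swap (ept r n) a * (swap (ept r n) (τ jM) * τ)) jM = a ∧
      (swap (ept r n) a * (swap (ept r n) (τ jM) * τ)) (ept r n) = τ jM := by
  set e := ept r n with he
  have heval : ((e : MM r n) : ℕ) = r := rfl
  set b := τ jM with hb
  set ρ := swap e b * τ with hρ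
  set σ := swap e a * ρ with hσd
  have hje : jM ≠ e := by intro hc; rw [hc] at hj; omega
  have hae : a ≠ e := by intro hc; rw [hc] at ha; omega
  have hbe : b ≠ e := fun hc => hje (τ.injective (by rw [← hb, hc, hτ.1]))
  have hbj : b ≠ jM := by rw [hb]; exact hτ.2.1 jM hje
  have hab : a ≠ b := hne
  have hρe : ρ e = b := by rw [hρ, Perm.mul_apply, hτ.1, swap_apply_left]
  have hρj : ρ jM = e := by rw [hρ, Perm.mul_apply, ← hb, swap_apply_right]
  have hσe : σ e = b := by
    rw [hσd, Perm.mul_apply, hρe]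
    exact swap_apply_of_ne_of_ne hbe (Ne.symm hab)
  have hσj : σ jM = a := by rw [hσd, Perm.mul_apply, hρj, swap_apply_left]
  have hSCτeb : ¬ τ.SameCycle e b := by
    rw [sameCycle_fixed hτ.1]
    exact hbe
  have hSCρeb : ρ.SameCycle e b :=
    sameCycle_swap_mul_of_not_sameCycle (Ne.symm hbe) hSCτeb
  have hSCτba : τ.SameCycle b a := by
    rw [hb]
    exact Perm.sameCycle_apply_left.mpr hsc
  have hSCρea : ρ.SameCycle e a := by
    have hor := sameCycle_swap_mul_or (y := e) hSCτba
    rw [Equiv.swap_comm b e, ← hρ] at hor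
    rcases hor with h0 | h0
    · exact hSCρeb.trans h0
    · exact h0
  have hSCσea : ¬ σ.SameCycle e a := by
    rw [hσd]
    exact not_sameCycle_swap_mul_of_sameCycle (Ne.symm hae) hSCρea
  have hlocal : ∀ i : MM r n, (i : ℕ) < r → i ≠ jM →
      ∀ w, σ.SameCycle i w ↔ τ.SameCycle i w := by
    intro i hi hij
    have hSCτie : ¬ τ.SameCycle i e := by
      intro h0
      have := (sameCycle_fixed hτ.1).mp h0.symm
      rw [this] at hi; omega
    have hSCτij : ¬ τ.SameCycle i jM := hτ.2.2 i jM hi hj hij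
    have hag : ∀ z, τ.SameCycle i z → σ z = τ z := by
      intro z hz
      have hz_e : z ≠ e := by
        intro hc; rw [hc] at hz; exact hSCτie hz
      have hz_j : z ≠ jM := by
        intro hc; rw [hc] at hz; exact hSCτij hz
      have hτz_a : τ z ≠ a := by
        intro hc
        have h1 : τ.SameCycle z a := by rw [← hc]; exact sc_apply_self τ z
        exact hSCτij ((hz.trans h1).trans hsc.symm)
      have hτz_e : τ z ≠ e := fun hc => hz_e (τ.injective (by rw [hc, hτ.1]))
      have hτz_b : τ z ≠ b := fun hc => hz_j (τ.injective (by rw [hc, hb]))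
      rw [hσd, Perm.mul_apply, hρ, Perm.mul_apply,
        swap_apply_of_ne_of_ne hτz_e hτz_b, swap_apply_of_ne_of_ne hτz_e hτz_a]
    exact fun w => sameCycle_iff_of_agree_on_cycle hag w
  have hSCσja : σ.SameCycle jM a := by
    have h0 := sc_apply_self σ jM
    rw [hσj] at h0
    exact h0
  refine ⟨⟨?_, ?_⟩, hσj, hσe⟩
  · intro x
    by_cases hx : x = e
    · rw [hx, hσe]; exact hbe
    by_cases hxj : x = jM
    · rw [hxj, hσj]
      intro hc
      rw [← hc] at hj
      omega
    have hτx_e : τ x ≠ e := fun hc => hx (τ.injective (by rw [hc, hτ.1]))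
    have hτx_b : τ x ≠ b := fun hc => hxj (τ.injective (by rw [hc, hb]))
    rw [hσd, Perm.mul_apply, hρ, Perm.mul_apply, swap_apply_of_ne_of_ne hτx_e hτx_b]
    by_cases hτx_a : τ x = a
    · rw [hτx_a, swap_apply_right]
      exact fun hc => hx hc.symm
    · rw [swap_apply_of_ne_of_ne hτx_e hτx_a]
      exact hτ.2.1 x hx
  · intro i j hi hj' hij hsc'
    rcases dist_cases hi with hi' | rfl
    · rcases dist_cases hj' with hj'' | rfl
      · by_cases hiJ : i = jM
        · have hjne : j ≠ jM := fun hc => hij (hiJ.trans hc.symm)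
          have h0 : τ.SameCycle j i := by
            rw [← hlocal j hj'' hjne]
            exact hsc'.symm
          exact hτ.2.2 j i hj'' hi' (Ne.symm hij) h0
        · rw [hlocal i hi' hiJ] at hsc'
          exact hτ.2.2 i j hi' hj'' hij hsc'
      · -- j = e
        by_cases hiJ : i = jM
        · rw [hiJ] at hsc'
          exact hSCσea (hsc'.symm.trans hSCσja)
        · rw [hlocal i hi' hiJ] at hsc'
          have := (sameCycle_fixed hτ.1).mp hsc'.symm
          rw [this] at hi'; omega
    · rcases dist_cases hj' with hj'' | rfl
      · by_cases hjJ : j = jM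
        · rw [hjJ] at hsc'
          exact hSCσea (hsc'.trans hSCσja)
        · have h0 := hsc'.symm
          rw [hlocal j hj'' hjJ] at h0
          have := (sameCycle_fixed hτ.1).mp h0.symm
          rw [this] at hj''; omega
      · exact hij rfl

end Main4
section Main5

variable (r n : ℕ)

theorem card_E2 :
    Nat.card {σ : Perm (MM r n) // ACond σ ∧ σ (σ (ept r n)) ≠ ept r n} =
      Nat.card {q : Perm (MM r n) × MM r n // TCond q.1 ∧ r < ((q.2 : MM r n) : ℕ) ∧
        ∀ i : MM r n, (i : ℕ) < r → ¬ q.1.SameCycle i q.2} := by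
  refine Nat.card_congr ?_
  refine
    { toFun := fun σ => ⟨(swap (ept r n) (σ.1 (ept r n)) * σ.1, σ.1 (ept r n)),
        E2_fwd σ.2.1 σ.2.2⟩
      invFun := fun q => ⟨swap (ept r n) q.1.2 * q.1.1,
        (E2_bwd q.2.1 q.2.2.1 q.2.2.2).1, (E2_bwd q.2.1 q.2.2.1 q.2.2.2).2⟩
      left_inv := ?_
      right_inv := ?_ }
  · rintro ⟨σ, hσ⟩
    refine Subtype.ext ?_
    simp only [swap_mul_self_mul]
  · rintro ⟨⟨τ, a⟩, hT, ha, hfa⟩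
    refine Subtype.ext ?_
    have hσe : (swap (ept r n) a * τ) (ept r n) = a := by
      rw [Perm.mul_apply, hT.1, swap_apply_left]
    simp only [hσe, swap_mul_self_mul]

theorem card_E3 :
    Nat.card {σ : Perm (MM r n) // ACond σ ∧ σ (σ (ept r n)) = ept r n} =
      Nat.card {q : MM r n × Perm (MM r n) // r < ((q.1 : MM r n) : ℕ) ∧ CCond q.1 q.2} := by
  refine Nat.card_congr ?_
  refine
    { toFun := fun σ => ⟨(σ.1 (ept r n), swap (ept r n) (σ.1 (ept r n)) * σ.1),
        E3_fwd σ.2.1 σ.2.2⟩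
      invFun := fun q => ⟨swap (ept r n) q.1.1 * q.1.2,
        (E3_bwd q.2.1 q.2.2).1, (E3_bwd q.2.1 q.2.2).2⟩
      left_inv := ?_
      right_inv := ?_ }
  · rintro ⟨σ, hσ⟩
    refine Subtype.ext ?_
    simp only [swap_mul_self_mul]
  · rintro ⟨⟨d, τ⟩, hd, hC⟩
    refine Subtype.ext ?_
    have hσe : (swap (ept r n) d * τ) (ept r n) = d := by
      rw [Perm.mul_apply, hC.1, swap_apply_left]
    simp only [hσe, swap_mul_self_mul]

theorem card_Asplit :
    Nat.card {σ : Perm (MM r n) // ACond σ} =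
      Nat.card {σ : Perm (MM r n) // ACond σ ∧ σ (σ (ept r n)) ≠ ept r n} +
      Nat.card {σ : Perm (MM r n) // ACond σ ∧ σ (σ (ept r n)) = ept r n} := by
  classical
  rw [← Nat.card_sum]
  refine Nat.card_congr ?_
  refine
    { toFun := fun σ =>
        if h : σ.1 (σ.1 (ept r n)) = ept r n then Sum.inr ⟨σ.1, σ.2, h⟩
        else Sum.inl ⟨σ.1, σ.2, h⟩
      invFun := fun q => q.elim (fun σ => ⟨σ.1, σ.2.1⟩) (fun σ => ⟨σ.1, σ.2.1⟩)
      left_inv := ?_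
      right_inv := ?_ }
  · rintro ⟨σ, hσ⟩
    by_cases h : σ (σ (ept r n)) = ept r n
    · simp only [dif_pos h, Sum.elim_inr]
    · simp only [dif_neg h, Sum.elim_inl]
  · rintro (⟨σ, h1, h2⟩ | ⟨σ, h1, h2⟩)
    · simp only [Sum.elim_inl]; exact dif_neg h2
    · simp only [Sum.elim_inr]; exact dif_pos h2

theorem card_E1 :
    Nat.card (Fin r × {σ : Perm (MM r n) // ACond σ}) =
      Nat.card {q : Perm (MM r n) × MM r n × MM r n // TCond q.1 ∧ r < ((q.2.1 : MM r n) : ℕ) ∧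
        ((q.2.2 : MM r n) : ℕ) < r ∧ q.1.SameCycle q.2.2 q.2.1 ∧ q.2.1 ≠ q.1 q.2.2} := by
  refine Nat.card_congr ?_
  have hcast : r ≤ n + r + 1 := by omega
  refine
    { toFun := fun x =>
        ⟨(swap (ept r n) (x.2.1 (ept r n)) * (swap (ept r n) (x.2.1 (Fin.castLE hcast x.1)) * x.2.1),
          x.2.1 (Fin.castLE hcast x.1), Fin.castLE hcast x.1), ?_⟩
      invFun := fun q =>
        (⟨(q.1.2.2 : MM r n).1, q.2.2.2.1⟩,
         ⟨swap (ept r n) q.1.2.1 * (swap (ept r n) (q.1.1 q.1.2.2) * q.1.1),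
          (E1_bwd q.2.1 q.2.2.1 q.2.2.2.1 q.2.2.2.2.1 q.2.2.2.2.2).1⟩)
      left_inv := ?_
      right_inv := ?_ }
  · obtain ⟨h1, h2, h3, h4⟩ := E1_fwd x.2.2 (show ((Fin.castLE hcast x.1 : MM r n) : ℕ) < r from x.1.2)
    refine ⟨h1, h2, x.1.2, h3, ?_⟩
    rw [h4]
    intro hc
    have : (Fin.castLE hcast x.1 : MM r n) = ept r n := x.2.1.injective hc
    have hv : ((Fin.castLE hcast x.1 : MM r n) : ℕ) = r := by rw [this]; rfl
    have := x.1.2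
    simp only [Fin.coe_castLE] at hv
    omega
  · rintro ⟨j, σ, hσ⟩
    obtain ⟨h1, h2, h3, h4⟩ := E1_fwd hσ (show ((Fin.castLE hcast j : MM r n) : ℕ) < r from j.2)
    refine Prod.ext ?_ ?_
    · exact Fin.ext rfl
    · refine Subtype.ext ?_
      simp only [h4, swap_mul_self_mul]
  · rintro ⟨⟨τ, a, jM⟩, hT, ha, hj, hsc, hne⟩
    obtain ⟨hA, hσj, hσe⟩ := E1_bwd hT ha hj hsc hne
    have hjeq : Fin.castLE hcast (⟨(jM : ℕ), hj⟩ : Fin r) = jM := Fin.ext rfl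
    refine Subtype.ext ?_
    simp only [hjeq]
    refine Prod.ext ?_ (Prod.ext ?_ rfl)
    · simp only [hσj, hσe, swap_mul_self_mul]
    · simp only [hσj]

end Main5
section Main6

variable (r n : ℕ)

theorem card_gt : Fintype.card {x : MM r n // r < (x : ℕ)} = n := by
  have e : {x : MM r n // r < (x : ℕ)} ≃ Fin n :=
    { toFun := fun x => ⟨x.1.1 - (r + 1), by have h1 := x.1.2; have h2 := x.2; omega⟩
      invFun := fun k => ⟨⟨k.1 + r + 1, by have := k.2; omega⟩,
        show r < k.1 + r + 1 by omega⟩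
      left_inv := fun x => by
        refine Subtype.ext (Fin.ext ?_)
        have h2 := x.2
        simp only [Fin.val_mk]
        omega
      right_inv := fun k => by
        refine Fin.ext ?_
        simp only [Fin.val_mk]
        omega }
  rw [Fintype.card_congr e, Fintype.card_fin]

variable {r n}

theorem T_img_subset {τ : Perm (MM r n)} (hτ : TCond τ) {i : MM r n} (hi : (i : ℕ) < r) :
    r < ((τ i : MM r n) : ℕ) := by
  have heval : ((ept r n : MM r n) : ℕ) = r := rfl
  have hie : i ≠ ept r n := by intro hc; rw [hc] at hi; omega
  have hne : τ i ≠ i := hτ.2.1 i hie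
  rcases Nat.lt_trichotomy ((τ i : MM r n) : ℕ) r with h | h | h
  · exact absurd (sc_apply_self τ i) (hτ.2.2 i (τ i) hi h (Ne.symm hne))
  · exfalso
    have : τ i = ept r n := Fin.ext (by rw [h, heval])
    have : i = ept r n := τ.injective (by rw [this, hτ.1])
    exact hie this
  · exact h

theorem T_r_le_n {τ : Perm (MM r n)} (hτ : TCond τ) : r ≤ n := by
  classical
  have himg : (Finset.univ.filter (fun x : MM r n => (x : ℕ) < r)).image τ ⊆
      Finset.univ.filter (fun a : MM r n => r < (a : ℕ)) := by
    intro a ha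
    rw [Finset.mem_image] at ha
    obtain ⟨x, hx, rfl⟩ := ha
    rw [Finset.mem_filter] at hx ⊢
    exact ⟨Finset.mem_univ _, T_img_subset hτ hx.2⟩
  have h1 : ((Finset.univ.filter (fun x : MM r n => (x : ℕ) < r)).image τ).card = r := by
    rw [Finset.card_image_of_injective _ τ.injective, ← Fintype.card_subtype]
    exact card_val_lt (by omega)
  have h2 : (Finset.univ.filter (fun a : MM r n => r < (a : ℕ))).card = n := by
    rw [← Fintype.card_subtype]
    exact card_gt r n
  calc r = _ := h1.symm
    _ ≤ _ := Finset.card_le_card himg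
    _ = n := h2

theorem card_fiber_Fa {τ : Perm (MM r n)} (hτ : TCond τ) :
    Nat.card {a : MM r n // r < (a : ℕ) ∧ ∀ i : MM r n, (i : ℕ) < r → a ≠ τ i} = n - r := by
  classical
  rw [Nat.card_eq_fintype_card, Fintype.card_subtype]
  have heq : Finset.univ.filter
        (fun a : MM r n => r < (a : ℕ) ∧ ∀ i : MM r n, (i : ℕ) < r → a ≠ τ i) =
      (Finset.univ.filter (fun a : MM r n => r < (a : ℕ))) \
        ((Finset.univ.filter (fun x : MM r n => (x : ℕ) < r)).image τ) := by
    ext a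
    simp only [Finset.mem_filter, Finset.mem_sdiff, Finset.mem_image, Finset.mem_univ,
      true_and]
    constructor
    · rintro ⟨h1, h2⟩
      refine ⟨h1, ?_⟩
      rintro ⟨x, hx, rfl⟩
      exact h2 x hx rfl
    · rintro ⟨h1, h2⟩
      refine ⟨h1, ?_⟩
      intro i hi hc
      exact h2 ⟨i, hi, hc.symm⟩
  rw [heq, Finset.card_sdiff_of_subset]
  · rw [Finset.card_image_of_injective _ τ.injective]
    have h1 : (Finset.univ.filter (fun x : MM r n => (x : ℕ) < r)).card = r := by
      rw [← Fintype.card_subtype]; exact card_val_lt (by omega)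
    have h2 : (Finset.univ.filter (fun a : MM r n => r < (a : ℕ))).card = n := by
      rw [← Fintype.card_subtype]; exact card_gt r n
    rw [h1, h2]
  · intro a ha
    rw [Finset.mem_image] at ha
    obtain ⟨x, hx, rfl⟩ := ha
    rw [Finset.mem_filter] at hx ⊢
    exact ⟨Finset.mem_univ _, T_img_subset hτ hx.2⟩

theorem card_fiberwise {α β : Type*} [Fintype α] [Finite β] (p : α → β → Prop) :
    Nat.card {q : α × β // p q.1 q.2} = ∑ a : α, Nat.card {b : β // p a b} := by
  classical
  cases nonempty_fintype β
  rw [Nat.card_congr (Equiv.subtypeProdEquivSigmaSubtype p), Nat.card_eq_fintype_card,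
    Fintype.card_sigma]
  exact Finset.sum_congr rfl fun a _ => (Nat.card_eq_fintype_card).symm

theorem card_Btot :
    Nat.card {q : Perm (MM r n) × MM r n // TCond q.1 ∧ r < ((q.2 : MM r n) : ℕ) ∧
        ∀ i : MM r n, (i : ℕ) < r → q.2 ≠ q.1 i} =
      Nat.card {τ : Perm (MM r n) // TCond τ} * (n - r) := by
  classical
  rw [card_fiberwise (fun τ (a : MM r n) => TCond τ ∧ r < (a : ℕ) ∧
    ∀ i : MM r n, (i : ℕ) < r → a ≠ τ i)]
  have hfib : ∀ τ : Perm (MM r n),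
      Nat.card {a : MM r n // TCond τ ∧ r < (a : ℕ) ∧ ∀ i : MM r n, (i : ℕ) < r → a ≠ τ i} =
        if TCond τ then n - r else 0 := by
    intro τ
    by_cases hτ : TCond τ
    · rw [if_pos hτ, ← card_fiber_Fa hτ]
      exact Nat.card_congr (Equiv.subtypeEquivRight fun a => and_iff_right hτ)
    · rw [if_neg hτ]
      have : IsEmpty {a : MM r n // TCond τ ∧ r < (a : ℕ) ∧
          ∀ i : MM r n, (i : ℕ) < r → a ≠ τ i} := ⟨fun a => hτ a.2.1⟩
      exact Nat.card_of_isEmpty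
  rw [Finset.sum_congr rfl fun τ _ => hfib τ, Finset.sum_ite, Finset.sum_const,
    Finset.sum_const_zero, add_zero, smul_eq_mul, ← Fintype.card_subtype,
    Nat.card_eq_fintype_card]

theorem card_Bsplit :
    Nat.card {q : Perm (MM r n) × MM r n × MM r n // TCond q.1 ∧ r < ((q.2.1 : MM r n) : ℕ) ∧
        ((q.2.2 : MM r n) : ℕ) < r ∧ q.1.SameCycle q.2.2 q.2.1 ∧ q.2.1 ≠ q.1 q.2.2} +
      Nat.card {q : Perm (MM r n) × MM r n // TCond q.1 ∧ r < ((q.2 : MM r n) : ℕ) ∧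
        ∀ i : MM r n, (i : ℕ) < r → ¬ q.1.SameCycle i q.2} =
      Nat.card {q : Perm (MM r n) × MM r n // TCond q.1 ∧ r < ((q.2 : MM r n) : ℕ) ∧
        ∀ i : MM r n, (i : ℕ) < r → q.2 ≠ q.1 i} := by
  classical
  rw [← Nat.card_sum]
  refine Nat.card_congr ?_
  refine
    { toFun := fun x => x.elim
        (fun q => ⟨(q.1.1, q.1.2.1), q.2.1, q.2.2.1, ?_⟩)
        (fun q => ⟨(q.1.1, q.1.2), q.2.1, q.2.2.1, ?_⟩)
      invFun := fun q =>
        if h : ∃ i : MM r n, (i : ℕ) < r ∧ q.1.1.SameCycle i q.1.2 then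
          Sum.inl ⟨(q.1.1, q.1.2, Classical.choose h), q.2.1, q.2.2.1,
            (Classical.choose_spec h).1, (Classical.choose_spec h).2,
            q.2.2.2 _ (Classical.choose_spec h).1⟩
        else
          Sum.inr ⟨(q.1.1, q.1.2), q.2.1, q.2.2.1, fun i hi hsc => h ⟨i, hi, hsc⟩⟩
      left_inv := ?_
      right_inv := ?_ }
  · -- B1 → forbidden-image condition
    intro i hi hc
    obtain ⟨⟨τ, a, jM⟩, hT, ha, hj, hsc, hne⟩ := q
    simp only at hi hc ⊢
    by_cases hij : i = jM
    · rw [hij] at hc; exact hne hc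
    · have h1 : τ.SameCycle i a := by rw [hc]; exact sc_apply_self τ i
      exact hT.2.2 i jM hi hj hij (h1.trans hsc.symm)
  · intro i hi hc
    obtain ⟨⟨τ, a⟩, hT, ha, hfa⟩ := q
    simp only at hi hc ⊢
    exact hfa i hi (by rw [hc]; exact sc_apply_self τ i)
  · rintro (⟨⟨τ, a, jM⟩, hT, ha, hj, hsc, hne⟩ | ⟨⟨τ, a⟩, hT, ha, hfa⟩)
    · simp only [Sum.elim_inl]
      have hex : ∃ i : MM r n, (i : ℕ) < r ∧ τ.SameCycle i a := ⟨jM, hj, hsc⟩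
      refine (dif_pos hex).trans ?_
      have huniq : Classical.choose hex = jM := by
        by_contra hcc
        exact hT.2.2 _ jM (Classical.choose_spec hex).1 hj hcc
          ((Classical.choose_spec hex).2.trans hsc.symm)
      simp only [huniq]
    · simp only [Sum.elim_inr]
      refine dif_neg ?_
      rintro ⟨i, hi, hsc⟩
      exact hfa i hi hsc
  · rintro ⟨⟨τ, a⟩, hT, ha, hfa⟩
    by_cases h : ∃ i : MM r n, (i : ℕ) < r ∧ τ.SameCycle i a
    · simp only [dif_pos h, Sum.elim_inl]
    · simp only [dif_neg h, Sum.elim_inr]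

end Main6
section Main7

variable {r n : ℕ}

theorem card_Tset : Nat.card {τ : Perm (MM r n) // TCond τ} = rDerangement r n := by
  classical
  have hstep : Nat.card {τ : Perm (MM r n) // TCond τ} =
      Nat.card {τ : Perm (MM r n) //
        (∀ x, ¬ x ≠ ept r n → τ x = x) ∧ (∀ x, x ≠ ept r n → τ x ≠ x) ∧
        (∀ i j : MM r n, (i : ℕ) < r → (j : ℕ) < r → i ≠ j → ¬ τ.SameCycle i j)} := by
    refine Nat.card_congr (Equiv.subtypeEquivRight fun τ => ?_)
    constructor
    · rintro ⟨h1, h2, h3⟩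
      refine ⟨?_, h2, h3⟩
      intro x hx
      rw [not_not] at hx
      rw [hx, h1]
    · rintro ⟨h1, h2, h3⟩
      exact ⟨h1 _ (by simp), h2, h3⟩
  rw [hstep]
  refine card_pcond_eq_rDerangement (fun x : MM r n => x ≠ ept r n)
    (fun x : MM r n => (x : ℕ) < r) ?_ r n ?_ (card_val_lt (by omega))
  · intro i hi hc
    rw [hc] at hi
    have : ((ept r n : MM r n) : ℕ) = r := rfl
    omega
  · rw [Fintype.card_subtype_compl, Fintype.card_subtype_eq, Fintype.card_fin]
    omega

theorem card_Cfiber {d : MM r n} (hd : r < (d : ℕ)) (hn : 0 < n) :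
    Nat.card {τ : Perm (MM r n) // CCond d τ} = rDerangement r (n - 1) := by
  classical
  have heval : ((ept r n : MM r n) : ℕ) = r := rfl
  have hde : d ≠ ept r n := by intro hc; rw [hc] at hd; omega
  have hstep : Nat.card {τ : Perm (MM r n) // CCond d τ} =
      Nat.card {τ : Perm (MM r n) //
        (∀ x, ¬ (x ≠ ept r n ∧ x ≠ d) → τ x = x) ∧
        (∀ x, (x ≠ ept r n ∧ x ≠ d) → τ x ≠ x) ∧
        (∀ i j : MM r n, (i : ℕ) < r → (j : ℕ) < r → i ≠ j → ¬ τ.SameCycle i j)} := by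
    refine Nat.card_congr (Equiv.subtypeEquivRight fun τ => ?_)
    constructor
    · rintro ⟨h1, h2, h3, h4⟩
      refine ⟨?_, fun x hx => h3 x hx.1 hx.2, h4⟩
      intro x hx
      rw [not_and_or, not_not, not_not] at hx
      rcases hx with rfl | rfl
      · exact h1
      · exact h2
    · rintro ⟨h1, h2, h3⟩
      exact ⟨h1 _ (by simp), h1 _ (by simp), fun x hx hxd => h2 x ⟨hx, hxd⟩, h3⟩
  rw [hstep]
  have hcard2 : Fintype.card {x : MM r n // x ≠ ept r n ∧ x ≠ d} = (n - 1) + r := by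
    rw [Fintype.card_subtype]
    have heq : Finset.univ.filter (fun x : MM r n => x ≠ ept r n ∧ x ≠ d) =
        Finset.univ \ {ept r n, d} := by
      ext x
      simp [Finset.mem_sdiff, Finset.mem_insert]
    rw [heq, Finset.card_sdiff_of_subset (Finset.subset_univ _), Finset.card_univ, Fintype.card_fin,
      Finset.card_pair (Ne.symm hde)]
    omega
  refine card_pcond_eq_rDerangement (fun x : MM r n => x ≠ ept r n ∧ x ≠ d)
    (fun x : MM r n => (x : ℕ) < r) ?_ r (n - 1) hcard2 (card_val_lt (by omega))
  · intro i hi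
    constructor
    · intro hc; rw [hc] at hi; omega
    · intro hc; rw [hc] at hi; omega

theorem card_Ctot (hn : 0 < n) :
    Nat.card {q : MM r n × Perm (MM r n) // r < ((q.1 : MM r n) : ℕ) ∧ CCond q.1 q.2} =
      n * rDerangement r (n - 1) := by
  classical
  rw [card_fiberwise (fun (d : MM r n) τ => r < (d : ℕ) ∧ CCond d τ)]
  have hfib : ∀ d : MM r n,
      Nat.card {τ : Perm (MM r n) // r < (d : ℕ) ∧ CCond d τ} =
        if r < (d : ℕ) then rDerangement r (n - 1) else 0 := by
    intro d
    by_cases hd : r < (d : ℕ)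
    · rw [if_pos hd, ← card_Cfiber hd hn]
      exact Nat.card_congr (Equiv.subtypeEquivRight fun τ => and_iff_right hd)
    · rw [if_neg hd]
      have : IsEmpty {τ : Perm (MM r n) // r < (d : ℕ) ∧ CCond d τ} := ⟨fun q => hd q.2.1⟩
      exact Nat.card_of_isEmpty
  rw [Finset.sum_congr rfl fun d _ => hfib d, Finset.sum_ite, Finset.sum_const,
    Finset.sum_const_zero, add_zero, smul_eq_mul, ← Fintype.card_subtype, card_gt]

theorem card_Aset : Nat.card {σ : Perm (MM r n) // ACond σ} = rDerangement (r + 1) n := rfl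

end Main7
theorem rDerangement_succ_r (r n : ℕ) (hn : 0 < n) :
    ((r : ℤ) + 1) * rDerangement (r + 1) n =
      ((n : ℤ) - r) * rDerangement r n + (n : ℤ) * rDerangement r (n - 1) := by
  classical
  have key : (r + 1) * rDerangement (r + 1) n =
      rDerangement r n * (n - r) + n * rDerangement r (n - 1) := by
    have h1 : Nat.card (Fin r × {σ : Perm (MM r n) // ACond σ}) =
        r * Nat.card {σ : Perm (MM r n) // ACond σ} := by
      rw [Nat.card_prod, Nat.card_eq_fintype_card, Fintype.card_fin]
    calc (r + 1) * rDerangement (r + 1) n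
        = r * Nat.card {σ : Perm (MM r n) // ACond σ} +
            Nat.card {σ : Perm (MM r n) // ACond σ} := by
          rw [card_Aset]; ring
      _ = Nat.card (Fin r × {σ : Perm (MM r n) // ACond σ}) +
            (Nat.card {σ : Perm (MM r n) // ACond σ ∧ σ (σ (ept r n)) ≠ ept r n} +
             Nat.card {σ : Perm (MM r n) // ACond σ ∧ σ (σ (ept r n)) = ept r n}) := by
          rw [h1, card_Asplit]
      _ = (Nat.card {q : Perm (MM r n) × MM r n × MM r n // TCond q.1 ∧
              r < ((q.2.1 : MM r n) : ℕ) ∧ ((q.2.2 : MM r n) : ℕ) < r ∧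
              q.1.SameCycle q.2.2 q.2.1 ∧ q.2.1 ≠ q.1 q.2.2} +
            Nat.card {q : Perm (MM r n) × MM r n // TCond q.1 ∧ r < ((q.2 : MM r n) : ℕ) ∧
              ∀ i : MM r n, (i : ℕ) < r → ¬ q.1.SameCycle i q.2}) +
            Nat.card {q : MM r n × Perm (MM r n) // r < ((q.1 : MM r n) : ℕ) ∧
              CCond q.1 q.2} := by
          rw [card_E1, card_E2, card_E3]; ring
      _ = Nat.card {q : Perm (MM r n) × MM r n // TCond q.1 ∧ r < ((q.2 : MM r n) : ℕ) ∧
              ∀ i : MM r n, (i : ℕ) < r → q.2 ≠ q.1 i} +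
            Nat.card {q : MM r n × Perm (MM r n) // r < ((q.1 : MM r n) : ℕ) ∧
              CCond q.1 q.2} := by rw [card_Bsplit]
      _ = Nat.card {τ : Perm (MM r n) // TCond τ} * (n - r) + n * rDerangement r (n - 1) := by
          rw [card_Btot, card_Ctot hn]
      _ = rDerangement r n * (n - r) + n * rDerangement r (n - 1) := by rw [card_Tset]
  by_cases hrn : r ≤ n
  · have hz := congrArg (Nat.cast : ℕ → ℤ) key
    push_cast [Nat.cast_sub hrn] at hz
    linarith
  · have hT0 : rDerangement r n = 0 := by
      rw [← card_Tset (r := r) (n := n)]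
      have : IsEmpty {τ : Perm (MM r n) // TCond τ} :=
        ⟨fun τ => hrn (T_r_le_n τ.2)⟩
      exact Nat.card_of_isEmpty
    have hnr : n - r = 0 := by omega
    rw [hT0, hnr, Nat.mul_zero, Nat.zero_add] at key
    have hz := congrArg (Nat.cast : ℕ → ℤ) key
    push_cast at hz
    rw [hT0]
    push_cast
    linarith
end Transfer
end

section
/- Define, for n ∈ ℕ, the polynomial P_n(X) = Σ_{j=0}^{n} (j+X)_j·C(n,j)·(-1)^{n-j} ∈ ℤ[X], where (x)_j is the falling factorial. Then the reduction of P_n modulo 2 (as a polynomial over ℤ/2ℤ) equals (X² + X + 1)^{n/2} if n is even, and X·(X² + X + 1)^{(n-1)/2} if n is odd. -/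
/-- The polynomial `P_n(X) = Σ_{j=0}^{n} (j+X)_j · C(n,j) · (-1)^{n-j}`, where the falling
factorial `(j+X)_j = (X+j)(X+j-1)⋯(X+1)` is expressed as `∏_{i=1}^{j} (X+i)`. -/
noncomputable def Ppoly (n : ℕ) : Polynomial ℤ :=
  ∑ j ∈ Finset.range (n + 1),
    Polynomial.C (((-1) ^ (n - j) * n.choose j : ℤ)) *
      ∏ i ∈ Finset.Icc 1 j, (Polynomial.X + Polynomial.C (i : ℤ))

open Polynomial Finset

noncomputable def sP (j : ℕ) : Polynomial (ZMod 2) :=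
  ∏ i ∈ Finset.Icc 1 j, (X + C (i : ZMod 2))

noncomputable def qP (n : ℕ) : Polynomial (ZMod 2) :=
  ∑ j ∈ Finset.range (n + 1), C ((n.choose j : ZMod 2)) * sP j

noncomputable def uP (n : ℕ) : Polynomial (ZMod 2) :=
  ∑ j ∈ Finset.range (n + 1), C ((j * n.choose j : ZMod 2)) * sP j

lemma sP_succ (j : ℕ) : sP (j + 1) = sP j * (X + C ((j + 1 : ℕ) : ZMod 2)) := by
  rw [sP, sP, Finset.prod_Icc_succ_top (by omega)]

lemma two_eq_zero : (2 : Polynomial (ZMod 2)) = 0 := by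
  exact_mod_cast CharP.cast_eq_zero (Polynomial (ZMod 2)) 2

lemma map_Ppoly (n : ℕ) : (Ppoly n).map (Int.castRingHom (ZMod 2)) = qP n := by
  rw [Ppoly, qP, Polynomial.map_sum]
  refine Finset.sum_congr rfl fun j _ => ?_
  rw [Polynomial.map_mul, Polynomial.map_C, Polynomial.map_prod]
  congr 1
  · simp only [eq_intCast, Int.cast_mul, Int.cast_pow, Int.cast_neg, Int.cast_one,
      Int.cast_natCast]
    rw [show ((-1 : ZMod 2)) = 1 from by decide]
    simp
  · refine Finset.prod_congr rfl fun i _ => ?_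
    simp

lemma key_sum (n : ℕ) :
    ∑ k ∈ Finset.range (n + 1), C ((n.choose k : ZMod 2)) * sP (k + 1)
      = X * qP n + uP n + qP n := by
  calc ∑ k ∈ Finset.range (n + 1), C ((n.choose k : ZMod 2)) * sP (k + 1)
      = ∑ k ∈ Finset.range (n + 1),
          (X * (C ((n.choose k : ZMod 2)) * sP k)
            + C (((k + 1) * n.choose k : ZMod 2)) * sP k) := by
        refine Finset.sum_congr rfl fun k _ => ?_
        rw [sP_succ]
        simp only [Nat.cast_mul, Nat.cast_add, Nat.cast_one, map_add, map_mul, map_one]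
        ring
    _ = X * qP n + ∑ k ∈ Finset.range (n + 1),
          (C ((k * n.choose k : ZMod 2)) * sP k + C ((n.choose k : ZMod 2)) * sP k) := by
        rw [Finset.sum_add_distrib, ← Finset.mul_sum, qP]
        congr 1
        refine Finset.sum_congr rfl fun k _ => ?_
        simp only [Nat.cast_mul, Nat.cast_add, Nat.cast_one, map_add, map_mul, map_one]
        ring
    _ = X * qP n + uP n + qP n := by
        rw [Finset.sum_add_distrib, ← uP, ← qP, add_assoc]

lemma qP_succ (n : ℕ) : qP (n + 1) = X * qP n + uP n := by
  have h1 : qP (n + 1)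
      = ∑ k ∈ Finset.range (n + 1), C (((n + 1).choose (k + 1) : ZMod 2)) * sP (k + 1)
        + C (((n + 1).choose 0 : ZMod 2)) * sP 0 := by
    rw [qP, Finset.sum_range_succ']
  have h2 : ∀ k, ((n + 1).choose (k + 1) : ZMod 2) = (n.choose k : ZMod 2)
      + (n.choose (k + 1) : ZMod 2) := by
    intro k; rw [Nat.choose_succ_succ]; push_cast; ring
  have h3 : qP n
      = ∑ k ∈ Finset.range n, C ((n.choose (k + 1) : ZMod 2)) * sP (k + 1)
        + C ((n.choose 0 : ZMod 2)) * sP 0 := by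
    rw [qP, Finset.sum_range_succ']
  have h4 : ∑ k ∈ Finset.range (n + 1), C ((n.choose (k + 1) : ZMod 2)) * sP (k + 1)
      = ∑ k ∈ Finset.range n, C ((n.choose (k + 1) : ZMod 2)) * sP (k + 1) := by
    rw [Finset.sum_range_succ, Nat.choose_succ_self]
    simp
  calc qP (n + 1)
      = ∑ k ∈ Finset.range (n + 1),
          (C ((n.choose k : ZMod 2)) * sP (k + 1)
            + C ((n.choose (k + 1) : ZMod 2)) * sP (k + 1))
        + C (((n + 1).choose 0 : ZMod 2)) * sP 0 := by
        rw [h1]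
        rw [add_left_inj]
        refine Finset.sum_congr rfl fun k _ => ?_
        rw [h2, C_add, add_mul]
    _ = (X * qP n + uP n + qP n) + qP n := by
        rw [Finset.sum_add_distrib, key_sum, h4]
        rw [show ((n+1).choose 0 : ZMod 2) = (n.choose 0 : ZMod 2) by simp]
        rw [add_assoc, ← h3]
    _ = X * qP n + uP n := by
        have : qP n + qP n = 0 := by
          rw [← two_mul, two_eq_zero, zero_mul]
        rw [add_assoc, this, add_zero]

lemma uP_succ (n : ℕ) :
    uP (n + 1) = C (((n + 1 : ℕ) : ZMod 2)) * ((X + 1) * qP n + uP n) := by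
  have h1 : uP (n + 1)
      = ∑ k ∈ Finset.range (n + 1),
          C (((k + 1) * (n + 1).choose (k + 1) : ZMod 2)) * sP (k + 1) := by
    rw [uP, Finset.sum_range_succ']
    simp only [Nat.cast_zero, zero_mul, map_zero, Nat.cast_ofNat, add_zero, Nat.zero_mul,
      Nat.cast_mul]
    simp
  have h2 : ∀ k, (k + 1) * (n + 1).choose (k + 1) = (n + 1) * n.choose k := by
    intro k
    rw [mul_comm (k+1), ← Nat.add_one_mul_choose_eq, mul_comm]
  calc uP (n + 1)
      = C (((n + 1 : ℕ) : ZMod 2)) *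
          ∑ k ∈ Finset.range (n + 1), C ((n.choose k : ZMod 2)) * sP (k + 1) := by
        rw [h1, Finset.mul_sum]
        refine Finset.sum_congr rfl fun k _ => ?_
        have h3 : (((k : ZMod 2) + 1) * (((n + 1).choose (k + 1) : ℕ) : ZMod 2))
            = (((n + 1) * n.choose k : ℕ) : ZMod 2) := by
          rw [← h2]; push_cast; ring
        rw [h3, Nat.cast_mul, map_mul, mul_assoc]
    _ = C (((n + 1 : ℕ) : ZMod 2)) * ((X + 1) * qP n + uP n) := by
        rw [key_sum]
        congr 1
        ring

lemma uP_even (k : ℕ) : uP (2 * k) = 0 := by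
  induction k with
  | zero => simp [uP]
  | succ k ih =>
    rw [show 2 * (k + 1) = (2 * k + 1) + 1 by ring, uP_succ,
      show (((2 * k + 1 + 1 : ℕ) : ZMod 2)) = 0 by
        rw [show 2 * k + 1 + 1 = 2 * (k + 1) by ring]
        push_cast
        rw [show ((2 : ZMod 2)) = 0 from rfl, zero_mul]]
    simp

lemma qP_zero : qP 0 = 1 := by simp [qP, sP]

lemma natCast_two_mul_add_one (k : ℕ) : ((2 * k + 1 : ℕ) : ZMod 2) = 1 := by
  push_cast
  rw [show ((2 : ZMod 2)) = 0 from rfl]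
  ring

lemma qP_main (k : ℕ) : qP (2 * k) = (X ^ 2 + X + 1) ^ k ∧
    qP (2 * k + 1) = X * (X ^ 2 + X + 1) ^ k := by
  induction k with
  | zero =>
    refine ⟨by simpa using qP_zero, ?_⟩
    simp only [Nat.mul_zero, Nat.zero_add, pow_zero, mul_one]
    rw [show (1 : ℕ) = 0 + 1 from rfl, qP_succ, qP_zero]
    simpa using uP_even 0
  | succ k ih =>
    obtain ⟨h1, h2⟩ := ih
    have hu : uP (2 * k + 1) = (X + 1) * (X ^ 2 + X + 1) ^ k := by
      rw [uP_succ, natCast_two_mul_add_one, map_one, one_mul,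
        show uP (2 * k) = 0 from uP_even k, h1, add_zero]
    have h3 : qP (2 * (k + 1)) = (X ^ 2 + X + 1) ^ (k + 1) := by
      rw [show 2 * (k + 1) = (2 * k + 1) + 1 by ring, qP_succ, h2, hu, pow_succ]
      ring
    refine ⟨h3, ?_⟩
    rw [show 2 * (k + 1) + 1 = (2 * (k + 1)) + 1 from rfl, qP_succ, h3,
      show 2 * (k + 1) = 2 * (k + 1) by rfl, uP_even (k + 1), add_zero]

theorem Ppoly_mod_two (n : ℕ) :
    (Ppoly n).map (Int.castRingHom (ZMod 2)) =
      if Even n then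
        (Polynomial.X ^ 2 + Polynomial.X + 1) ^ (n / 2)
      else
        Polynomial.X * (Polynomial.X ^ 2 + Polynomial.X + 1) ^ ((n - 1) / 2) := by
  rw [map_Ppoly]
  rcases Nat.even_or_odd n with h | h
  · rw [if_pos h]
    obtain ⟨k, hk⟩ := h
    rw [show n = 2 * k by omega, (qP_main k).1]
    congr 1
    omega
  · rw [if_neg (Nat.not_even_iff_odd.mpr h)]
    obtain ⟨k, hk⟩ := h
    rw [hk, (qP_main k).2]
    congr 2
    omega
end

section
/- For each r, d ∈ ℕ_+ and all n₁, n₂ ∈ ℕ with n₁ ≡ n₂ (mod d), one has (-1)^{n₁}·D_r(n₁) ≡ (-1)^{n₂}·D_r(n₂) (mod d). In particular, the sequence (D_r(n) mod d)_{n ∈ ℕ} is periodic with period d if d is even, and with period 2d if d is odd. -/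
/-!
Let `s` be a distinguished point of an `r`-derangement `σ` and `y = σ s`; then `y` is not
distinguished. Taking `y` out of its cycle (`σ ↦ σ * swap s y`), deleting the now fixed `y`, and
deleting `s` too if it has become fixed, is a bijection which gives the recurrence
`D_{r+1}(n+1) = (n+1) (D_r(n) + D_{r+1}(n))`, with `D_0` the derangement numbers. Its solution is
`(-1)^n D_r(n) = ∑_k (-1)^k (k choose r) n(n-1)⋯(n-k+1)`. Modulo `d` each falling factorial is a
polynomial in `n`, and the terms with `k > n` vanish, so the right-hand side depends only on `n`
modulo `d`; the periodicity follows because `(-1)^d = 1` for even `d` and `(-1)^(2d) = 1`.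
-/

universe u

open Equiv Finset

def rDerangementRec : ℕ → ℕ → ℕ
  | 0, n => numDerangements n
  | _ + 1, 0 => 0
  | r + 1, n + 1 => (n + 1) * (rDerangementRec r n + rDerangementRec (r + 1) n)

theorem sum_range_mul_descFactorial_succ (g : ℕ → ℤ) (n : ℕ) :
    ∑ k ∈ range (n + 2), g k * (n + 1).descFactorial k =
      g 0 + (n + 1) * ∑ k ∈ range (n + 1), g (k + 1) * n.descFactorial k := by
  rw [sum_range_succ', mul_sum, add_comm]
  congr 1
  · simp
  · refine sum_congr rfl fun k _ ↦ ?_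
    rw [Nat.succ_descFactorial_succ]
    push_cast
    ring

theorem neg_one_pow_mul_rDerangementRec (r n : ℕ) :
    (-1) ^ n * (rDerangementRec r n : ℤ) =
      ∑ k ∈ range (n + 1), (-1) ^ k * (k.choose r : ℤ) * n.descFactorial k := by
  induction n generalizing r with
  | zero => cases r <;> simp [rDerangementRec]
  | succ n ih =>
    rw [sum_range_mul_descFactorial_succ]
    cases r with
    | zero =>
      have shift :
          ∑ k ∈ range (n + 1), (-1) ^ (k + 1) * ((k + 1).choose 0 : ℤ) * n.descFactorial k =
            -∑ k ∈ range (n + 1), (-1) ^ k * (k.choose 0 : ℤ) * n.descFactorial k := by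
        rw [← sum_neg_distrib]
        refine sum_congr rfl fun k _ ↦ ?_
        simp only [Nat.choose_zero_right]
        ring
      have hsq : ((-1 : ℤ)) ^ n * (-1) ^ n = 1 := by rw [← mul_pow]; norm_num
      rw [shift, ← ih 0]
      simp only [rDerangementRec, numDerangements_succ, Nat.choose_zero_right]
      linear_combination hsq
    | succ r =>
      have shift : ∑ k ∈ range (n + 1),
            (-1) ^ (k + 1) * ((k + 1).choose (r + 1) : ℤ) * n.descFactorial k =
          -∑ k ∈ range (n + 1), (-1) ^ k * (k.choose r : ℤ) * n.descFactorial k -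
            ∑ k ∈ range (n + 1), (-1) ^ k * (k.choose (r + 1) : ℤ) * n.descFactorial k := by
        rw [← sum_neg_distrib, ← sum_sub_distrib]
        refine sum_congr rfl fun k _ ↦ ?_
        rw [Nat.choose_succ_succ]
        push_cast
        ring
      rw [shift, ← ih r, ← ih (r + 1), rDerangementRec, Nat.choose_zero_succ]
      push_cast
      ring

theorem sum_mul_descFactorial_modEq (c : ℕ → ℤ) {d n₁ n₂ : ℕ}
    (h : n₁ ≡ n₂ [MOD d]) :
    ∑ k ∈ range (n₁ + 1), c k * n₁.descFactorial k ≡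
      ∑ k ∈ range (n₂ + 1), c k * n₂.descFactorial k [ZMOD d] := by
  have extend : ∀ n N, n < N → ∑ k ∈ range (n + 1), c k * n.descFactorial k =
      ∑ k ∈ range N, c k * n.descFactorial k :=
    fun n N hN ↦ sum_subset (range_subset_range.2 hN) fun k _ hk ↦ by
      simp [Nat.descFactorial_eq_zero_iff_lt.2 (by simpa using hk)]
  rw [extend n₁ (max n₁ n₂ + 1) (by omega), extend n₂ (max n₁ n₂ + 1) (by omega),
    ← ZMod.intCast_eq_intCast_iff]
  push_cast
  simp only [← descPochhammer_eval_eq_descFactorial, (ZMod.natCast_eq_natCast_iff _ _ _).2 h]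

section

variable {α : Type*}

theorem Set.ncard_preimage_val_ne_of_notMem {a : α} {S : Set α} (ha : a ∉ S) :
    ((↑) ⁻¹' S : Set {x // x ≠ a}).ncard = S.ncard :=
  ncard_preimage_of_injective_subset_range Subtype.val_injective fun x hx ↦
    ⟨⟨x, ne_of_mem_of_not_mem hx ha⟩, rfl⟩

theorem Set.ncard_preimage_val_ne_add_one [Finite α] {a : α} {S : Set α} (ha : a ∈ S) :
    ((↑) ⁻¹' S : Set {x // x ≠ a}).ncard + 1 = S.ncard := by
  have : ((↑) ⁻¹' S : Set {x // x ≠ a}) = (↑) ⁻¹' (S \ {a}) := by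
    ext x
    simp [x.2]
  rw [this, ncard_preimage_val_ne_of_notMem (by simp), ncard_sdiff_singleton_add_one ha]

end

namespace Equiv.Perm

variable {α : Type*}

def IsRDerangement (σ : Perm α) (D : Set α) : Prop :=
  (∀ x, σ x ≠ x) ∧ D.Pairwise fun i j ↦ ¬σ.SameCycle i j

/-- `σ` may fix `t`, but no other point. -/
def IsRDerangementExcept (σ : Perm α) (D : Set α) (t : α) : Prop :=
  (∀ x, x ≠ t → σ x ≠ x) ∧ D.Pairwise fun i j ↦ ¬σ.SameCycle i j

theorem IsRDerangement.apply_notMem {σ : Perm α} {D : Set α} {s : α} (h : σ.IsRDerangement D)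
    (hs : s ∈ D) : σ s ∉ D := fun hσs ↦
  h.2 hs hσs (h.1 s).symm SameCycle.rfl.apply_right

theorem sameCycle_mul_swap_iff [DecidableEq α] [Finite α] {c : Perm α} {s y u v : α}
    (hy : c y = y) (hsy : s ≠ y) (hu : u ≠ y) (hv : v ≠ y) :
    (c * swap s y).SameCycle u v ↔ c.SameCycle u v := by
  set σ := c * swap s y
  have hσs : σ s = y := by simp [σ, hy]
  have hσy : σ y = c s := by simp [σ]
  have hσ : ∀ x, x ≠ s → x ≠ y → σ x = c x := fun x h₁ h₂ ↦ by
    simp [σ, swap_apply_of_ne_of_ne h₁ h₂]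
  have hc : ∀ {x}, c x = y ↔ x = y := c.injective.eq_iff' hy
  constructor
  · intro h
    obtain ⟨k, rfl⟩ := h.exists_nat_pow_eq
    -- the `σ`-orbit of `u` passes through `y` only right after `s`
    suffices ∀ k, ((σ ^ k) u = y → c.SameCycle u s) ∧
        ((σ ^ k) u ≠ y → c.SameCycle u ((σ ^ k) u)) from (this k).2 hv
    intro k
    induction k with
    | zero => exact ⟨fun h ↦ absurd h hu, fun _ ↦ SameCycle.refl _ _⟩
    | succ k ih =>
      rw [pow_succ', mul_apply]
      set w := (σ ^ k) u
      by_cases hwy : w = y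
      · have hcs : c s ≠ y := hc.not.2 hsy
        rw [hwy, hσy]
        exact ⟨fun h ↦ absurd h hcs, fun _ ↦ sameCycle_apply_right.2 (ih.1 hwy)⟩
      by_cases hws : w = s
      · rw [hws, hσs]
        exact ⟨fun _ ↦ hws ▸ ih.2 hwy, fun h ↦ absurd rfl h⟩
      rw [hσ w hws hwy]
      exact ⟨fun h ↦ absurd (hc.1 h) hwy, fun _ ↦ sameCycle_apply_right.2 (ih.2 hwy)⟩
  · intro h
    obtain ⟨k, rfl⟩ := h.exists_nat_pow_eq
    have step : ∀ w, w ≠ y → σ.SameCycle w (c w) := fun w hw ↦ by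
      by_cases hws : w = s
      · subst hws
        simpa [hσs, hσy] using (SameCycle.refl σ w).apply_right.apply_right
      · rw [← hσ w hws hw]
        exact SameCycle.rfl.apply_right
    clear hv h
    induction k with
    | zero => exact SameCycle.refl _ _
    | succ k ih =>
      rw [pow_succ', mul_apply]
      exact ih.trans (step _ fun h ↦ hu (((c ^ k).injective.eq_iff'
        (pow_apply_eq_self_of_apply_eq_self hy k)).1 h))

theorem pairwise_not_sameCycle_mul_swap_iff [DecidableEq α] [Finite α] {c : Perm α}
    {s y : α} {D : Set α} (hy : c y = y) (hsy : s ≠ y) (hyD : y ∉ D) :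
    (D.Pairwise fun i j ↦ ¬(c * swap s y).SameCycle i j) ↔
      D.Pairwise fun i j ↦ ¬c.SameCycle i j :=
  forall₂_congr fun _ hi ↦ forall₂_congr fun _ hj ↦ imp_congr_right fun _ ↦ not_congr <|
    sameCycle_mul_swap_iff hy hsy (ne_of_mem_of_not_mem hi hyD) (ne_of_mem_of_not_mem hj hyD)

section Fixing

variable [DecidableEq α] (a : α)

def fixingEquiv : {c : Perm α // c a = a} ≃ Perm {x // x ≠ a} where
  toFun c := c.1.subtypePerm fun _ ↦ c.1.injective.ne_iff' c.2
  invFun τ := ⟨ofSubtype τ, ofSubtype_apply_of_not_mem τ (not_not.2 rfl)⟩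
  left_inv c := Subtype.ext (ofSubtype_subtypePerm _ fun _ hx h ↦ hx (h ▸ c.2))
  right_inv τ := subtypePerm_ofSubtype τ

variable {a}

@[simp]
theorem coe_fixingEquiv_apply (c : {c : Perm α // c a = a}) (x : {x // x ≠ a}) :
    (fixingEquiv a c x : α) = c.1 x :=
  rfl

@[simp]
theorem sameCycle_fixingEquiv {c : {c : Perm α // c a = a}} {x z : {x // x ≠ a}} :
    (fixingEquiv a c).SameCycle x z ↔ c.1.SameCycle x z :=
  sameCycle_subtypePerm (h := fun _ ↦ c.1.injective.ne_iff' c.2)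

theorem pairwise_not_sameCycle_fixingEquiv_iff (c : {c : Perm α // c a = a}) (D : Set α) :
    (((↑) ⁻¹' D : Set {x // x ≠ a}).Pairwise fun i j ↦
        ¬(fixingEquiv a c).SameCycle i j) ↔
      D.Pairwise fun i j ↦ ¬c.1.SameCycle i j := by
  refine ⟨fun h i hi j hj hij hsc ↦ ?_, fun h i hi j hj hij ↦ ?_⟩
  · -- `a` is alone in its cycle
    rcases eq_or_ne i a with rfl | hia
    · exact hij (hsc.eq_of_left c.2)
    rcases eq_or_ne j a with rfl | hja
    · exact hij (hsc.eq_of_right c.2)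
    exact @h ⟨i, hia⟩ hi ⟨j, hja⟩ hj (by simpa using hij) (by simpa using hsc)
  · simpa using h hi hj (Subtype.coe_ne_coe.2 hij)

end Fixing

theorem card_isRDerangement_eq_card_sigma {D : Set α} {s : α} (hs : s ∈ D) :
    Nat.card {σ : Perm α // σ.IsRDerangement D} =
      Nat.card (Σ y : ↥Dᶜ, {σ : Perm α // σ.IsRDerangement D ∧ σ s = y}) :=
  Nat.card_congr <| (sigmaFiberEquiv fun σ : {σ : Perm α // σ.IsRDerangement D} ↦
      (⟨σ.1 s, σ.2.apply_notMem hs⟩ : ↥Dᶜ)).symm.trans <|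
    Equiv.sigmaCongrRight fun y ↦ (subtypeEquivRight fun _ ↦ Subtype.ext_iff).trans
      (subtypeSubtypeEquivSubtypeInter (·.IsRDerangement D) fun σ : Perm α ↦ σ s = y)

theorem card_isRDerangement_of_ncard_eq_zero [Finite α] {D : Set α} (hD : D.ncard = 0) :
    Nat.card {σ : Perm α // σ.IsRDerangement D} = numDerangements Dᶜ.ncard := by
  classical
  have := Fintype.ofFinite α
  obtain rfl : D = ∅ := (Set.ncard_eq_zero (Set.toFinite D)).1 hD
  rw [Set.compl_empty, Set.ncard_univ, Nat.card_eq_fintype_card (α := α),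
    ← card_derangements_eq_numDerangements, ← Nat.card_eq_fintype_card]
  exact Nat.card_congr (subtypeEquivRight fun σ ↦ by simp [IsRDerangement, derangements])

theorem card_isRDerangement_and_apply_eq [DecidableEq α] [Finite α] {D : Set α} {s y : α}
    (hsy : s ≠ y) (hyD : y ∉ D) :
    Nat.card {σ : Perm α // σ.IsRDerangement D ∧ σ s = y} =
      Nat.card {c : Perm {x // x ≠ y} //
        c.IsRDerangementExcept ((↑) ⁻¹' D) ⟨s, hsy⟩} := by
  have remove : ∀ c : Perm α,
      c y = y ∧ (∀ x, x ≠ s → x ≠ y → c x ≠ x) ∧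
          D.Pairwise (fun i j ↦ ¬c.SameCycle i j) ↔
        (c * swap s y).IsRDerangement D ∧ (c * swap s y) s = y := by
    intro c
    simp only [IsRDerangement, mul_apply, swap_apply_left]
    constructor
    · rintro ⟨hy, hfix, hD⟩
      refine ⟨⟨fun x ↦ ?_, (pairwise_not_sameCycle_mul_swap_iff hy hsy hyD).2 hD⟩, hy⟩
      rcases eq_or_ne x s with rfl | hxs
      · rw [swap_apply_left, hy]
        exact hsy.symm
      rcases eq_or_ne x y with rfl | hxy
      · rw [swap_apply_right]
        exact fun h ↦ hsy (c.injective (h.trans hy.symm))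
      rw [swap_apply_of_ne_of_ne hxs hxy]
      exact hfix x hxs hxy
    · rintro ⟨⟨hfix, hD⟩, hy⟩
      refine ⟨hy, fun x hxs hxy ↦ ?_, (pairwise_not_sameCycle_mul_swap_iff hy hsy hyD).1 hD⟩
      simpa [swap_apply_of_ne_of_ne hxs hxy] using hfix x
  have restrict : ∀ c : {c : Perm α // c y = y},
      (∀ x, x ≠ s → x ≠ y → c.1 x ≠ x) ∧
          D.Pairwise (fun i j ↦ ¬c.1.SameCycle i j) ↔
        (fixingEquiv y c).IsRDerangementExcept ((↑) ⁻¹' D) ⟨s, hsy⟩ := by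
    intro c
    refine and_congr ?_ (pairwise_not_sameCycle_fixingEquiv_iff c D).symm
    simp only [ne_eq, Subtype.forall, Subtype.ext_iff, coe_fixingEquiv_apply]
    exact forall_congr' fun x ↦ ⟨fun h hxy hxs ↦ h hxs hxy, fun h hxs hxy ↦ h hxy hxs⟩
  exact Nat.card_congr <| ((Equiv.mulRight (swap s y)).subtypeEquiv remove).symm.trans <|
    (subtypeSubtypeEquivSubtypeInter _ _).symm.trans ((fixingEquiv y).subtypeEquiv restrict)

theorem card_isRDerangementExcept [DecidableEq α] [Finite α] (D : Set α) (t : α) :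
    Nat.card {c : Perm α // c.IsRDerangementExcept D t} =
      Nat.card {τ : Perm {x // x ≠ t} // τ.IsRDerangement ((↑) ⁻¹' D)} +
        Nat.card {σ : Perm α // σ.IsRDerangement D} := by
  have fixed : {c : Perm α // c.IsRDerangementExcept D t ∧ c t = t} ≃
      {τ : Perm {x // x ≠ t} // τ.IsRDerangement ((↑) ⁻¹' D)} :=
    (subtypeEquivRight fun _ ↦ and_comm).trans <|
      (subtypeSubtypeEquivSubtypeInter _ _).symm.trans <| (fixingEquiv t).subtypeEquiv fun c ↦ by
        refine and_congr ?_ (pairwise_not_sameCycle_fixingEquiv_iff c D).symm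
        simp only [ne_eq, Subtype.forall, Subtype.ext_iff, coe_fixingEquiv_apply]
  have moved : {c : Perm α // c.IsRDerangementExcept D t ∧ c t ≠ t} ≃
      {σ : Perm α // σ.IsRDerangement D} :=
    subtypeEquivRight fun c ↦ by
      simp only [IsRDerangementExcept, IsRDerangement]
      constructor
      · rintro ⟨⟨hfix, hD⟩, ht⟩
        exact ⟨fun x ↦ (eq_or_ne x t).elim (· ▸ ht) (hfix x), hD⟩
      · rintro ⟨hfix, hD⟩
        exact ⟨⟨fun x _ ↦ hfix x, hD⟩, hfix t⟩
  rw [← Nat.card_sum]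
  exact Nat.card_congr <|
    (sumCompl fun c : {c : Perm α // c.IsRDerangementExcept D t} ↦ c.1 t = t).symm.trans <|
      Equiv.sumCongr ((subtypeSubtypeEquivSubtypeInter _ _).trans fixed)
        ((subtypeSubtypeEquivSubtypeInter _ _).trans moved)

theorem card_isRDerangement {α : Type u} [Finite α] (D : Set α) :
    Nat.card {σ : Perm α // σ.IsRDerangement D} = rDerangementRec D.ncard Dᶜ.ncard := by
  classical
  suffices ∀ n r (β : Type u) [Finite β] (D : Set β), D.ncard = r → Dᶜ.ncard = n →
      Nat.card {σ : Perm β // σ.IsRDerangement D} = rDerangementRec r n from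
    this _ _ α D rfl rfl
  intro n
  induction n with
  | zero =>
    rintro (_ | r) β _ D hD hDc
    · rw [card_isRDerangement_of_ncard_eq_zero hD, hDc]
      rfl
    · obtain ⟨s, hs⟩ := Set.nonempty_of_ncard_ne_zero (by omega : D.ncard ≠ 0)
      have : IsEmpty ↥Dᶜ :=
        Set.isEmpty_coe_sort.2 ((Set.ncard_eq_zero (Set.toFinite _)).1 hDc)
      rw [card_isRDerangement_eq_card_sigma hs, Nat.card_of_isEmpty]
      rfl
  | succ n ih =>
    rintro (_ | r) β _ D hD hDc
    · rw [card_isRDerangement_of_ncard_eq_zero hD, hDc]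
      rfl
    obtain ⟨s, hs⟩ := Set.nonempty_of_ncard_ne_zero (by omega : D.ncard ≠ 0)
    have := Fintype.ofFinite β
    have fiber : ∀ y : ↥Dᶜ, Nat.card {σ : Perm β // σ.IsRDerangement D ∧ σ s = y} =
        rDerangementRec r n + rDerangementRec (r + 1) n := by
      rintro ⟨y, hy⟩
      have hsy : s ≠ y := ne_of_mem_of_not_mem hs hy
      have hs' : (⟨s, hsy⟩ : {x // x ≠ y}) ∈ ((↑) ⁻¹' D : Set {x // x ≠ y}) := hs
      rw [card_isRDerangement_and_apply_eq hsy hy, card_isRDerangementExcept]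
      have h₁ := Set.ncard_preimage_val_ne_of_notMem hy
      have h₂ := Set.ncard_preimage_val_ne_add_one (S := Dᶜ) hy
      have h₃ := Set.ncard_preimage_val_ne_add_one hs'
      have h₄ := Set.ncard_preimage_val_ne_of_notMem (Set.notMem_compl_iff.2 hs')
      rw [Set.preimage_compl] at h₂ h₄
      rw [ih r _ _ (by omega) (by omega), ih (r + 1) _ _ (by omega) (by omega)]
    rw [card_isRDerangement_eq_card_sigma hs, Nat.card_sigma, Fintype.sum_congr _ _ fiber,
      sum_const, card_univ, ← Nat.card_eq_fintype_card, Nat.card_coe_set_eq, hDc, smul_eq_mul]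
    rfl

end Equiv.Perm

theorem rDerangement_eq_rDerangementRec (r n : ℕ) : rDerangement r n = rDerangementRec r n := by
  let D : Set (Fin (n + r)) := {i | (i : ℕ) < r}
  have hD : D.ncard = r := by
    rw [show D = Set.range (Fin.castLE (Nat.le_add_left r n)) from (Fin.range_castLE _).symm,
      Set.ncard_range_of_injective (Fin.castLE_injective _), Nat.card_fin]
  have hDc : Dᶜ.ncard = n := by
    have := Set.ncard_add_ncard_compl D
    rw [hD, Nat.card_fin] at this
    omega
  calc rDerangement r n = Nat.card {σ : Perm (Fin (n + r)) // σ.IsRDerangement D} :=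
        Nat.card_congr <| subtypeEquivRight fun _ ↦ and_congr_right fun _ ↦
          ⟨fun h _ hi _ hj ↦ h _ _ hi hj, fun h _ _ hi hj ↦ h hi hj⟩
    _ = rDerangementRec r n := by rw [Perm.card_isRDerangement, hD, hDc]

theorem rDerangement_periodicity_general (r d : ℕ) :
    (∀ n₁ n₂ : ℕ, n₁ ≡ n₂ [MOD d] →
      ((-1) ^ n₁ * rDerangement r n₁ : ℤ) ≡ (-1) ^ n₂ * rDerangement r n₂ [ZMOD (d : ℤ)]) ∧
    (2 ∣ d → ∀ n : ℕ, rDerangement r (n + d) ≡ rDerangement r n [MOD d]) ∧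
    (¬ 2 ∣ d → ∀ n : ℕ, rDerangement r (n + 2 * d) ≡ rDerangement r n [MOD d]) := by
  have signed : ∀ n₁ n₂ : ℕ, n₁ ≡ n₂ [MOD d] →
      ((-1) ^ n₁ * rDerangement r n₁ : ℤ) ≡ (-1) ^ n₂ * rDerangement r n₂ [ZMOD d] := by
    intro n₁ n₂ h
    simp only [rDerangement_eq_rDerangementRec, neg_one_pow_mul_rDerangementRec]
    exact sum_mul_descFactorial_modEq _ h
  have even_shift : ∀ n m, Even m → d ∣ m →
      rDerangement r (n + m) ≡ rDerangement r n [MOD d] := by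
    intro n m hm hdm
    have h := signed (n + m) n (by simpa using (Nat.modEq_zero_iff_dvd.2 hdm).add_left n)
    rw [pow_add, hm.neg_one_pow, mul_one] at h
    replace h := h.mul_left ((-1) ^ n)
    rw [← mul_assoc, ← mul_assoc, ← mul_pow] at h
    simpa [Int.natCast_modEq_iff] using h
  exact ⟨signed, fun h2 n ↦ even_shift n d (even_iff_two_dvd.2 h2) dvd_rfl,
    fun _ n ↦ even_shift n (2 * d) (even_two_mul d) (dvd_mul_left d 2)⟩

theorem rDerangement_periodicity (r d : ℕ) (hr : 0 < r) (hd : 0 < d) :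
    (∀ n₁ n₂ : ℕ, n₁ ≡ n₂ [MOD d] →
      ((-1) ^ n₁ * rDerangement r n₁ : ℤ) ≡ (-1) ^ n₂ * rDerangement r n₂ [ZMOD (d : ℤ)]) ∧
    (2 ∣ d → ∀ n : ℕ, rDerangement r (n + d) ≡ rDerangement r n [MOD d]) ∧
    (¬ 2 ∣ d → ∀ n : ℕ, rDerangement r (n + 2 * d) ≡ rDerangement r n [MOD d]) :=
  rDerangement_periodicity_general r d
end

section
/- For all r, d ∈ ℕ_+ and all n ∈ ℕ, D_r(n) ≡ (-1)^n · Σ_{j=r}^{d-1} (-1)^j·C(j,r)·(n)_j (mod d), where (n)_j = n(n-1)···(n-j+1) is the falling factorial and the sum is empty (equal to 0) when d ≤ r. -/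
namespace RDerAux

open Equiv Equiv.Perm

variable {α : Type*}

/-- goodness: deranges `S`, fixes outside `S`, elements of `D` in pairwise distinct cycles. -/
def IsGood (S D : Set α) (σ : Equiv.Perm α) : Prop :=
  (∀ x ∈ S, σ x ≠ x) ∧ (∀ x ∉ S, σ x = x) ∧
    ∀ i ∈ D, ∀ j ∈ D, i ≠ j → ¬ σ.SameCycle i j

theorem IsGood.mem_of_mem {S D : Set α} {σ : Equiv.Perm α} (h : IsGood S D σ)
    {x : α} (hx : x ∈ S) : σ x ∈ S := by
  by_contra hnot
  have h2 : σ (σ x) = σ x := h.2.1 _ hnot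
  exact h.1 x hx (σ.injective h2)

theorem IsGood.mem_iff {S D : Set α} {σ : Equiv.Perm α} (h : IsGood S D σ)
    (x : α) : x ∈ S ↔ σ x ∈ S := by
  refine ⟨fun hx => h.mem_of_mem hx, fun hx => ?_⟩
  by_contra hnot
  rw [h.2.1 x hnot] at hx; exact hnot hx

theorem IsGood.apply_not_mem_D {S D : Set α} {σ : Equiv.Perm α} (h : IsGood S D σ)
    (hDS : D ⊆ S) {d : α} (hd : d ∈ D) : σ d ∉ D := by
  intro hmem
  exact h.2.2 d hd (σ d) hmem (fun he => h.1 d (hDS hd) he.symm) ⟨1, by simp⟩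

section Swap
variable [Finite α] [DecidableEq α] {σ : Equiv.Perm α} {d a : α}

/-- inserting the fixed point `a` into the cycle of `d` preserves `SameCycle`
away from `a`.  Here `σ d = a` and `τ = σ * swap d a` fixes `a`. -/
theorem sameCycle_swap_insert (hda : d ≠ a) (hsd : σ d = a) {x y : α}
    (hx : x ≠ a) (hy : y ≠ a) :
    σ.SameCycle x y ↔ (σ * Equiv.swap d a).SameCycle x y := by
  set τ := σ * Equiv.swap d a with hτ
  have hτd : τ d = σ a := by simp [hτ, Equiv.Perm.mul_apply]
  have hτa : τ a = a := by
    simp [hτ, Equiv.Perm.mul_apply, Equiv.swap_apply_right, hsd]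
  have hτx : ∀ z, z ≠ d → z ≠ a → τ z = σ z := fun z h1 h2 => by
    simp [hτ, Equiv.Perm.mul_apply, Equiv.swap_apply_of_ne_of_ne h1 h2]
  have hτne : ∀ z, z ≠ a → τ z ≠ a := fun z hz h => hz (τ.injective (h.trans hτa.symm))
  constructor
  · intro h
    obtain ⟨k, -, hk⟩ := h.exists_pow_eq'
    clear h
    induction k using Nat.strong_induction_on generalizing x with
    | _ k ih =>
      rcases Nat.eq_zero_or_pos k with rfl | hkpos
      · exact ⟨0, by simpa using hk⟩
      by_cases hxd : x = d
      · rcases Nat.lt_or_ge k 2 with hk2 | hk2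
        · have hk1 : k = 1 := by omega
          subst hk1
          rw [pow_one, hxd, hsd] at hk
          exact absurd hk.symm hy
        · have hsplit : σ ^ k = σ ^ (k - 2) * (σ * σ) := by
            rw [← pow_two, ← pow_add]; congr 1; omega
          have h1 : (σ ^ (k - 2)) (τ d) = y := by
            rw [hτd, ← hsd, ← hxd]
            rw [hsplit] at hk
            simpa [Equiv.Perm.mul_apply] using hk
          have h2 := ih (k - 2) (by omega) (x := τ d) (hτne d hda) h1
          have h3 : τ.SameCycle d y := sameCycle_apply_left.mp h2
          rwa [hxd]
      · have hsx : σ x ≠ a := fun h => hxd (σ.injective (h.trans hsd.symm))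
        have hsplit : σ ^ k = σ ^ (k - 1) * σ := by
          rw [← pow_succ]; congr 1; omega
        have h1 : (σ ^ (k - 1)) (σ x) = y := by
          rw [hsplit] at hk; simpa [Equiv.Perm.mul_apply] using hk
        have h2 := ih (k - 1) (by omega) (x := σ x) hsx h1
        rw [← hτx x hxd hx] at h2
        exact sameCycle_apply_left.mp h2
  · intro h
    obtain ⟨k, -, hk⟩ := h.exists_pow_eq'
    clear h
    induction k generalizing x with
    | zero => exact ⟨0, by simpa using hk⟩
    | succ m ih =>
      have h1 : (τ ^ m) (τ x) = y := by
        rw [← hk, pow_succ]; simp [Equiv.Perm.mul_apply]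
      have step : σ.SameCycle x (τ x) := by
        by_cases hxd : x = d
        · have : τ x = σ (σ x) := by rw [hxd, hτd, hsd]
          rw [this]
          exact sameCycle_apply_right.mpr (sameCycle_apply_right.mpr ⟨0, by simp⟩)
        · rw [hτx x hxd hx]
          exact sameCycle_apply_right.mpr ⟨0, by simp⟩
      exact step.trans (ih (x := τ x) (hτne x hx) h1)

/-- removing the 2-cycle `(d a)` preserves `SameCycle` away from `d, a`. -/
theorem sameCycle_swap_pair (hsd : σ d = a) (hsa : σ a = d) {x y : α}
    (hx : x ≠ d ∧ x ≠ a) (hy : y ≠ d ∧ y ≠ a) :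
    σ.SameCycle x y ↔ (σ * Equiv.swap d a).SameCycle x y := by
  set τ := σ * Equiv.swap d a with hτ
  have hτx : ∀ z, z ≠ d → z ≠ a → τ z = σ z := fun z h1 h2 => by
    simp [hτ, Equiv.Perm.mul_apply, Equiv.swap_apply_of_ne_of_ne h1 h2]
  have hσne : ∀ z, z ≠ d → z ≠ a → σ z ≠ d ∧ σ z ≠ a := by
    intro z h1 h2
    constructor
    · intro h; exact h2 (σ.injective (h.trans hsa.symm))
    · intro h; exact h1 (σ.injective (h.trans hsd.symm))
  constructor
  · intro h
    obtain ⟨k, -, hk⟩ := h.exists_pow_eq'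
    clear h
    induction k generalizing x with
    | zero => exact ⟨0, by simpa using hk⟩
    | succ m ih =>
      have h1 : (σ ^ m) (σ x) = y := by
        rw [← hk, pow_succ]; simp [Equiv.Perm.mul_apply]
      have hs := hσne x hx.1 hx.2
      have step : τ.SameCycle x (σ x) := by
        rw [← hτx x hx.1 hx.2]
        exact sameCycle_apply_right.mpr ⟨0, by simp⟩
      exact step.trans (ih (x := σ x) hs h1)
  · intro h
    obtain ⟨k, -, hk⟩ := h.exists_pow_eq'
    clear h
    induction k generalizing x with
    | zero => exact ⟨0, by simpa using hk⟩
    | succ m ih =>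
      have hτmem : τ x ≠ d ∧ τ x ≠ a := by
        rw [hτx x hx.1 hx.2]; exact hσne x hx.1 hx.2
      have h1 : (τ ^ m) (τ x) = y := by
        rw [← hk, pow_succ]; simp [Equiv.Perm.mul_apply]
      have step : σ.SameCycle x (τ x) := by
        rw [hτx x hx.1 hx.2]
        exact sameCycle_apply_right.mpr ⟨0, by simp⟩
      exact step.trans (ih (x := τ x) hτmem h1)

/-- if `d,a` form a 2-cycle of `σ` then the cycle of `d` is `{d,a}`. -/
theorem sameCycle_pair_mem (hsd : σ d = a) (hsa : σ a = d) {y : α}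
    (h : σ.SameCycle d y) : y = d ∨ y = a := by
  obtain ⟨k, -, hk⟩ := h.exists_pow_eq'
  clear h
  have key : ∀ m : ℕ, (σ ^ m) d = d ∨ (σ ^ m) d = a := by
    intro m
    induction m with
    | zero => left; simp
    | succ l ih =>
      have hstep : (σ ^ (l + 1)) d = σ ((σ ^ l) d) := by
        rw [pow_succ']; simp [Equiv.Perm.mul_apply]
      rcases ih with h | h
      · right; rw [hstep, h, hsd]
      · left; rw [hstep, h, hsa]
  rcases key k with h | h
  · left; rw [← hk, h]
  · right; rw [← hk, h]

end Swap
section Iffs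
variable [Finite α] [DecidableEq α] {S D : Set α} {d a : α}

theorem isGood_swap_iff_insert (hDS : D ⊆ S) (hd : d ∈ D) (haS : a ∈ S) (haD : a ∉ D)
    (σ : Equiv.Perm α) :
    ((IsGood S D σ ∧ σ d = a) ∧ σ a ≠ d) ↔ IsGood (S \ {a}) D (σ * Equiv.swap d a) := by
  have hda : d ≠ a := fun h => haD (h ▸ hd)
  set τ := σ * Equiv.swap d a with hτ
  have hτd : τ d = σ a := by simp [hτ, Equiv.Perm.mul_apply]
  have hτa : τ a = σ d := by simp [hτ, Equiv.Perm.mul_apply, Equiv.swap_apply_right]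
  have hτx : ∀ z, z ≠ d → z ≠ a → τ z = σ z := fun z h1 h2 => by
    simp [hτ, Equiv.Perm.mul_apply, Equiv.swap_apply_of_ne_of_ne h1 h2]
  have hdS' : d ∈ S \ {a} := ⟨hDS hd, hda⟩
  constructor
  · rintro ⟨⟨hg, hsd⟩, hsa⟩
    refine ⟨?_, ?_, ?_⟩
    · intro x hx
      rcases eq_or_ne x d with rfl | hxd
      · rw [hτd]; exact hsa
      · rw [hτx x hxd hx.2]; exact hg.1 x hx.1
    · intro x hx
      rcases eq_or_ne x a with rfl | hxa
      · rw [hτa, hsd]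
      · have hxS : x ∉ S := fun h => hx ⟨h, hxa⟩
        have hxd : x ≠ d := fun h => hxS (h ▸ hDS hd)
        rw [hτx x hxd hxa]; exact hg.2.1 x hxS
    · intro i hi j hj hij hc
      have hia : i ≠ a := fun h => haD (h ▸ hi)
      have hja : j ≠ a := fun h => haD (h ▸ hj)
      exact hg.2.2 i hi j hj hij ((sameCycle_swap_insert hda hsd hia hja).mpr hc)
  · intro hg
    have hsd : σ d = a := by rw [← hτa]; exact hg.2.1 a (fun h => h.2 rfl)
    have hsa : σ a ≠ d := by
      rw [← hτd]; exact fun h => hg.1 d hdS' h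
    refine ⟨⟨⟨?_, ?_, ?_⟩, hsd⟩, hsa⟩
    · intro x hx
      rcases eq_or_ne x d with rfl | hxd
      · rw [hsd]; exact fun h => hda h.symm
      rcases eq_or_ne x a with rfl | hxa
      · rw [← hτd]; exact (hg.mem_of_mem hdS').2
      · rw [← hτx x hxd hxa]; exact hg.1 x ⟨hx, hxa⟩
    · intro x hx
      have hxd : x ≠ d := fun h => hx (h ▸ hDS hd)
      have hxa : x ≠ a := fun h => hx (h ▸ haS)
      rw [← hτx x hxd hxa]; exact hg.2.1 x (fun h => hx h.1)
    · intro i hi j hj hij hc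
      have hia : i ≠ a := fun h => haD (h ▸ hi)
      have hja : j ≠ a := fun h => haD (h ▸ hj)
      exact hg.2.2 i hi j hj hij ((sameCycle_swap_insert hda hsd hia hja).mp hc)

theorem isGood_swap_iff_pair (hDS : D ⊆ S) (hd : d ∈ D) (haS : a ∈ S) (haD : a ∉ D)
    (σ : Equiv.Perm α) :
    ((IsGood S D σ ∧ σ d = a) ∧ σ a = d) ↔
      IsGood (S \ {a, d}) (D \ {d}) (σ * Equiv.swap d a) := by
  have hda : d ≠ a := fun h => haD (h ▸ hd)
  set τ := σ * Equiv.swap d a with hτ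
  have hτd : τ d = σ a := by simp [hτ, Equiv.Perm.mul_apply]
  have hτa : τ a = σ d := by simp [hτ, Equiv.Perm.mul_apply, Equiv.swap_apply_right]
  have hτx : ∀ z, z ≠ d → z ≠ a → τ z = σ z := fun z h1 h2 => by
    simp [hτ, Equiv.Perm.mul_apply, Equiv.swap_apply_of_ne_of_ne h1 h2]
  constructor
  · rintro ⟨⟨hg, hsd⟩, hsa⟩
    refine ⟨?_, ?_, ?_⟩
    · intro x hx
      have hxa : x ≠ a := fun h => hx.2 (by simp [h])
      have hxd : x ≠ d := fun h => hx.2 (by simp [h])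
      rw [hτx x hxd hxa]; exact hg.1 x hx.1
    · intro x hx
      rcases eq_or_ne x a with rfl | hxa
      · rw [hτa, hsd]
      rcases eq_or_ne x d with rfl | hxd
      · rw [hτd, hsa]
      · have hxS : x ∉ S := fun h => hx ⟨h, by simp [hxa, hxd]⟩
        rw [hτx x hxd hxa]; exact hg.2.1 x hxS
    · intro i hi j hj hij hc
      have hia : i ≠ a := fun h => haD (h ▸ hi.1)
      have hja : j ≠ a := fun h => haD (h ▸ hj.1)
      exact hg.2.2 i hi.1 j hj.1 hij
        ((sameCycle_swap_pair hsd hsa ⟨hi.2, hia⟩ ⟨hj.2, hja⟩).mpr hc)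
  · intro hg
    have haout : a ∉ S \ {a, d} := fun h => h.2 (by simp)
    have hdout : d ∉ S \ {a, d} := fun h => h.2 (by simp)
    have hsd : σ d = a := by rw [← hτa]; exact hg.2.1 a haout
    have hsa : σ a = d := by rw [← hτd]; exact hg.2.1 d hdout
    refine ⟨⟨⟨?_, ?_, ?_⟩, hsd⟩, hsa⟩
    · intro x hx
      rcases eq_or_ne x d with rfl | hxd
      · rw [hsd]; exact fun h => hda h.symm
      rcases eq_or_ne x a with rfl | hxa
      · rw [hsa]; exact hda
      · rw [← hτx x hxd hxa]; exact hg.1 x ⟨hx, by simp [hxa, hxd]⟩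
    · intro x hx
      have hxd : x ≠ d := fun h => hx (h ▸ hDS hd)
      have hxa : x ≠ a := fun h => hx (h ▸ haS)
      rw [← hτx x hxd hxa]; exact hg.2.1 x (fun h => hx h.1)
    · intro i hi j hj hij hc
      have hia : i ≠ a := fun h => haD (h ▸ hi)
      have hja : j ≠ a := fun h => haD (h ▸ hj)
      rcases eq_or_ne i d with rfl | hid
      · rcases sameCycle_pair_mem hsd hsa hc with h | h
        · exact hij h.symm
        · exact hja h
      rcases eq_or_ne j d with rfl | hjd
      · rcases sameCycle_pair_mem hsd hsa hc.symm with h | h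
        · exact hij h
        · exact hia h
      · exact hg.2.2 i ⟨hi, hid⟩ j ⟨hj, hjd⟩ hij
          ((sameCycle_swap_pair hsd hsa ⟨hid, hia⟩ ⟨hjd, hja⟩).mp hc)

end Iffs
section Transfer

/-- `gcount r n` : the `r`-derangement count realized on `Fin r ⊕ Fin n`. -/
noncomputable def gcount (r n : ℕ) : ℕ :=
  Nat.card {σ : Equiv.Perm (Fin r ⊕ Fin n) // IsGood Set.univ (Set.range Sum.inl) σ}

theorem sameCycle_permCongr {β γ : Type*} (e : β ≃ γ) (σ : Equiv.Perm β) (x y : β) :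
    (e.permCongr σ).SameCycle (e x) (e y) ↔ σ.SameCycle x y := by
  have hmul : ∀ p q : Equiv.Perm β,
      e.permCongr (p * q) = e.permCongr p * e.permCongr q := by
    intro p q; ext z; simp [Equiv.Perm.mul_apply]
  let φ : Equiv.Perm β →* Equiv.Perm γ := MonoidHom.mk' (fun p => e.permCongr p) hmul
  have hz : ∀ k : ℤ, (e.permCongr σ) ^ k = e.permCongr (σ ^ k) := by
    intro k; exact (map_zpow φ σ k).symm
  constructor
  · rintro ⟨k, hk⟩
    rw [hz k] at hk
    exact ⟨k, e.injective (by simpa using hk)⟩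
  · rintro ⟨k, hk⟩
    exact ⟨k, by rw [hz k]; simpa using congrArg e hk⟩

theorem cardGood_congr {β γ : Type*} (e : β ≃ γ) (D : Set β) :
    Nat.card {σ : Equiv.Perm β // IsGood Set.univ D σ}
      = Nat.card {σ : Equiv.Perm γ // IsGood Set.univ (e '' D) σ} := by
  apply Nat.card_congr
  refine Equiv.subtypeEquiv e.permCongr (fun σ => ⟨fun hg => ⟨?_, ?_, ?_⟩,
    fun hg => ⟨?_, ?_, ?_⟩⟩)
  · intro x _
    have := hg.1 (e.symm x) (Set.mem_univ _)
    intro h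
    apply this
    have : e (σ (e.symm x)) = e (e.symm x) := by simpa using h
    exact e.injective this
  · intro x hx; exact absurd (Set.mem_univ x) hx
  · rintro i ⟨i', hi', rfl⟩ j ⟨j', hj', rfl⟩ hij hc
    exact hg.2.2 i' hi' j' hj' (fun h => hij (by rw [h]))
      ((sameCycle_permCongr e σ i' j').mp hc)
  · intro x _
    have := hg.1 (e x) (Set.mem_univ _)
    intro h
    exact this (by simpa using congrArg e h)
  · intro x hx; exact absurd (Set.mem_univ x) hx
  · intro i hi j hj hij hc
    have := hg.2.2 (e i) ⟨i, hi, rfl⟩ (e j) ⟨j, hj, rfl⟩ (fun h => hij (e.injective h))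
    exact this ((sameCycle_permCongr e σ i j).mpr hc)

theorem cardGood_subtype (S D : Set α) (hDS : D ⊆ S) :
    Nat.card {σ : Equiv.Perm α // IsGood S D σ}
      = Nat.card {τ : Equiv.Perm S // IsGood Set.univ {x : S | (x : α) ∈ D} τ} := by
  classical
  apply Nat.card_congr
  refine ⟨fun σp => ⟨σp.1.subtypePerm (fun x => (σp.2.mem_iff x).symm), ?_⟩,
    fun τp => ⟨τp.1.extendDomain (Equiv.refl S), ?_⟩, ?_, ?_⟩
  · obtain ⟨σ, hg⟩ := σp
    refine ⟨?_, ?_, ?_⟩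
    · intro x _
      intro h
      exact hg.1 x x.2 (congrArg Subtype.val h)
    · intro x hx; exact absurd (Set.mem_univ x) hx
    · intro i hi j hj hij hc
      exact hg.2.2 i hi j hj (fun h => hij (Subtype.ext h))
        ((Equiv.Perm.sameCycle_subtypePerm).mp hc)
  · obtain ⟨τ, hg⟩ := τp
    refine ⟨?_, ?_, ?_⟩
    · intro x hx
      rw [Equiv.Perm.extendDomain_apply_subtype _ _ hx]
      intro h
      have : τ ⟨x, hx⟩ = ⟨x, hx⟩ := Subtype.ext (by simpa using h)
      exact hg.1 ⟨x, hx⟩ (Set.mem_univ _) this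
    · intro x hx
      exact Equiv.Perm.extendDomain_apply_not_subtype _ _ hx
    · intro i hi j hj hij hc
      have hiS : i ∈ S := hDS hi
      have hjS : j ∈ S := hDS hj
      have : ((Equiv.refl S) ⟨i, hiS⟩ : α) = i := rfl
      have hc' : (τ.extendDomain (Equiv.refl S)).SameCycle
          ((Equiv.refl S) ⟨i, hiS⟩ : α) ((Equiv.refl S) ⟨j, hjS⟩ : α) := hc
      have := (Equiv.Perm.sameCycle_extendDomain).mp hc'
      exact hg.2.2 ⟨i, hiS⟩ hi ⟨j, hjS⟩ hj (fun h => hij (congrArg Subtype.val h)) this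
  · intro σp
    ext x
    by_cases hx : x ∈ S
    · rw [Equiv.Perm.extendDomain_apply_subtype _ _ hx]; rfl
    · rw [Equiv.Perm.extendDomain_apply_not_subtype _ _ hx,
        σp.2.2.1 x hx]
  · intro τp
    ext x
    simp only [Equiv.Perm.subtypePerm_apply, Subtype.coe_mk,
      Equiv.Perm.extendDomain_apply_subtype _ _ x.2]
    rfl

end Transfer
section Norm
variable [Finite α]

theorem card_isGood_eq_gcount (S D : Set α) (hDS : D ⊆ S) {r n : ℕ}
    (hr : D.ncard = r) (hn : (S \ D).ncard = n) :
    Nat.card {σ : Equiv.Perm α // IsGood S D σ} = gcount r n := by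
  classical
  rw [cardGood_subtype S D hDS]
  have eD : ↥D ≃ Fin r := Finite.equivFinOfCardEq (by rw [Nat.card_coe_set_eq, hr])
  have eN : ↥(S \ D) ≃ Fin n :=
    Finite.equivFinOfCardEq (by rw [Nat.card_coe_set_eq, hn])
  let e' : S ≃ Fin r ⊕ Fin n :=
    { toFun := fun x => if h : (x : α) ∈ D then Sum.inl (eD ⟨x, h⟩)
        else Sum.inr (eN ⟨x, ⟨x.2, h⟩⟩)
      invFun := fun z => Sum.casesOn z
        (fun i => ⟨(eD.symm i : D), hDS (eD.symm i).2⟩)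
        (fun j => ⟨(eN.symm j : α), (eN.symm j).2.1⟩)
      left_inv := by
        intro x
        by_cases h : (x : α) ∈ D
        · simp only [dif_pos h]
          apply Subtype.ext
          simp
        · simp only [dif_neg h]
          apply Subtype.ext
          simp
      right_inv := by
        intro z
        cases z with
        | inl i =>
          have hmem : ((⟨(eD.symm i : D), hDS (eD.symm i).2⟩ : S) : α) ∈ D :=
            (eD.symm i).2
          simp only [dif_pos hmem]
          congr 1
          have : (⟨((eD.symm i : D) : α), hmem⟩ : D) = eD.symm i := Subtype.ext rfl
          rw [this, Equiv.apply_symm_apply]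
        | inr j =>
          have hmem : ((⟨(eN.symm j : α), (eN.symm j).2.1⟩ : S) : α) ∉ D :=
            (eN.symm j).2.2
          simp only [dif_neg hmem]
          congr 1
          have : (⟨((eN.symm j : α)), ⟨(eN.symm j).2.1, hmem⟩⟩ : ↥(S \ D)) = eN.symm j :=
            Subtype.ext rfl
          rw [this, Equiv.apply_symm_apply] }
  rw [cardGood_congr e' {x : S | (x : α) ∈ D}]
  have himg : e' '' {x : S | (x : α) ∈ D} = Set.range Sum.inl := by
    ext z
    constructor
    · rintro ⟨x, hx, rfl⟩
      refine ⟨eD ⟨x, hx⟩, ?_⟩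
      show _ = e' x
      simp only [e', Equiv.coe_fn_mk]
      split
      · rfl
      · exact absurd hx (by assumption)
    · rintro ⟨i, rfl⟩
      refine ⟨e'.symm (Sum.inl i), ?_, by simp⟩
      show ((e'.symm (Sum.inl i) : S) : α) ∈ D
      exact (eD.symm i).2
  rw [himg, gcount]

end Norm
section Count

theorem nat_card_sigma {ι : Type*} [Fintype ι] (f : ι → Type*) [∀ i, Finite (f i)] :
    Nat.card (Σ i, f i) = ∑ i, Nat.card (f i) := by
  letI := fun i => Fintype.ofFinite (f i)
  simp only [Nat.card_eq_fintype_card]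
  exact Fintype.card_sigma

theorem nat_card_split {γ : Type*} [Finite γ] (P Q : γ → Prop) :
    Nat.card {x // P x} = Nat.card {x // P x ∧ Q x} + Nat.card {x // P x ∧ ¬ Q x} := by
  classical
  rw [← Nat.card_sum]
  apply Nat.card_congr
  exact ((Equiv.sumCongr (Equiv.subtypeSubtypeEquivSubtypeInter P Q).symm
    (Equiv.subtypeSubtypeEquivSubtypeInter P (fun x => ¬ Q x)).symm).trans
    (Equiv.sumCompl (fun x : {x // P x} => Q x.1))).symm

variable [Fintype α] [DecidableEq α]

theorem card_isGood_rec (S D : Set α) (hDS : D ⊆ S) {d : α} (hd : d ∈ D)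
    {r n : ℕ} (hr : D.ncard = r + 1) (hn : (S \ D).ncard = n) :
    Nat.card {σ : Equiv.Perm α // IsGood S D σ}
      = n * (gcount (r + 1) (n - 1) + gcount r (n - 1)) := by
  classical
  have hdS : d ∈ S := hDS hd
  have hfib : ∀ σp : {σ : Equiv.Perm α // IsGood S D σ}, (σp.1 d : α) ∈ S \ D :=
    fun σp => ⟨σp.2.mem_of_mem hdS, σp.2.apply_not_mem_D hDS hd⟩
  let Fm : {σ : Equiv.Perm α // IsGood S D σ} → ↥(S \ D) := fun σp => ⟨σp.1 d, hfib σp⟩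
  rw [Nat.card_congr (Equiv.sigmaFiberEquiv Fm).symm, nat_card_sigma]
  have hfiber : ∀ a : ↥(S \ D),
      Nat.card {σp : {σ : Equiv.Perm α // IsGood S D σ} // Fm σp = a}
        = gcount (r + 1) (n - 1) + gcount r (n - 1) := by
    intro a
    have haS : (a : α) ∈ S := a.2.1
    have haD : (a : α) ∉ D := a.2.2
    have hda : d ≠ (a : α) := fun h => haD (h ▸ hd)
    have hsdiff : (S \ {(a : α)}) \ D = (S \ D) \ {(a : α)} := Set.diff_diff_comm
    have hsdiff2 : (S \ {(a : α), d}) \ (D \ {d}) = (S \ D) \ {(a : α)} := by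
      ext x
      constructor
      · rintro ⟨⟨hxS, hne⟩, hnD⟩
        simp only [Set.mem_insert_iff, Set.mem_singleton_iff] at hne
        push_neg at hne
        exact ⟨⟨hxS, fun hxD => hnD ⟨hxD, hne.2⟩⟩, hne.1⟩
      · rintro ⟨⟨hxS, hxD⟩, hna⟩
        have hxd : x ≠ d := fun h => hxD (h ▸ hd)
        refine ⟨⟨hxS, ?_⟩, fun h => hxD h.1⟩
        simp only [Set.mem_insert_iff, Set.mem_singleton_iff]
        push_neg
        exact ⟨hna, hxd⟩
    have hncard : ((S \ D) \ {(a : α)}).ncard = n - 1 := by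
      rw [Set.ncard_diff_singleton_of_mem a.2, hn]
    have hstep1 : Nat.card {σp : {σ : Equiv.Perm α // IsGood S D σ} // Fm σp = a}
        = Nat.card {σ : Equiv.Perm α // IsGood S D σ ∧ σ d = (a : α)} := by
      apply Nat.card_congr
      exact (Equiv.subtypeEquivRight (fun σp => by
        simp only [Fm, Subtype.ext_iff])).trans
        (Equiv.subtypeSubtypeEquivSubtypeInter _ _)
    rw [hstep1,
      nat_card_split (fun σ => IsGood S D σ ∧ σ d = (a : α)) (fun σ => σ (a : α) = d)]
    have hswap2 : Nat.card {σ : Equiv.Perm α //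
          (IsGood S D σ ∧ σ d = (a : α)) ∧ σ (a : α) = d}
        = gcount r (n - 1) := by
      rw [Nat.card_congr (Equiv.subtypeEquiv (Equiv.mulRight (Equiv.swap d (a : α)))
        (fun σ => by simpa using isGood_swap_iff_pair hDS hd haS haD σ))]
      apply card_isGood_eq_gcount
      · intro x hx
        refine ⟨hDS hx.1, ?_⟩
        simp only [Set.mem_insert_iff, Set.mem_singleton_iff]
        push_neg
        exact ⟨fun h => haD (h ▸ hx.1), hx.2⟩
      · rw [Set.ncard_diff_singleton_of_mem hd, hr]
        omega
      · rw [hsdiff2]; exact hncard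
    have hswap1 : Nat.card {σ : Equiv.Perm α //
          (IsGood S D σ ∧ σ d = (a : α)) ∧ ¬ σ (a : α) = d}
        = gcount (r + 1) (n - 1) := by
      rw [Nat.card_congr (Equiv.subtypeEquiv (Equiv.mulRight (Equiv.swap d (a : α)))
        (fun σ => by simpa using isGood_swap_iff_insert hDS hd haS haD σ))]
      apply card_isGood_eq_gcount
      · intro x hx
        exact ⟨hDS hx, fun h => haD ((Set.mem_singleton_iff.mp h) ▸ hx)⟩
      · exact hr
      · rw [hsdiff]; exact hncard
    rw [hswap1, hswap2, Nat.add_comm]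
  rw [Finset.sum_congr rfl (fun a _ => hfiber a), Finset.sum_const, Finset.card_univ,
    smul_eq_mul]
  congr 1
  rw [← Nat.card_eq_fintype_card, Nat.card_coe_set_eq, hn]

end Count
section GCount

theorem gcount_zero (n : ℕ) : gcount 0 n = numDerangements n := by
  classical
  have h1 : gcount 0 n
      = Nat.card {σ : Equiv.Perm (Fin 0 ⊕ Fin n) // ∀ x, σ x ≠ x} := by
    rw [gcount]
    apply Nat.card_congr
    apply Equiv.subtypeEquivRight
    intro σ
    constructor
    · intro hg x; exact hg.1 x (Set.mem_univ x)
    · intro hg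
      refine ⟨fun x _ => hg x, fun x hx => absurd (Set.mem_univ x) hx, ?_⟩
      rintro i ⟨i0, -, -⟩
      exact i0.elim0
  rw [h1]
  have h2 : Nat.card {σ : Equiv.Perm (Fin 0 ⊕ Fin n) // ∀ x, σ x ≠ x}
      = Fintype.card (derangements (Fin 0 ⊕ Fin n)) := by
    rw [Nat.card_eq_fintype_card]
    rfl
  rw [h2, card_derangements_eq_numDerangements]
  congr 1
  simp

theorem gcount_rec (r n : ℕ) :
    gcount (r + 1) n = n * (gcount (r + 1) (n - 1) + gcount r (n - 1)) := by
  classical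
  have hrange : (Set.range (Sum.inl : Fin (r+1) → Fin (r+1) ⊕ Fin n)).ncard = r + 1 := by
    rw [← Nat.card_coe_set_eq, Nat.card_range_of_injective Sum.inl_injective,
      Nat.card_eq_fintype_card, Fintype.card_fin]
  have hcompl : (Set.univ \ Set.range (Sum.inl : Fin (r+1) → Fin (r+1) ⊕ Fin n)).ncard
      = n := by
    have he : Set.univ \ Set.range (Sum.inl : Fin (r+1) → Fin (r+1) ⊕ Fin n)
        = Set.range Sum.inr := by
      ext z
      cases z <;> simp
    rw [he, ← Nat.card_coe_set_eq, Nat.card_range_of_injective Sum.inr_injective,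
      Nat.card_eq_fintype_card, Fintype.card_fin]
  unfold gcount
  exact card_isGood_rec Set.univ _ (Set.subset_univ _)
    (Set.mem_range_self (0 : Fin (r + 1))) hrange hcompl

theorem card_rder_eq_gcount (r n : ℕ) :
    Nat.card {σ : Equiv.Perm (Fin (n + r)) //
      (∀ x, σ x ≠ x) ∧
      ∀ i j : Fin (n + r), (i : ℕ) < r → (j : ℕ) < r → i ≠ j → ¬ σ.SameCycle i j}
      = gcount r n := by
  classical
  have hiff : ∀ σ : Equiv.Perm (Fin (n + r)),
      ((∀ x, σ x ≠ x) ∧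
        ∀ i j : Fin (n + r), (i : ℕ) < r → (j : ℕ) < r → i ≠ j → ¬ σ.SameCycle i j)
      ↔ IsGood Set.univ {i : Fin (n + r) | (i : ℕ) < r} σ := by
    intro σ
    constructor
    · rintro ⟨h1, h2⟩
      exact ⟨fun x _ => h1 x, fun x hx => absurd (Set.mem_univ x) hx,
        fun i hi j hj hij => h2 i j hi hj hij⟩
    · rintro ⟨h1, -, h3⟩
      exact ⟨fun x => h1 x (Set.mem_univ x), fun i j hi hj hij => h3 i hi j hj hij⟩
  rw [Nat.card_congr (Equiv.subtypeEquivRight hiff)]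
  apply card_isGood_eq_gcount _ _ (Set.subset_univ _)
  · rw [← Nat.card_coe_set_eq]
    have e : ↥{i : Fin (n + r) | (i : ℕ) < r} ≃ Fin r :=
      { toFun := fun x => ⟨(x : Fin (n + r)).1, x.2⟩
        invFun := fun i => ⟨⟨i.1, Nat.lt_of_lt_of_le i.2 (Nat.le_add_left r n)⟩, i.2⟩
        left_inv := fun x => by apply Subtype.ext; apply Fin.ext; rfl
        right_inv := fun i => by apply Fin.ext; rfl }
    rw [Nat.card_congr e, Nat.card_eq_fintype_card, Fintype.card_fin]
  · rw [← Nat.card_coe_set_eq]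
    have e : ↥(Set.univ \ {i : Fin (n + r) | (i : ℕ) < r}) ≃ Fin n :=
      { toFun := fun x => ⟨(x : Fin (n + r)).1 - r, by
          have h1 : ¬ ((x : Fin (n + r)) : ℕ) < r := x.2.2
          have h2 := (x : Fin (n + r)).2
          omega⟩
        invFun := fun j => ⟨⟨j.1 + r, by have := j.2; omega⟩, by
          constructor
          · exact Set.mem_univ _
          · intro hmem
            have : j.1 + r < r := hmem
            omega⟩
        left_inv := fun x => by
          apply Subtype.ext; apply Fin.ext
          have h1 : ¬ ((x : Fin (n + r)) : ℕ) < r := x.2.2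
          show (x : Fin (n + r)).1 - r + r = _
          omega
        right_inv := fun j => by apply Fin.ext; show j.1 + r - r = j.1; omega }
    rw [Nat.card_congr e, Nat.card_eq_fintype_card, Fintype.card_fin]

end GCount
section Algebra

/-- the alternating-sum formula. -/
def FF (r n : ℕ) : ℤ :=
  (-1) ^ n * ∑ j ∈ Finset.Icc r n,
    (-1) ^ j * (j.choose r : ℤ) * (n.descFactorial j : ℤ)

theorem FF_zero (n : ℕ) : FF 0 n = numDerangements n := by
  rw [numDerangements_sum, FF]
  have hIcc : Finset.Icc 0 n = Finset.range (n + 1) := by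
    rw [Finset.range_eq_Ico, Finset.Ico_add_one_right_eq_Icc]
  rw [hIcc, ← Finset.sum_range_reflect (fun j => (-1 : ℤ) ^ j * ((j.choose 0 : ℕ) : ℤ)
    * ((n.descFactorial j : ℕ) : ℤ)) (n + 1), Finset.mul_sum]
  apply Finset.sum_congr rfl
  intro k hk
  have hkn : k ≤ n := by
    have := Finset.mem_range.mp hk; omega
  have hasc : (((k + 1).ascFactorial (n - k) : ℕ) : ℤ) = ((n.descFactorial (n - k) : ℕ) : ℤ) := by
    have h := Nat.add_descFactorial_eq_ascFactorial k (n - k)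
    rw [Nat.add_sub_cancel' hkn] at h
    rw [h]
  rw [hasc]
  simp only [Nat.choose_zero_right, Nat.cast_one, mul_one]
  simp only [Nat.add_sub_cancel]
  have hsgn : (-1 : ℤ) ^ n = (-1) ^ (n - k) * (-1) ^ k := by
    rw [← pow_add, Nat.sub_add_cancel hkn]
  have h2 : (-1 : ℤ) ^ (n - k) * (-1) ^ (n - k) = 1 := by
    rw [← pow_add]
    exact Even.neg_one_pow ⟨n - k, rfl⟩
  calc (-1 : ℤ) ^ n * ((-1) ^ (n - k) * (n.descFactorial (n - k) : ℤ))
      = ((-1 : ℤ) ^ (n - k) * (-1) ^ (n - k)) * ((-1) ^ k * (n.descFactorial (n - k) : ℤ)) := by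
        rw [hsgn]; ring
    _ = (-1 : ℤ) ^ k * (n.descFactorial (n - k) : ℤ) := by rw [h2, one_mul]

theorem FF_zero_of_lt {r n : ℕ} (h : n < r) : FF r n = 0 := by
  rw [FF, Finset.Icc_eq_empty (by omega), Finset.sum_empty, mul_zero]

theorem FF_rec (r n : ℕ) : FF (r + 1) (n + 1) = (n + 1 : ℤ) * (FF (r + 1) n + FF r n) := by
  have hA : ∑ j ∈ Finset.Icc r n,
        (-1 : ℤ) ^ j * (j.choose (r+1) : ℤ) * (n.descFactorial j : ℤ)
      = ∑ j ∈ Finset.Icc (r+1) n,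
        (-1 : ℤ) ^ j * (j.choose (r+1) : ℤ) * (n.descFactorial j : ℤ) := by
    symm
    apply Finset.sum_subset (Finset.Icc_subset_Icc_left (Nat.le_succ r))
    intro j hj hnj
    have h1 := Finset.mem_Icc.mp hj
    have h2 : j = r := by
      rcases Finset.mem_Icc.mp hj with ⟨hl, hu⟩
      by_contra hne
      exact hnj (Finset.mem_Icc.mpr ⟨by omega, hu⟩)
    subst h2
    rw [Nat.choose_eq_zero_of_lt (by omega)]
    simp
  have hmap : Finset.Icc (r + 1) (n + 1)
      = (Finset.Icc r n).map (addRightEmbedding 1) := by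
    rw [Finset.map_add_right_Icc]
  rw [FF, FF, FF, hmap, Finset.sum_map]
  simp only [addRightEmbedding_apply]
  have hterm : ∀ j ∈ Finset.Icc r n,
      (-1 : ℤ) ^ (j + 1) * ((j + 1).choose (r + 1) : ℤ)
          * (((n + 1).descFactorial (j + 1) : ℕ) : ℤ)
      = (-(n + 1) : ℤ) * ((-1) ^ j * (j.choose (r + 1) : ℤ) * (n.descFactorial j : ℤ)
          + (-1) ^ j * (j.choose r : ℤ) * (n.descFactorial j : ℤ)) := by
    intro j _
    rw [Nat.succ_descFactorial_succ, Nat.choose_succ_succ]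
    push_cast
    ring
  rw [Finset.sum_congr rfl hterm, ← Finset.mul_sum, Finset.sum_add_distrib, hA, pow_succ]
  ring

theorem gcount_eq_FF (n : ℕ) : ∀ r, (gcount r n : ℤ) = FF r n := by
  induction n with
  | zero =>
    intro r
    cases r with
    | zero => rw [gcount_zero, FF_zero]
    | succ r =>
      have h0 : gcount (r + 1) 0 = 0 := by rw [gcount_rec]; simp
      rw [h0, FF_zero_of_lt (by omega)]
      simp
  | succ n ih =>
    intro r
    cases r with
    | zero => rw [gcount_zero, FF_zero]
    | succ r =>
      have h := gcount_rec r (n + 1)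
      rw [Nat.add_sub_cancel] at h
      rw [h]
      push_cast
      rw [ih (r + 1), ih r, FF_rec]

end Algebra

end RDerAux



theorem rDerangement_mod (r d : ℕ) (hr : 0 < r) (hd : 0 < d) (n : ℕ) :
    (rDerangement r n : ℤ) ≡
      (-1) ^ n * ∑ j ∈ Finset.Icc r (d - 1),
        (-1) ^ j * (j.choose r : ℤ) * (n.descFactorial j : ℤ) [ZMOD (d : ℤ)] := by
  haveI : NeZero d := ⟨hd.ne'⟩
  have h1 : (rDerangement r n : ℤ) = RDerAux.FF r n := by
    rw [rDerangement, RDerAux.card_rder_eq_gcount, RDerAux.gcount_eq_FF]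
  rw [h1, RDerAux.FF]
  have hcast := (ZMod.intCast_eq_intCast_iff
    ((-1 : ℤ) ^ n * ∑ j ∈ Finset.Icc r n,
      (-1 : ℤ) ^ j * (j.choose r : ℤ) * (n.descFactorial j : ℤ))
    ((-1 : ℤ) ^ n * ∑ j ∈ Finset.Icc r (d - 1),
      (-1 : ℤ) ^ j * (j.choose r : ℤ) * (n.descFactorial j : ℤ)) d)
  rw [← hcast]
  push_cast
  congr 1
  have hL : ∑ j ∈ Finset.Icc r n,
        ((-1 : ZMod d) ^ j * (j.choose r : ZMod d) * (n.descFactorial j : ZMod d))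
      = ∑ j ∈ Finset.Icc r (max n (d - 1)),
        ((-1 : ZMod d) ^ j * (j.choose r : ZMod d) * (n.descFactorial j : ZMod d)) := by
    apply Finset.sum_subset (Finset.Icc_subset_Icc_right (le_max_left _ _))
    intro j hj hnj
    have h2 : n < j := by
      have := Finset.mem_Icc.mp hj
      have h3 : ¬ (r ≤ j ∧ j ≤ n) := fun h => hnj (Finset.mem_Icc.mpr h)
      omega
    rw [Nat.descFactorial_eq_zero_iff_lt.mpr h2]
    simp
  have hR : ∑ j ∈ Finset.Icc r (d - 1),
        ((-1 : ZMod d) ^ j * (j.choose r : ZMod d) * (n.descFactorial j : ZMod d))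
      = ∑ j ∈ Finset.Icc r (max n (d - 1)),
        ((-1 : ZMod d) ^ j * (j.choose r : ZMod d) * (n.descFactorial j : ZMod d)) := by
    apply Finset.sum_subset (Finset.Icc_subset_Icc_right (le_max_right _ _))
    intro j hj hnj
    have h2 : d ≤ j := by
      have := Finset.mem_Icc.mp hj
      have h3 : ¬ (r ≤ j ∧ j ≤ d - 1) := fun h => hnj (Finset.mem_Icc.mpr h)
      omega
    have hdvd : d ∣ n.descFactorial j :=
      dvd_trans (Nat.dvd_factorial hd h2) (Nat.factorial_dvd_descFactorial n j)
    rw [(ZMod.natCast_eq_zero_iff _ _).mpr hdvd]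
    simp
  rw [hL, hR]
end

section
/- Let C_r(n) := D_r(n)·(n-r)!/n! for n ≥ r (an integer). For each r, d ∈ ℕ_+ and all n₁, n₂ ≥ r with n₁ ≡ n₂ (mod d), one has (-1)^{n₁}·C_r(n₁) ≡ (-1)^{n₂}·C_r(n₂) (mod d). In particular, the sequence (C_r(n) mod d)_{n ≥ r} is periodic with period d if d is even, and with period 2d if d is odd. -/
/-- `C_r(n) = D_r(n) · (n-r)!/n! = D_r(n) / (n·(n-1)⋯(n-r+1))`. -/
noncomputable def Cr (r n : ℕ) : ℕ :=
  rDerangement r n / n.descFactorial r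

namespace CrAux

open Equiv Equiv.Perm Finset

/-! ### Generic predicate and transfer machinery -/

variable {α β : Type*}

/-- The defining predicate of `rDerangement`, abstractly: no fixed points, and the
distinguished elements (those satisfying `D`) lie in pairwise distinct cycles. -/
def GP (D : α → Prop) (σ : Perm α) : Prop :=
  (∀ x, σ x ≠ x) ∧ ∀ i j, D i → D j → i ≠ j → ¬ σ.SameCycle i j

lemma sc_of_pow {σ : Perm α} {x y : α} (k : ℕ) (h : (σ ^ k) x = y) : σ.SameCycle x y :=
  ⟨(k : ℤ), by rwa [zpow_natCast]⟩

/-- `Equiv.permCongr` as a `MulEquiv`. -/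
def permCongrM (e : α ≃ β) : Perm α ≃* Perm β :=
  { e.permCongr with
    map_mul' := fun σ τ => by
      ext x
      simp [Equiv.permCongr_apply, Equiv.Perm.mul_apply] }

lemma permCongrM_apply (e : α ≃ β) (σ : Perm α) : permCongrM e σ = e.permCongr σ := rfl

lemma sameCycle_permCongr {e : α ≃ β} {σ : Perm α} {i j : α} :
    (e.permCongr σ).SameCycle (e i) (e j) ↔ σ.SameCycle i j := by
  constructor
  · rintro ⟨k, hk⟩
    refine ⟨k, ?_⟩
    rw [← permCongrM_apply, ← map_zpow, permCongrM_apply] at hk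
    simp only [Equiv.permCongr_apply, Equiv.symm_apply_apply] at hk
    exact e.injective hk
  · rintro ⟨k, hk⟩
    refine ⟨k, ?_⟩
    rw [← permCongrM_apply, ← map_zpow, permCongrM_apply]
    simp [hk]

lemma gp_permCongr (e : α ≃ β) {D : α → Prop} {D' : β → Prop}
    (hD : ∀ x, D x ↔ D' (e x)) (σ : Perm α) :
    GP D σ ↔ GP D' (e.permCongr σ) := by
  constructor
  · rintro ⟨h1, h2⟩
    constructor
    · intro y hy
      simp only [Equiv.permCongr_apply] at hy
      exact h1 (e.symm y) (by simpa using congrArg e.symm hy)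
    · intro i' j' hi' hj' hne hsc
      obtain ⟨i, rfl⟩ := e.surjective i'
      obtain ⟨j, rfl⟩ := e.surjective j'
      exact h2 i j ((hD i).2 hi') ((hD j).2 hj') (fun h => hne (by rw [h]))
        (sameCycle_permCongr.1 hsc)
  · rintro ⟨h1, h2⟩
    constructor
    · intro x hx
      exact h1 (e x) (by simp [Equiv.permCongr_apply, hx])
    · intro i j hi hj hne hsc
      exact h2 (e i) (e j) ((hD i).1 hi) ((hD j).1 hj) (fun h => hne (e.injective h))
        (sameCycle_permCongr.2 hsc)

/-- Transfer of the counted set along an equivalence of ambient types. -/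
def gpEquiv (e : α ≃ β) {D : α → Prop} {D' : β → Prop} (hD : ∀ x, D x ↔ D' (e x)) :
    {σ : Perm α // GP D σ} ≃ {σ : Perm β // GP D' σ} :=
  Equiv.subtypeEquiv e.permCongr fun σ => gp_permCongr e hD σ

lemma sameCycle_fixed {σ : Perm α} {a b : α} (ha : σ a = a) (h : σ.SameCycle a b) :
    a = b := by
  obtain ⟨k, hk⟩ := h
  rw [Equiv.Perm.zpow_apply_eq_self_of_apply_eq_self ha] at hk
  exact hk

/-- Summation of cardinalities over the fibers of a map. -/
lemma card_fiber_mul {γ δ : Type*} [Finite γ] [Finite δ] (f : γ → δ) (c : ℕ)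
    (h : ∀ y : δ, Nat.card {x : γ // f x = y} = c) : Nat.card γ = Nat.card δ * c := by
  classical
  cases nonempty_fintype γ
  cases nonempty_fintype δ
  rw [← Nat.card_congr (Equiv.sigmaFiberEquiv f), Nat.card_eq_fintype_card,
    Fintype.card_sigma, Nat.card_eq_fintype_card (α := δ)]
  calc ∑ y : δ, Fintype.card {x : γ // f x = y}
      = ∑ _y : δ, c :=
        Finset.sum_congr rfl (fun y _ => by rw [← Nat.card_eq_fintype_card, h])
    _ = Fintype.card δ * c := by rw [Finset.sum_const, Finset.card_univ, smul_eq_mul]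

/-! ### Splicing a new point into a permutation before a marked point `c` -/

section Splice

variable {γ : Type*} [DecidableEq γ]

lemma splice_none (c : γ) (τ : Perm γ) :
    (Equiv.swap (none : Option γ) (some c) * τ.optionCongr) none = some c := by
  simp [Equiv.Perm.mul_apply]

lemma splice_some (c : γ) (τ : Perm γ) (x : γ) :
    (Equiv.swap (none : Option γ) (some c) * τ.optionCongr) (some x)
      = if τ x = c then none else some (τ x) := by
  rw [Equiv.Perm.mul_apply]
  simp only [Equiv.optionCongr_apply, Option.map_some]
  by_cases h : τ x = c
  · rw [if_pos h, h, Equiv.swap_apply_right]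
  · rw [if_neg h,
      Equiv.swap_apply_of_ne_of_ne (Option.some_ne_none (τ x)) (by simpa using h)]

lemma splice_step (c : γ) (τ : Perm γ) (x : γ) :
    (Equiv.swap (none : Option γ) (some c) * τ.optionCongr).SameCycle
      (some x) (some (τ x)) := by
  by_cases h : τ x = c
  · apply sc_of_pow 2
    have h1 : (Equiv.swap (none : Option γ) (some c) * τ.optionCongr) (some x) = none := by
      rw [splice_some, if_pos h]
    rw [pow_two, Equiv.Perm.mul_apply, h1, splice_none, h]
  · exact sc_of_pow 1 (by rw [pow_one, splice_some, if_neg h])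

lemma splice_sc_mp (c : γ) (τ : Perm γ) (k : ℕ) :
    ∀ x : γ, (Equiv.swap (none : Option γ) (some c) * τ.optionCongr).SameCycle
      (some x) (some ((τ ^ k) x)) := by
  induction k with
  | zero =>
    intro x
    rw [pow_zero]
    exact ⟨0, by simp⟩
  | succ k ih =>
    intro x
    rw [pow_succ, Equiv.Perm.mul_apply]
    exact (splice_step c τ x).trans (ih (τ x))

lemma splice_back_step (c : γ) (τ : Perm γ) (z : Option γ) :
    τ.SameCycle (z.elim c id)
      (((Equiv.swap (none : Option γ) (some c) * τ.optionCongr) z).elim c id) := by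
  cases z with
  | none =>
    rw [splice_none]
    show τ.SameCycle c c
    exact ⟨0, by simp⟩
  | some x =>
    rw [splice_some]
    by_cases h : τ x = c
    · rw [if_pos h]
      show τ.SameCycle x c
      rw [← h]
      exact sc_of_pow 1 (by rw [pow_one])
    · rw [if_neg h]
      show τ.SameCycle x (τ x)
      exact sc_of_pow 1 (by rw [pow_one])

lemma splice_sc_back (c : γ) (τ : Perm γ) (k : ℕ) :
    ∀ z : Option γ, τ.SameCycle (z.elim c id)
      ((((Equiv.swap (none : Option γ) (some c) * τ.optionCongr) ^ k) z).elim c id) := by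
  induction k with
  | zero =>
    intro z
    rw [pow_zero]
    show τ.SameCycle (z.elim c id) (z.elim c id)
    exact ⟨0, by simp⟩
  | succ k ih =>
    intro z
    rw [pow_succ, Equiv.Perm.mul_apply]
    exact (splice_back_step c τ z).trans
      (ih ((Equiv.swap (none : Option γ) (some c) * τ.optionCongr) z))

lemma splice_sameCycle [Finite γ] (c : γ) (τ : Perm γ) (i j : γ) :
    (Equiv.swap (none : Option γ) (some c) * τ.optionCongr).SameCycle (some i) (some j)
      ↔ τ.SameCycle i j := by
  haveI := Fintype.ofFinite γ
  constructor
  · intro h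
    obtain ⟨k, -, hk⟩ := h.exists_pow_eq'
    have := splice_sc_back c τ k (some i)
    rw [hk] at this
    simpa using this
  · intro h
    obtain ⟨k, -, hk⟩ := h.exists_pow_eq'
    have := splice_sc_mp c τ k i
    rwa [hk] at this

lemma splice_GP [Finite γ] (c : γ) (τ : Perm γ) (D : γ → Prop) :
    GP (fun o : Option γ => o.elim False D)
        (Equiv.swap (none : Option γ) (some c) * τ.optionCongr) ↔
      ((∀ x, x ≠ c → τ x ≠ x) ∧ ∀ i j, D i → D j → i ≠ j → ¬ τ.SameCycle i j) := by
  haveI := Fintype.ofFinite γ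
  constructor
  · rintro ⟨h1, h2⟩
    constructor
    · intro x hxc hfix
      exact h1 (some x)
        (by rw [splice_some, if_neg (show τ x ≠ c by rw [hfix]; exact hxc), hfix])
    · intro i j hi hj hne hsc
      exact h2 (some i) (some j) hi hj (by simpa using hne)
        ((splice_sameCycle c τ i j).2 hsc)
  · rintro ⟨h1, h2⟩
    constructor
    · intro z
      cases z with
      | none => rw [splice_none]; simp
      | some x =>
        rw [splice_some]
        by_cases h : τ x = c
        · rw [if_pos h]; simp
        · rw [if_neg h]
          intro heq
          have hτ : τ x = x := by simpa using heq
          rcases eq_or_ne x c with rfl | hx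
          · exact h hτ
          · exact h1 x hx hτ
    · intro i' j' hi' hj' hne hsc
      cases i' with
      | none => exact (hi' : False).elim
      | some i =>
        cases j' with
        | none => exact (hj' : False).elim
        | some j =>
          exact h2 i j hi' hj' (by simpa using hne)
            ((splice_sameCycle c τ i j).1 hsc)

end Splice

/-! ### Restricting a permutation fixing a point, and extending by the identity -/

section FixPart

variable {γ : Type*} [DecidableEq γ]

lemma sameCycle_subtypePerm (τ : Perm γ) {p : γ → Prop}
    (hp : ∀ x, p x ↔ p (τ x)) (x y : Subtype p) :
    (τ.subtypePerm (fun x => (hp x).symm)).SameCycle x y ↔ τ.SameCycle (x : γ) (y : γ) := by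
  constructor
  · rintro ⟨z, hz⟩
    rw [Equiv.Perm.subtypePerm_zpow] at hz
    exact ⟨z, congrArg Subtype.val hz⟩
  · rintro ⟨z, hz⟩
    exact ⟨z, by rw [Equiv.Perm.subtypePerm_zpow]; exact Subtype.ext hz⟩

lemma sameCycle_ofSubtype {p : γ → Prop} [DecidablePred p] (τ' : Perm (Subtype p))
    (x y : Subtype p) :
    (Equiv.Perm.ofSubtype τ').SameCycle (x : γ) (y : γ) ↔ τ'.SameCycle x y := by
  constructor
  · rintro ⟨z, hz⟩
    rw [← map_zpow] at hz
    refine ⟨z, Subtype.ext ?_⟩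
    rw [← Equiv.Perm.ofSubtype_apply_coe (τ' ^ z) x]
    exact hz
  · rintro ⟨z, hz⟩
    refine ⟨z, ?_⟩
    rw [← map_zpow, Equiv.Perm.ofSubtype_apply_coe]
    exact congrArg Subtype.val hz

end FixPart

/-! ### The distinguished data for the recurrence -/

def Db (r n : ℕ) : Fin (n + (r + 1)) → Prop := fun x => (x : ℕ) < r + 1

def DOp (r n : ℕ) : Option (Fin (n + (r + 1))) → Prop := fun o => o.elim False (Db r n)

def c0 (r n : ℕ) : Fin (n + (r + 1)) := ⟨0, by omega⟩

lemma DOp_some_c0 (r n : ℕ) : DOp r n (some (c0 r n)) := Nat.succ_pos r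

/-! ### The three counting lemmas -/

lemma rDer_zero_eq (n : ℕ) : rDerangement 0 n = numDerangements n := by
  have e : {σ : Perm (Fin (n + 0)) //
      (∀ x, σ x ≠ x) ∧
        ∀ i j : Fin (n + 0), (i : ℕ) < 0 → (j : ℕ) < 0 → i ≠ j → ¬ σ.SameCycle i j}
      ≃ derangements (Fin (n + 0)) :=
    Equiv.subtypeEquivRight
      (fun σ => ⟨fun h => h.1, fun h => ⟨h, fun i j hi _ _ _ => absurd hi (by omega)⟩⟩)
  unfold rDerangement
  rw [Nat.card_congr e, Nat.card_eq_fintype_card]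
  exact card_derangements_fin_eq_numDerangements

lemma rDer_succ_zero (r : ℕ) : rDerangement (r + 1) 0 = 0 := by
  have hempty : IsEmpty {σ : Perm (Fin (0 + (r + 1))) //
      (∀ x, σ x ≠ x) ∧
        ∀ i j : Fin (0 + (r + 1)), (i : ℕ) < r + 1 → (j : ℕ) < r + 1 → i ≠ j →
          ¬ σ.SameCycle i j} := by
    constructor
    rintro ⟨σ, h1, h2⟩
    have hx : ((⟨0, by omega⟩ : Fin (0 + (r + 1))) : ℕ) < r + 1 := by
      simp
    have hy : ((σ ⟨0, by omega⟩ : Fin (0 + (r + 1))) : ℕ) < r + 1 := by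
      have := (σ ⟨0, by omega⟩).isLt; omega
    exact h2 ⟨0, by omega⟩ (σ ⟨0, by omega⟩) hx hy (Ne.symm (h1 _))
      ⟨1, by rw [zpow_one]⟩
  unfold rDerangement
  exact Nat.card_of_isEmpty

lemma key (r n : ℕ) :
    rDerangement (r + 1) (n + 1) = (n + 1) * (rDerangement (r + 1) n + rDerangement r n) := by
  classical
  have hlen : (n + 1) + (r + 1) = (n + (r + 1)) + 1 := by omega
  -- Step 0 : move to `Option (Fin (n + (r+1)))`.
  have h0 : rDerangement (r + 1) (n + 1)
      = Nat.card {σ : Perm (Option (Fin (n + (r + 1)))) // GP (DOp r n) σ} := by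
    unfold rDerangement
    refine Nat.card_congr
      (gpEquiv (D := fun i : Fin ((n + 1) + (r + 1)) => (i : ℕ) < r + 1) (D' := DOp r n)
        ((finCongr hlen).trans finSuccEquivLast) ?_)
    intro x
    by_cases hx : (x : ℕ) < n + (r + 1)
    · have hcast : (finCongr hlen x) = Fin.castSucc ⟨(x : ℕ), hx⟩ := Fin.ext (by simp)
      rw [Equiv.trans_apply, hcast, finSuccEquivLast_castSucc]
      exact Iff.rfl
    · have hval : (x : ℕ) = n + (r + 1) := by have := x.isLt; omega
      have hcast : (finCongr hlen x) = Fin.last (n + (r + 1)) := Fin.ext (by simp [hval])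
      rw [Equiv.trans_apply, hcast, finSuccEquivLast_last]
      exact iff_of_false (by omega) (fun hF => hF)
  -- the preimage of the marked point is never distinguished
  have hfmem : ∀ σ : {σ : Perm (Option (Fin (n + (r + 1)))) // GP (DOp r n) σ},
      ¬ DOp r n (σ.1.symm (some (c0 r n))) := by
    rintro σ hmem
    rcases hz : σ.1.symm (some (c0 r n)) with _ | b
    · rw [hz] at hmem; exact hmem
    · rw [hz] at hmem
      have hzb : σ.1 (some b) = some (c0 r n) := by
        rw [← hz]; exact σ.1.apply_symm_apply _
      by_cases hbc : b = c0 r n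
      · rw [hbc] at hzb
        exact σ.2.1 (some (c0 r n)) hzb
      · exact σ.2.2 (some b) (some (c0 r n)) hmem (DOp_some_c0 r n) (by simpa using hbc)
          (sc_of_pow 1 (by rw [pow_one]; exact hzb))
  -- each fiber is equivalent to the `none`-fiber
  have hfib : ∀ y : {o : Option (Fin (n + (r + 1))) // ¬ DOp r n o},
      Nat.card {x : {σ : Perm (Option (Fin (n + (r + 1)))) // GP (DOp r n) σ} //
          x.1.symm (some (c0 r n)) = y.1}
        = Nat.card {σ : Perm (Option (Fin (n + (r + 1)))) //
            GP (DOp r n) σ ∧ σ none = some (c0 r n)} := by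
    intro y
    apply Nat.card_congr
    refine (Equiv.subtypeSubtypeEquivSubtypeInter
      (fun σ : Perm (Option (Fin (n + (r + 1)))) => GP (DOp r n) σ)
      (fun σ : Perm (Option (Fin (n + (r + 1)))) => σ.symm (some (c0 r n)) = y.1)).trans ?_
    refine Equiv.subtypeEquiv ((Equiv.swap (y.1) (none : Option (Fin (n + (r + 1))))).permCongr) ?_
    intro σ
    have hDπ : ∀ x, DOp r n x ↔ DOp r n (Equiv.swap (y.1) (none : Option (Fin (n + (r + 1)))) x) := by
      intro x
      by_cases hx1 : x = y.1
      · subst hx1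
        rw [Equiv.swap_apply_left]
        exact iff_of_false y.2 (fun hF => hF)
      · by_cases hx2 : x = none
        · subst hx2
          rw [Equiv.swap_apply_right]
          exact iff_of_false (fun hF => hF) y.2
        · rw [Equiv.swap_apply_of_ne_of_ne hx1 hx2]
    have hπc : (Equiv.swap (y.1) (none : Option (Fin (n + (r + 1))))) (some (c0 r n))
        = some (c0 r n) := by
      refine Equiv.swap_apply_of_ne_of_ne (fun hh => y.2 ?_) (Option.some_ne_none _)
      rw [← hh]; exact DOp_some_c0 r n
    have happ : (Equiv.swap (y.1) (none : Option (Fin (n + (r + 1))))).permCongr σ none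
        = Equiv.swap (y.1) none (σ y.1) := by
      rw [Equiv.permCongr_apply, Equiv.symm_swap, Equiv.swap_apply_right]
    constructor
    · rintro ⟨hgp, hy⟩
      refine ⟨(gp_permCongr _ hDπ σ).1 hgp, ?_⟩
      rw [happ]
      have hσy : σ y.1 = some (c0 r n) := by
        rw [← hy, σ.apply_symm_apply]
      rw [hσy, hπc]
    · rintro ⟨hgp, hnone⟩
      refine ⟨(gp_permCongr (Equiv.swap (y.1) (none : Option (Fin (n + (r + 1))))) hDπ σ).2 hgp, ?_⟩
      rw [happ] at hnone
      have hσy : σ y.1 = some (c0 r n) := by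
        have h2 := congrArg (Equiv.swap (y.1) (none : Option (Fin (n + (r + 1))))).symm hnone
        rw [Equiv.symm_apply_apply, Equiv.symm_swap, hπc] at h2
        exact h2
      rw [Equiv.symm_apply_eq, hσy]
  -- the count of non-distinguished points
  have hND : Nat.card {o : Option (Fin (n + (r + 1))) // ¬ DOp r n o} = n + 1 := by
    have e1 : {o : Option (Fin (n + (r + 1))) // ¬ DOp r n o}
        ≃ Option {b : Fin (n + (r + 1)) // ¬ Db r n b} :=
      { toFun := fun x => match x with
          | ⟨none, _⟩ => none
          | ⟨some b, hb⟩ => some ⟨b, hb⟩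
        invFun := fun o => match o with
          | none => ⟨none, fun h => h⟩
          | some b => ⟨some b.1, b.2⟩
        left_inv := by rintro ⟨(_ | b), hb⟩ <;> rfl
        right_inv := by rintro (_ | ⟨b, hb⟩) <;> rfl }
    have e2 : {b : Fin (n + (r + 1)) // ¬ Db r n b} ≃ Fin n :=
      { toFun := fun x => ⟨(x.1 : ℕ) - (r + 1), by
          have h1 := x.1.isLt
          have h2 : ¬ ((x.1 : ℕ) < r + 1) := x.2
          omega⟩
        invFun := fun y => ⟨⟨(y : ℕ) + (r + 1), by have := y.isLt; omega⟩, by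
          intro h
          have h2 : (y : ℕ) + (r + 1) < r + 1 := h
          omega⟩
        left_inv := by
          rintro ⟨x, hx⟩
          have h2 : ¬ ((x : ℕ) < r + 1) := hx
          apply Subtype.ext
          apply Fin.ext
          simp only []
          omega
        right_inv := by
          intro y
          apply Fin.ext
          simp only []
          omega }
    rw [Nat.card_congr (e1.trans (Equiv.optionCongr e2)), Nat.card_eq_fintype_card]
    simp
  -- Step A : fiber decomposition
  have hA : Nat.card {σ : Perm (Option (Fin (n + (r + 1)))) // GP (DOp r n) σ}
      = (n + 1) * Nat.card {σ : Perm (Option (Fin (n + (r + 1)))) //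
          GP (DOp r n) σ ∧ σ none = some (c0 r n)} := by
    rw [card_fiber_mul
      (fun σ : {σ : Perm (Option (Fin (n + (r + 1)))) // GP (DOp r n) σ} =>
        (⟨σ.1.symm (some (c0 r n)), hfmem σ⟩ : {o : Option (Fin (n + (r + 1))) // ¬ DOp r n o}))
      (Nat.card {σ : Perm (Option (Fin (n + (r + 1)))) //
          GP (DOp r n) σ ∧ σ none = some (c0 r n)})
      (fun y => by
        rw [Nat.card_congr (Equiv.subtypeEquivRight (fun x => Subtype.ext_iff)), hfib y]),
      hND]
  -- Step C : remove `none`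
  have hσeq : ∀ σ : Perm (Option (Fin (n + (r + 1)))), σ none = some (c0 r n) →
      Equiv.swap none (some (c0 r n)) * (removeNone σ).optionCongr = σ := by
    intro σ hσ
    have h1 := map_equiv_removeNone σ
    rw [hσ] at h1
    rw [h1, ← mul_assoc, Equiv.swap_mul_self, one_mul]
  have hrem : ∀ τ : Perm (Fin (n + (r + 1))),
      removeNone (Equiv.swap none (some (c0 r n)) * τ.optionCongr) = τ := by
    intro τ
    apply Equiv.optionCongr_injective
    rw [map_equiv_removeNone, splice_none, ← mul_assoc, Equiv.swap_mul_self, one_mul]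
  have hC : Nat.card {σ : Perm (Option (Fin (n + (r + 1)))) //
        GP (DOp r n) σ ∧ σ none = some (c0 r n)}
      = Nat.card {τ : Perm (Fin (n + (r + 1))) //
          (∀ x, x ≠ c0 r n → τ x ≠ x) ∧
            ∀ i j, Db r n i → Db r n j → i ≠ j → ¬ τ.SameCycle i j} := by
    apply Nat.card_congr
    exact
      { toFun := fun σ => ⟨removeNone σ.1,
          (splice_GP (c0 r n) (removeNone σ.1) (Db r n)).1
            (by rw [hσeq σ.1 σ.2.2]; exact σ.2.1)⟩
        invFun := fun τ => ⟨Equiv.swap none (some (c0 r n)) * (τ.1).optionCongr,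
          (splice_GP (c0 r n) τ.1 (Db r n)).2 τ.2, splice_none _ _⟩
        left_inv := fun σ => Subtype.ext (hσeq σ.1 σ.2.2)
        right_inv := fun τ => Subtype.ext (hrem τ.1) }
  -- Step D : split along whether `c0` is fixed
  have hD : Nat.card {τ : Perm (Fin (n + (r + 1))) //
        (∀ x, x ≠ c0 r n → τ x ≠ x) ∧
          ∀ i j, Db r n i → Db r n j → i ≠ j → ¬ τ.SameCycle i j}
      = Nat.card {τ : Perm (Fin (n + (r + 1))) //
          ((∀ x, x ≠ c0 r n → τ x ≠ x) ∧
            ∀ i j, Db r n i → Db r n j → i ≠ j → ¬ τ.SameCycle i j) ∧ τ (c0 r n) = c0 r n}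
        + Nat.card {τ : Perm (Fin (n + (r + 1))) // GP (Db r n) τ} := by
    rw [Nat.card_congr (Equiv.sumCompl
      (fun x : {τ : Perm (Fin (n + (r + 1))) //
        (∀ x, x ≠ c0 r n → τ x ≠ x) ∧
          ∀ i j, Db r n i → Db r n j → i ≠ j → ¬ τ.SameCycle i j} =>
        x.1 (c0 r n) = c0 r n)).symm, Nat.card_sum]
    congr 1
    · exact Nat.card_congr (Equiv.subtypeSubtypeEquivSubtypeInter
        (fun τ : Perm (Fin (n + (r + 1))) => (∀ x, x ≠ c0 r n → τ x ≠ x) ∧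
          ∀ i j, Db r n i → Db r n j → i ≠ j → ¬ τ.SameCycle i j)
        (fun τ : Perm (Fin (n + (r + 1))) => τ (c0 r n) = c0 r n))
    · refine Nat.card_congr ((Equiv.subtypeSubtypeEquivSubtypeInter
        (fun τ : Perm (Fin (n + (r + 1))) => (∀ x, x ≠ c0 r n → τ x ≠ x) ∧
          ∀ i j, Db r n i → Db r n j → i ≠ j → ¬ τ.SameCycle i j)
        (fun τ : Perm (Fin (n + (r + 1))) => ¬ (τ (c0 r n) = c0 r n))).trans
        (Equiv.subtypeEquivRight ?_))
      intro τ
      constructor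
      · rintro ⟨⟨hd, hddc⟩, hne⟩
        refine ⟨fun x => ?_, hddc⟩
        by_cases hx : x = c0 r n
        · rw [hx]; exact hne
        · exact hd x hx
      · rintro ⟨hd, hddc⟩
        exact ⟨⟨fun x _ => hd x, hddc⟩, hd _⟩
  -- Step E : the `c0`-fixed part counts `rDerangement r n`
  have hE : Nat.card {τ : Perm (Fin (n + (r + 1))) //
        ((∀ x, x ≠ c0 r n → τ x ≠ x) ∧
          ∀ i j, Db r n i → Db r n j → i ≠ j → ¬ τ.SameCycle i j) ∧ τ (c0 r n) = c0 r n}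
      = rDerangement r n := by
    have hp : ∀ (τ : Perm (Fin (n + (r + 1)))), τ (c0 r n) = c0 r n →
        ∀ x, x ≠ c0 r n ↔ τ x ≠ c0 r n := by
      intro τ hfix x
      constructor
      · intro hx he; exact hx (τ.injective (he.trans hfix.symm))
      · intro hx he; exact hx (by rw [he, hfix])
    have fwd : ∀ τ : Perm (Fin (n + (r + 1))),
        ∀ h : ((∀ x, x ≠ c0 r n → τ x ≠ x) ∧
            ∀ i j, Db r n i → Db r n j → i ≠ j → ¬ τ.SameCycle i j) ∧ τ (c0 r n) = c0 r n,
        GP (fun x : {y : Fin (n + (r + 1)) // y ≠ c0 r n} => Db r n x.1)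
          (τ.subtypePerm (fun x => (hp τ h.2 x).symm)) := by
      intro τ h
      constructor
      · intro x heq
        have hval : τ x.1 = x.1 := congrArg Subtype.val heq
        exact h.1.1 x.1 x.2 hval
      · intro i j hi hj hne hsc
        exact h.1.2 i.1 j.1 hi hj (fun hh => hne (Subtype.ext hh))
          ((sameCycle_subtypePerm τ (hp τ h.2) i j).1 hsc)
    have bwd : ∀ τ' : Perm {y : Fin (n + (r + 1)) // y ≠ c0 r n},
        GP (fun x : {y : Fin (n + (r + 1)) // y ≠ c0 r n} => Db r n x.1) τ' →
        (((∀ x, x ≠ c0 r n → Equiv.Perm.ofSubtype τ' x ≠ x) ∧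
            ∀ i j, Db r n i → Db r n j → i ≠ j → ¬ (Equiv.Perm.ofSubtype τ').SameCycle i j) ∧
          Equiv.Perm.ofSubtype τ' (c0 r n) = c0 r n) := by
      intro τ' h'
      have hfixc : Equiv.Perm.ofSubtype τ' (c0 r n) = c0 r n :=
        Equiv.Perm.ofSubtype_apply_of_not_mem τ' (by simp)
      refine ⟨⟨?_, ?_⟩, hfixc⟩
      · intro x hx heq
        rw [Equiv.Perm.ofSubtype_apply_of_mem τ' hx] at heq
        exact h'.1 ⟨x, hx⟩ (Subtype.ext heq)
      · intro i j hi hj hne hsc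
        by_cases hic : i = c0 r n
        · subst hic
          exact hne (sameCycle_fixed hfixc hsc)
        · by_cases hjc : j = c0 r n
          · subst hjc
            exact hne (sameCycle_fixed hfixc hsc.symm).symm
          · exact h'.2 ⟨i, hic⟩ ⟨j, hjc⟩ hi hj
              (fun hh => hne (congrArg Subtype.val hh))
              ((sameCycle_ofSubtype τ' ⟨i, hic⟩ ⟨j, hjc⟩).1 hsc)
    have M : {τ : Perm (Fin (n + (r + 1))) //
        ((∀ x, x ≠ c0 r n → τ x ≠ x) ∧
          ∀ i j, Db r n i → Db r n j → i ≠ j → ¬ τ.SameCycle i j) ∧ τ (c0 r n) = c0 r n}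
        ≃ {τ' : Perm {y : Fin (n + (r + 1)) // y ≠ c0 r n} //
            GP (fun x : {y : Fin (n + (r + 1)) // y ≠ c0 r n} => Db r n x.1) τ'} :=
      { toFun := fun τ => ⟨τ.1.subtypePerm (fun x => (hp τ.1 τ.2.2 x).symm), fwd τ.1 τ.2⟩
        invFun := fun τ' => ⟨Equiv.Perm.ofSubtype τ'.1, bwd τ'.1 τ'.2⟩
        left_inv := fun τ => Subtype.ext
          (Equiv.Perm.ofSubtype_subtypePerm (fun x => (hp τ.1 τ.2.2 x).symm)
            (fun x hτx => by
              intro hxc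
              exact hτx (by rw [hxc, τ.2.2])))
        right_inv := fun τ' => Subtype.ext (Equiv.Perm.subtypePerm_ofSubtype τ'.1) }
    obtain ⟨e2', he2'⟩ : ∃ e : {y : Fin (n + (r + 1)) // y ≠ c0 r n} ≃ Fin (n + r),
        ∀ x, ((e x : Fin (n + r)) : ℕ) = (x.1 : ℕ) - 1 := by
      refine ⟨⟨fun x => ⟨(x.1 : ℕ) - 1, ?_⟩, fun y => ⟨⟨(y : ℕ) + 1, ?_⟩, ?_⟩, ?_, ?_⟩,
        fun x => rfl⟩
      · have h1 := x.1.isLt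
        have h2 : (x.1 : ℕ) ≠ 0 := fun hh => x.2 (Fin.ext hh)
        omega
      · have := y.isLt
        omega
      · intro hh
        have h2 := congrArg (fun t : Fin (n + (r + 1)) => (t : ℕ)) hh
        simp [c0] at h2
      · rintro ⟨x, hx⟩
        have h2 : (x : ℕ) ≠ 0 := fun hh => hx (Fin.ext hh)
        apply Subtype.ext
        apply Fin.ext
        show (x : ℕ) - 1 + 1 = (x : ℕ)
        omega
      · intro y
        apply Fin.ext
        show (y : ℕ) + 1 - 1 = (y : ℕ)
        omega
    have hiff : ∀ x : {y : Fin (n + (r + 1)) // y ≠ c0 r n},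
        Db r n x.1 ↔ ((e2' x : Fin (n + r)) : ℕ) < r := by
      intro x
      have h2 : (x.1 : ℕ) ≠ 0 := fun hh => x.2 (Fin.ext hh)
      have h3 : ((e2' x : Fin (n + r)) : ℕ) = (x.1 : ℕ) - 1 := he2' x
      refine ⟨fun hx => ?_, fun hx => ?_⟩
      · have hx' : (x.1 : ℕ) < r + 1 := hx
        rw [h3]
        omega
      · have hx' : ((e2' x : Fin (n + r)) : ℕ) < r := hx
        rw [h3] at hx'
        show (x.1 : ℕ) < r + 1
        omega
    unfold rDerangement
    exact Nat.card_congr (M.trans (gpEquiv e2' hiff))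
  -- Step F : the non-fixed part counts `rDerangement (r+1) n`
  have hF : Nat.card {τ : Perm (Fin (n + (r + 1))) // GP (Db r n) τ}
      = rDerangement (r + 1) n := by
    unfold rDerangement
    exact Nat.card_congr (Equiv.subtypeEquivRight (fun σ => Iff.rfl))
  rw [h0, hA, hC, hD, hE, hF]
  ring

/-! ### The integer sequence `C'` and the divisibility identity -/

def C' : ℕ → ℕ → ℕ
  | 0, n => numDerangements n
  | _ + 1, 0 => 0
  | r + 1, n + 1 => (n - r) * C' (r + 1) n + C' r n

lemma rDer_eq : ∀ n r, rDerangement r n = n.descFactorial r * C' r n := by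
  intro n
  induction n with
  | zero =>
    intro r
    cases r with
    | zero => rw [rDer_zero_eq]; simp [C']
    | succ r => rw [rDer_succ_zero]; simp
  | succ n ih =>
    intro r
    cases r with
    | zero => rw [rDer_zero_eq]; simp [C']
    | succ r =>
      rw [key r n, ih (r + 1), ih r]
      have hC : C' (r + 1) (n + 1) = (n - r) * C' (r + 1) n + C' r n := by
        simp [C']
      rw [hC, Nat.succ_descFactorial_succ, Nat.descFactorial_succ]
      ring

lemma Cr_eq {r n : ℕ} (h : r ≤ n) : Cr r n = C' r n := by
  have hpos : 0 < n.descFactorial r := by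
    rcases Nat.eq_zero_or_pos (n.descFactorial r) with h0 | h0
    · exact absurd (Nat.descFactorial_eq_zero_iff_lt.1 h0) (by omega)
    · exact h0
  unfold Cr
  rw [rDer_eq n r, Nat.mul_div_cancel_left _ hpos]

/-! ### The explicit alternating-sum formula -/

def idesc (m j : ℕ) : ℤ := ∏ i ∈ Finset.range j, ((m : ℤ) - i)

def U (r m K : ℕ) : ℤ :=
  ∑ j ∈ Finset.range K, (-1) ^ j * idesc m j * ((r + j).choose r : ℤ)

lemma idesc_succ (m j : ℕ) : idesc m (j + 1) = idesc m j * ((m : ℤ) - j) :=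
  Finset.prod_range_succ _ _

lemma idesc_succ_left (m j : ℕ) : idesc (m + 1) (j + 1) = (m + 1) * idesc m j := by
  rw [idesc, Finset.prod_range_succ']
  have h1 : ∀ i ∈ Finset.range j, (((m + 1 : ℕ) : ℤ) - ((i + 1 : ℕ) : ℤ)) = ((m : ℤ) - i) := by
    intro i _
    push_cast
    ring
  rw [Finset.prod_congr rfl h1]
  show idesc m j * (((m + 1 : ℕ) : ℤ) - ((0 : ℕ) : ℤ)) = _
  push_cast
  ring

lemma idesc_eq_zero {m j : ℕ} (h : m < j) : idesc m j = 0 :=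
  Finset.prod_eq_zero (Finset.mem_range.2 h) (by simp)

lemma idesc_eq_descFactorial : ∀ j m, j ≤ m → idesc m j = (m.descFactorial j : ℤ) := by
  intro j
  induction j with
  | zero => intro m _; simp [idesc]
  | succ j ih =>
    intro m hm
    rw [idesc_succ, ih m (by omega), Nat.descFactorial_succ]
    have : ((m - j : ℕ) : ℤ) = (m : ℤ) - j := by
      have : j ≤ m := by omega
      push_cast [this]
      ring
    push_cast
    rw [← this]
    push_cast
    ring

lemma neg_one_pow_mul_self (m : ℕ) : ((-1 : ℤ) ^ m) * (-1) ^ m = 1 := by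
  rw [← pow_add]
  exact Even.neg_one_pow ⟨m, rfl⟩

lemma U_base (m : ℕ) : U 0 m (m + 1) = (-1) ^ m * (numDerangements m : ℤ) := by
  induction m with
  | zero => simp [U, idesc]
  | succ m ih =>
    have hstep : U 0 (m + 1) (m + 2) = 1 - (m + 1) * U 0 m (m + 1) := by
      rw [U, Finset.sum_range_succ']
      have h1 : ∀ j ∈ Finset.range (m + 1),
          ((-1 : ℤ) ^ (j + 1) * idesc (m + 1) (j + 1) * (((0 + (j + 1)).choose 0 : ℕ) : ℤ))
            = -((m + 1) * ((-1 : ℤ) ^ j * idesc m j * (((0 + j).choose 0 : ℕ) : ℤ))) := by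
        intro j _
        rw [idesc_succ_left]
        simp only [Nat.choose_zero_right, Nat.cast_one]
        push_cast
        ring
      rw [Finset.sum_congr rfl h1, Finset.sum_neg_distrib, ← Finset.mul_sum]
      rw [← U]
      simp [idesc]
      ring
    rw [hstep, ih, numDerangements_succ]
    have hs := neg_one_pow_mul_self m
    rw [pow_succ]
    push_cast
    linear_combination (-(1 : ℤ)) * hs

lemma U_pascal (r m : ℕ) :
    U (r + 1) (m + 1) (m + 2) = U r (m + 1) (m + 2) - (m + 1) * U (r + 1) m (m + 1) := by
  have hterm : ∀ j ∈ Finset.range (m + 2),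
      ((-1 : ℤ) ^ j * idesc (m + 1) j * (((r + 1 + j).choose (r + 1) : ℕ) : ℤ))
        = (-1) ^ j * idesc (m + 1) j * (((r + j).choose r : ℕ) : ℤ)
          + (-1) ^ j * idesc (m + 1) j * (((r + j).choose (r + 1) : ℕ) : ℤ) := by
    intro j _
    have hch : (r + 1 + j).choose (r + 1) = (r + j).choose r + (r + j).choose (r + 1) := by
      rw [show r + 1 + j = (r + j) + 1 by omega]
      exact Nat.choose_succ_succ _ _
    rw [hch]
    push_cast
    ring
  have hsplit : U (r + 1) (m + 1) (m + 2)
      = U r (m + 1) (m + 2)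
        + ∑ j ∈ Finset.range (m + 2),
            (-1 : ℤ) ^ j * idesc (m + 1) j * (((r + j).choose (r + 1) : ℕ) : ℤ) := by
    rw [U, Finset.sum_congr rfl hterm, Finset.sum_add_distrib, ← U]
  have hS : ∑ j ∈ Finset.range (m + 2),
      (-1 : ℤ) ^ j * idesc (m + 1) j * (((r + j).choose (r + 1) : ℕ) : ℤ)
        = -((m + 1) * U (r + 1) m (m + 1)) := by
    rw [Finset.sum_range_succ']
    have h1 : ∀ j ∈ Finset.range (m + 1),
        ((-1 : ℤ) ^ (j + 1) * idesc (m + 1) (j + 1) * (((r + (j + 1)).choose (r + 1) : ℕ) : ℤ))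
          = -((m + 1) * ((-1 : ℤ) ^ j * idesc m j * (((r + 1 + j).choose (r + 1) : ℕ) : ℤ))) := by
      intro j _
      rw [idesc_succ_left, show r + (j + 1) = r + 1 + j by omega]
      push_cast
      ring
    rw [Finset.sum_congr rfl h1, Finset.sum_neg_distrib, ← Finset.mul_sum, ← U]
    have h0 : ((-1 : ℤ) ^ 0 * idesc (m + 1) 0 * (((r + 0).choose (r + 1) : ℕ) : ℤ)) = 0 := by
      rw [Nat.choose_eq_zero_of_lt (by omega)]
      simp
    rw [h0]
    ring
  rw [hsplit, hS]
  ring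

lemma formula : ∀ r m, (C' r (r + m) : ℤ) = (-1) ^ m * U r m (m + 1) := by
  intro r
  induction r with
  | zero =>
    intro m
    rw [U_base]
    have hs := neg_one_pow_mul_self m
    have h0 : C' 0 (0 + m) = numDerangements m := by simp [C']
    rw [h0]
    linear_combination (-(numDerangements m : ℤ)) * hs
  | succ r ihr =>
    intro m
    induction m with
    | zero =>
      have h0 : C' (r + 1) (r + 1 + 0) = C' r r := by
        show C' (r + 1) (r + 1) = C' r r
        simp [C']
      have h1 : (C' r r : ℤ) = 1 := by
        have := ihr 0
        rw [show r + 0 = r by omega] at this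
        simpa [U, idesc] using this
      rw [h0]
      rw [h1]
      simp [U, idesc]
    | succ m ihm =>
      have hstep : C' (r + 1) ((r + 1) + (m + 1))
          = (m + 1) * C' (r + 1) ((r + 1) + m) + C' r (r + (m + 1)) := by
        show C' (r + 1) (((r + 1) + m) + 1) = _
        have := C'.eq_3 r ((r + 1) + m)
        rw [this, show (r + 1) + m - r = m + 1 by omega, show (r + 1) + m = r + (m + 1) by omega]
      rw [hstep]
      push_cast
      rw [ihm, ihr (m + 1), U_pascal]
      ring

/-! ### Congruence lemmas for `U` -/

lemma U_ext (r m t : ℕ) : U r m ((m + 1) + t) = U r m (m + 1) := by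
  rw [U, Finset.sum_range_add]
  have hz : ∀ i ∈ Finset.range t,
      ((-1 : ℤ) ^ ((m + 1) + i) * idesc m ((m + 1) + i) * (((r + ((m + 1) + i)).choose r : ℕ) : ℤ))
        = 0 := by
    intro i _
    rw [idesc_eq_zero (by omega)]
    ring
  rw [Finset.sum_eq_zero hz, add_zero, ← U]

lemma idesc_dvd {d j : ℕ} (hd : 0 < d) (h : d ≤ j) (m : ℕ) : (d : ℤ) ∣ idesc m j := by
  obtain ⟨t, rfl⟩ : ∃ t, j = d + t := ⟨j - d, by omega⟩
  have hsplit : idesc m (d + t) = idesc m d * ∏ i ∈ Finset.range t, ((m : ℤ) - (d + i)) := by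
    rw [idesc, Finset.prod_range_add]
    rfl
  rw [hsplit]
  apply dvd_mul_of_dvd_left
  by_cases hm : m < d
  · rw [idesc_eq_zero hm]
    exact dvd_zero _
  · rw [idesc_eq_descFactorial d m (by omega)]
    exact Int.natCast_dvd_natCast.2
      ((Nat.dvd_factorial hd le_rfl).trans (Nat.factorial_dvd_descFactorial m d))

lemma U_trunc (r m d t : ℕ) (hd : 0 < d) : U r m (d + t) ≡ U r m d [ZMOD (d : ℤ)] := by
  rw [U, U, Finset.sum_range_add]
  have hdvd : (d : ℤ) ∣ ∑ i ∈ Finset.range t,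
      (-1 : ℤ) ^ (d + i) * idesc m (d + i) * (((r + (d + i)).choose r : ℕ) : ℤ) := by
    apply Finset.dvd_sum
    intro i _
    exact ((idesc_dvd hd (by omega) m).mul_left _).mul_right _
  have := Int.ModEq.add_left
    (∑ j ∈ Finset.range d, (-1 : ℤ) ^ j * idesc m j * (((r + j).choose r : ℕ) : ℤ))
    (Int.modEq_zero_iff_dvd.2 hdvd)
  simpa using this

lemma modeq_sum {N : ℤ} (f g : ℕ → ℤ) (K : ℕ) (h : ∀ j, f j ≡ g j [ZMOD N]) :
    (∑ j ∈ Finset.range K, f j) ≡ (∑ j ∈ Finset.range K, g j) [ZMOD N] := by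
  induction K with
  | zero => rfl
  | succ K ih =>
    rw [Finset.sum_range_succ, Finset.sum_range_succ]
    exact ih.add (h K)

lemma idesc_modeq {d m₁ m₂ : ℕ} (h : m₁ ≡ m₂ [MOD d]) (j : ℕ) :
    idesc m₁ j ≡ idesc m₂ j [ZMOD (d : ℤ)] := by
  induction j with
  | zero => rfl
  | succ j ih =>
    rw [idesc_succ, idesc_succ]
    exact ih.mul (Int.ModEq.sub_right _ (Int.natCast_modEq_iff.2 h))

lemma U_congr {d m₁ m₂ : ℕ} (r : ℕ) (h : m₁ ≡ m₂ [MOD d]) :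
    U r m₁ d ≡ U r m₂ d [ZMOD (d : ℤ)] := by
  apply modeq_sum
  intro j
  exact (Int.ModEq.mul_left _ (idesc_modeq h j)).mul_right _

lemma C'_modeq {r d : ℕ} (hd : 0 < d) {n₁ n₂ : ℕ} (h₁ : r ≤ n₁) (h₂ : r ≤ n₂)
    (h : n₁ ≡ n₂ [MOD d]) :
    ((-1) ^ n₁ * (C' r n₁ : ℤ)) ≡ (-1) ^ n₂ * (C' r n₂ : ℤ) [ZMOD (d : ℤ)] := by
  obtain ⟨m₁, rfl⟩ : ∃ m, n₁ = r + m := ⟨n₁ - r, by omega⟩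
  obtain ⟨m₂, rfl⟩ : ∃ m, n₂ = r + m := ⟨n₂ - r, by omega⟩
  have hm : m₁ ≡ m₂ [MOD d] := Nat.ModEq.add_left_cancel' r h
  have hkey : ∀ m : ℕ, ((-1 : ℤ) ^ (r + m) * (C' r (r + m) : ℤ)) = (-1) ^ r * U r m (m + 1) := by
    intro m
    rw [formula r m, pow_add]
    have hs := neg_one_pow_mul_self m
    linear_combination ((-1 : ℤ) ^ r * U r m (m + 1)) * hs
  rw [hkey m₁, hkey m₂]
  apply Int.ModEq.mul_left
  calc U r m₁ (m₁ + 1) = U r m₁ ((m₁ + 1) + d) := (U_ext r m₁ d).symm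
    _ = U r m₁ (d + (m₁ + 1)) := by rw [Nat.add_comm]
    _ ≡ U r m₁ d [ZMOD (d : ℤ)] := U_trunc r m₁ d (m₁ + 1) hd
    _ ≡ U r m₂ d [ZMOD (d : ℤ)] := U_congr r hm
    _ ≡ U r m₂ (d + (m₂ + 1)) [ZMOD (d : ℤ)] := (U_trunc r m₂ d (m₂ + 1) hd).symm
    _ = U r m₂ ((m₂ + 1) + d) := by rw [Nat.add_comm]
    _ = U r m₂ (m₂ + 1) := U_ext r m₂ d

end CrAux

theorem Cr_periodicity (r d : ℕ) (hr : 0 < r) (hd : 0 < d) :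
    (∀ n₁ n₂ : ℕ, r ≤ n₁ → r ≤ n₂ → n₁ ≡ n₂ [MOD d] →
      ((-1) ^ n₁ * Cr r n₁ : ℤ) ≡ (-1) ^ n₂ * Cr r n₂ [ZMOD (d : ℤ)]) ∧
    (2 ∣ d → ∀ n : ℕ, r ≤ n → Cr r (n + d) ≡ Cr r n [MOD d]) ∧
    (¬ 2 ∣ d → ∀ n : ℕ, r ≤ n → Cr r (n + 2 * d) ≡ Cr r n [MOD d]) := by
  have P1 : ∀ n₁ n₂ : ℕ, r ≤ n₁ → r ≤ n₂ → n₁ ≡ n₂ [MOD d] →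
      ((-1) ^ n₁ * Cr r n₁ : ℤ) ≡ (-1) ^ n₂ * Cr r n₂ [ZMOD (d : ℤ)] := by
    intro n₁ n₂ h₁ h₂ h
    rw [CrAux.Cr_eq h₁, CrAux.Cr_eq h₂]
    exact CrAux.C'_modeq hd h₁ h₂ h
  refine ⟨P1, ?_, ?_⟩
  · intro h2 n hn
    obtain ⟨k, rfl⟩ := h2
    have H := P1 (n + 2 * k) n (by omega) hn
      (Nat.add_mod_right n (2 * k))
    have he : ((-1 : ℤ)) ^ (n + 2 * k) = (-1) ^ n := by
      rw [pow_add, pow_mul]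
      norm_num
    rw [he] at H
    have H2 := H.mul_left ((-1 : ℤ) ^ n)
    rw [← mul_assoc, ← mul_assoc, CrAux.neg_one_pow_mul_self, one_mul, one_mul] at H2
    exact Int.natCast_modEq_iff.1 H2
  · intro _ n hn
    have H := P1 (n + 2 * d) n (by omega) hn
      (show (n + 2 * d) % d = n % d by
        rw [show n + 2 * d = (n + d) + d by omega, Nat.add_mod_right, Nat.add_mod_right])
    have he : ((-1 : ℤ)) ^ (n + 2 * d) = (-1) ^ n := by
      rw [pow_add, pow_mul]
      norm_num
    rw [he] at H
    have H2 := H.mul_left ((-1 : ℤ) ^ n)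
    rw [← mul_assoc, ← mul_assoc, CrAux.neg_one_pow_mul_self, one_mul, one_mul] at H2
    exact Int.natCast_modEq_iff.1 H2
end

section
/- Let r ≥ 2 be an integer and suppose there exists a prime p such that p does not divide C_r(n) for any n ≥ r. Then for every nonzero rational number q, the Diophantine equation D_r(n) = q·m! has only finitely many solutions (n, m) ∈ ℕ_+ × ℕ_+. -/
open Equiv Equiv.Perm


lemma sameCycle_of_sq_fixed {α : Type*} (σ : Equiv.Perm α) {x y : α}
    (h2 : σ (σ x) = x) (h : σ.SameCycle x y) : y = x ∨ y = σ x := by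
  obtain ⟨k, hk⟩ := h
  have hsq : (σ ^ 2) x = x := by simpa [pow_succ, Equiv.Perm.mul_apply] using h2
  have hk2 : σ ^ k = σ ^ (k % 2) * (σ ^ (2 : ℤ)) ^ (k / 2) := by
    rw [← zpow_mul, ← zpow_add]; congr 1; omega
  have hfix : ((σ ^ (2 : ℤ)) ^ (k / 2)) x = x := by
    apply Equiv.Perm.zpow_apply_eq_self_of_apply_eq_self
    rw [zpow_ofNat]; exact hsq
  rcases Int.emod_two_eq k with h0 | h1
  · left; rw [← hk, hk2, h0, Equiv.Perm.mul_apply, hfix, zpow_zero]; rfl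
  · right; rw [← hk, hk2, h1, Equiv.Perm.mul_apply, hfix, zpow_one]

variable {r n : ℕ}

def blockEquiv (hrn : r ≤ n) : (Fin r ⊕ Fin r) ⊕ Fin (n - r) ≃ Fin (n + r) :=
  ((Equiv.sumCongr finSumFinEquiv (Equiv.refl _)).trans finSumFinEquiv).trans
    (finCongr (by omega))

lemma blockEquiv_val_ll (hrn : r ≤ n) (a : Fin r) :
    ((blockEquiv hrn (Sum.inl (Sum.inl a))) : ℕ) = a.val := by
  simp [blockEquiv]

lemma blockEquiv_val_lr (hrn : r ≤ n) (a : Fin r) :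
    ((blockEquiv hrn (Sum.inl (Sum.inr a))) : ℕ) = r + a.val := by
  simp [blockEquiv]; omega

lemma blockEquiv_val_r (hrn : r ≤ n) (b : Fin (n - r)) :
    ((blockEquiv hrn (Sum.inr b)) : ℕ) = r + r + b.val := by
  simp [blockEquiv]

def blockPerm (hrn : r ≤ n) (τ : Equiv.Perm (Fin (n - r))) : Equiv.Perm (Fin (n + r)) :=
  (blockEquiv hrn).permCongr (Equiv.sumCongr (Equiv.sumComm (Fin r) (Fin r)) τ)

lemma blockPerm_apply (hrn : r ≤ n) (τ : Equiv.Perm (Fin (n - r)))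
    (y : (Fin r ⊕ Fin r) ⊕ Fin (n - r)) :
    blockPerm hrn τ (blockEquiv hrn y) =
      blockEquiv hrn ((Equiv.sumCongr (Equiv.sumComm (Fin r) (Fin r)) τ) y) := by
  simp [blockPerm]

lemma blockPerm_fpf (hrn : r ≤ n) (τ : Equiv.Perm (Fin (n - r)))
    (hτ : ∀ b, τ b ≠ b) (x : Fin (n + r)) : blockPerm hrn τ x ≠ x := by
  obtain ⟨y, rfl⟩ := (blockEquiv hrn).surjective x
  rw [blockPerm_apply, (blockEquiv hrn).injective.ne_iff]
  rcases y with (a | a) | b <;> simp [hτ]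

lemma blockPerm_mem (hrn : r ≤ n) (τ : Equiv.Perm (Fin (n - r)))
    (hτ : ∀ b, τ b ≠ b) :
    (∀ x, blockPerm hrn τ x ≠ x) ∧
    ∀ i j : Fin (n + r), (i : ℕ) < r → (j : ℕ) < r → i ≠ j →
      ¬ (blockPerm hrn τ).SameCycle i j := by
  refine ⟨blockPerm_fpf hrn τ hτ, fun i j hi hj hij hsc => ?_⟩
  -- i = blockEquiv (inl (inl ⟨i, hi⟩))
  have hieq : i = blockEquiv hrn (Sum.inl (Sum.inl ⟨(i : ℕ), hi⟩)) := by
    ext; rw [blockEquiv_val_ll]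
  have h1 : blockPerm hrn τ i = blockEquiv hrn (Sum.inl (Sum.inr ⟨(i : ℕ), hi⟩)) := by
    have a1 := congrArg (blockPerm hrn τ) hieq
    rw [blockPerm_apply] at a1
    simpa using a1
  have h2 : blockPerm hrn τ (blockPerm hrn τ i) = i := by
    rw [h1, blockPerm_apply]
    simpa using hieq.symm
  rcases sameCycle_of_sq_fixed _ h2 hsc with h | h
  · exact hij h.symm
  · have : (j : ℕ) = r + (i : ℕ) := by rw [h, h1, blockEquiv_val_lr]
    omega

lemma numDerangements_le_rDerangement (hr : 0 < r) (hrn : r ≤ n) :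
    numDerangements (n - r) ≤ rDerangement r n := by
  classical
  rw [← card_derangements_fin_eq_numDerangements (n := n - r), rDerangement,
    ← Nat.card_eq_fintype_card]
  apply Nat.card_le_card_of_injective
    (f := fun τ : derangements (Fin (n - r)) =>
      (⟨blockPerm hrn τ.1, blockPerm_mem hrn τ.1 τ.2⟩ : {σ : Equiv.Perm (Fin (n + r)) //
        (∀ x, σ x ≠ x) ∧
        ∀ i j : Fin (n + r), (i : ℕ) < r → (j : ℕ) < r → i ≠ j → ¬ σ.SameCycle i j}))
  intro τ₁ τ₂ h
  simp only [Subtype.mk.injEq] at h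
  apply Subtype.ext
  apply Equiv.ext
  intro b
  have h3 := congrArg (fun σ : Equiv.Perm (Fin (n+r)) => σ (blockEquiv hrn (Sum.inr b))) h
  simp only [blockPerm_apply] at h3
  have h4 := (blockEquiv hrn).injective h3
  simpa using h4


variable {r n : ℕ}

lemma exists_fixing_perm (hrn : r ≤ n)
    (a b : Fin r ↪ {x : Fin (n + r) // r ≤ (x : ℕ)}) :
    ∃ π : Equiv.Perm (Fin (n + r)),
      (∀ x : Fin (n + r), (x : ℕ) < r → π x = x) ∧
      ∀ i, π ((a i) : Fin (n + r)) = (b i : Fin (n + r)) := by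
  classical
  have hca : Fintype.card {x : {x : Fin (n + r) // r ≤ (x : ℕ)} // x ∈ Set.range ⇑a} = r := by
    rw [Fintype.card_congr a.toEquivRange.symm, Fintype.card_fin]
  have hcb : Fintype.card {x : {x : Fin (n + r) // r ≤ (x : ℕ)} // x ∈ Set.range ⇑b} = r := by
    rw [Fintype.card_congr b.toEquivRange.symm, Fintype.card_fin]
  have gc : {x : {x : Fin (n + r) // r ≤ (x : ℕ)} // ¬ x ∈ Set.range ⇑a} ≃
      {x : {x : Fin (n + r) // r ≤ (x : ℕ)} // ¬ x ∈ Set.range ⇑b} := by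
    apply Fintype.equivOfCardEq
    rw [Fintype.card_subtype_compl, Fintype.card_subtype_compl, hca, hcb]
  let g := a.toEquivRange.symm.trans b.toEquivRange
  let π' : Equiv.Perm {x : Fin (n + r) // r ≤ (x : ℕ)} :=
    (Equiv.sumCompl (· ∈ Set.range ⇑a)).symm.trans
      ((g.sumCongr gc).trans (Equiv.sumCompl (· ∈ Set.range ⇑b)))
  refine ⟨π'.extendDomain (Equiv.refl _), fun x hx => ?_, fun i => ?_⟩
  · exact Equiv.Perm.extendDomain_apply_not_subtype _ _ (by simp; omega)
  · have h1 := Equiv.Perm.extendDomain_apply_image π' (Equiv.refl _) (a i)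
    simp only [Equiv.refl_apply] at h1
    rw [h1]
    congr 1
    show π' (a i) = b i
    have h2 : (Equiv.sumCompl (· ∈ Set.range ⇑a)).symm (a i) =
        Sum.inl ⟨a i, Set.mem_range_self i⟩ :=
      Equiv.sumCompl_symm_apply_of_pos (Set.mem_range_self i)
    show (Equiv.sumCompl (· ∈ Set.range ⇑b))
      ((g.sumCongr gc) ((Equiv.sumCompl (· ∈ Set.range ⇑a)).symm (a i))) = b i
    rw [h2]
    simp only [Equiv.sumCongr_apply, Sum.map_inl, Equiv.sumCompl_apply_inl]
    show ((b.toEquivRange (a.toEquivRange.symm ⟨a i, Set.mem_range_self i⟩)) :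
      {x : Fin (n + r) // r ≤ (x : ℕ)}) = b i
    rw [show (⟨a i, Set.mem_range_self i⟩ : {x // x ∈ Set.range ⇑a}) = a.toEquivRange i from rfl]
    rw [Equiv.symm_apply_apply]
    rfl

lemma conj_mem (σ π : Equiv.Perm (Fin (n + r)))
    (hσ : (∀ x, σ x ≠ x) ∧
      ∀ i j : Fin (n + r), (i : ℕ) < r → (j : ℕ) < r → i ≠ j → ¬ σ.SameCycle i j)
    (hπ : ∀ x : Fin (n + r), (x : ℕ) < r → π x = x) :
    (∀ x, (π * σ * π⁻¹) x ≠ x) ∧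
      ∀ i j : Fin (n + r), (i : ℕ) < r → (j : ℕ) < r → i ≠ j →
        ¬ (π * σ * π⁻¹).SameCycle i j := by
  have hπinv : ∀ x : Fin (n + r), (x : ℕ) < r → π⁻¹ x = x := by
    intro x hx
    conv_lhs => rw [← hπ x hx]
    exact π.symm_apply_apply x
  constructor
  · intro x hx
    apply hσ.1 (π⁻¹ x)
    have := congrArg (fun z => π⁻¹ z) hx
    simpa [Equiv.Perm.mul_apply] using this
  · intro i j hi hj hij hsc
    rw [Equiv.Perm.sameCycle_conj] at hsc
    rw [hπinv i hi, hπinv j hj] at hsc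
    exact hσ.2 i j hi hj hij hsc

lemma descFactorial_dvd_rDerangement (hr : 0 < r) (hrn : r ≤ n) :
    n.descFactorial r ∣ rDerangement r n := by
  classical
  set S := {σ : Equiv.Perm (Fin (n + r)) //
    (∀ x, σ x ≠ x) ∧
    ∀ i j : Fin (n + r), (i : ℕ) < r → (j : ℕ) < r → i ≠ j → ¬ σ.SameCycle i j} with hS
  set U := {x : Fin (n + r) // r ≤ (x : ℕ)} with hU
  have hrnr : r ≤ n + r := by omega
  set ι : Fin r → Fin (n + r) := Fin.castLE hrnr with hι
  have hval : ∀ σ : S, ∀ i : Fin r, r ≤ ((σ.1 (ι i) : Fin (n + r)) : ℕ) := by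
    intro σ i
    by_contra hlt
    push_neg at hlt
    have hne : σ.1 (ι i) ≠ ι i := σ.2.1 (ι i)
    have hsc : σ.1.SameCycle (ι i) (σ.1 (ι i)) := ⟨1, by simp⟩
    exact σ.2.2 (ι i) (σ.1 (ι i)) i.isLt hlt (Ne.symm hne) hsc
  set f : S → (Fin r ↪ U) := fun σ =>
    ⟨fun i => ⟨σ.1 (ι i), hval σ i⟩, by
      intro i j hijeq
      have h1 : σ.1 (ι i) = σ.1 (ι j) := congrArg Subtype.val hijeq
      have h2 := σ.1.injective h1
      apply Fin.ext
      simpa [hι] using congrArg Fin.val h2⟩ with hf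
  letI instS : Fintype S := Fintype.ofFinite _
  letI instFiber : ∀ t : Fin r ↪ U, Fintype {s : S // f s = t} := fun t => Fintype.ofFinite _
  have hfiber : ∀ t₁ t₂ : Fin r ↪ U,
      Fintype.card {s : S // f s = t₁} = Fintype.card {s : S // f s = t₂} := by
    intro t₁ t₂
    obtain ⟨π, hπfix, hπmap⟩ := exists_fixing_perm hrn t₁ t₂
    have hπinv : ∀ x : Fin (n + r), (x : ℕ) < r → π⁻¹ x = x := by
      intro x hx
      conv_lhs => rw [← hπfix x hx]
      exact π.symm_apply_apply x
    have hπmapinv : ∀ i, π⁻¹ ((t₂ i) : Fin (n + r)) = ((t₁ i) : Fin (n + r)) := by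
      intro i
      rw [← hπmap i]
      exact π.symm_apply_apply _
    apply Fintype.card_congr
    refine ⟨fun s => ⟨⟨π * s.1.1 * π⁻¹, conj_mem s.1.1 π s.1.2 hπfix⟩, ?_⟩,
            fun s => ⟨⟨π⁻¹ * s.1.1 * π⁻¹⁻¹, conj_mem s.1.1 π⁻¹ s.1.2 hπinv⟩, ?_⟩,
            fun s => ?_, fun s => ?_⟩
    · obtain ⟨⟨σ, hσ⟩, hs⟩ := s
      apply DFunLike.ext
      intro i
      apply Subtype.ext
      show (π * σ * π⁻¹) (ι i) = ((t₂ i) : Fin (n + r))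
      have h1 : π⁻¹ (ι i) = ι i := hπinv (ι i) i.isLt
      have h2 : σ (ι i) = ((t₁ i) : Fin (n + r)) := by
        have := congrArg (fun e : Fin r ↪ U => ((e i : U) : Fin (n + r))) hs
        exact this
      rw [Equiv.Perm.mul_apply, Equiv.Perm.mul_apply, h1, h2, hπmap i]
    · obtain ⟨⟨σ, hσ⟩, hs⟩ := s
      apply DFunLike.ext
      intro i
      apply Subtype.ext
      show (π⁻¹ * σ * π⁻¹⁻¹) (ι i) = ((t₁ i) : Fin (n + r))
      have h1 : π⁻¹⁻¹ (ι i) = ι i := by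
        rw [inv_inv]; exact hπfix (ι i) i.isLt
      have h2 : σ (ι i) = ((t₂ i) : Fin (n + r)) := by
        have := congrArg (fun e : Fin r ↪ U => ((e i : U) : Fin (n + r))) hs
        exact this
      rw [Equiv.Perm.mul_apply, Equiv.Perm.mul_apply, h1, h2, hπmapinv i]
    · apply Subtype.ext; apply Subtype.ext
      show π⁻¹ * (π * s.1.1 * π⁻¹) * π⁻¹⁻¹ = s.1.1
      group
    · apply Subtype.ext; apply Subtype.ext
      show π * (π⁻¹ * s.1.1 * π⁻¹⁻¹) * π⁻¹ = s.1.1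
      group
  have hcardU : Fintype.card U = n := by
    have e : U ≃ Fin n :=
      ⟨fun x => ⟨(x.1 : ℕ) - r, by have := x.2; have := (x.1).isLt; omega⟩,
       fun y => ⟨⟨(y : ℕ) + r, by omega⟩, by simp⟩,
       fun x => by
        apply Subtype.ext; apply Fin.ext
        have := x.2
        simp
        omega,
       fun y => by
        apply Fin.ext
        simp⟩
    rw [Fintype.card_congr e, Fintype.card_fin]
  have hcardT : Fintype.card (Fin r ↪ U) = n.descFactorial r := by
    rw [Fintype.card_embedding_eq, hcardU, Fintype.card_fin]
  have hT : Nonempty (Fin r ↪ U) := by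
    apply Function.Embedding.nonempty_of_card_le
    rw [hcardU, Fintype.card_fin]; exact hrn
  obtain ⟨t₀⟩ := hT
  have hre : rDerangement r n = Fintype.card S := by
    rw [show rDerangement r n = Nat.card S from rfl, Nat.card_eq_fintype_card]
  have h0 : Fintype.card S = ∑ t : (Fin r ↪ U), Fintype.card {s : S // f s = t} := by
    rw [Fintype.card_congr (Equiv.sigmaFiberEquiv f).symm, Fintype.card_sigma]
  rw [hre, h0]
  have hcongr : ∀ t : Fin r ↪ U, Fintype.card {s : S // f s = t}
      = Fintype.card {s : S // f s = t₀} := fun t => hfiber t t₀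
  rw [Finset.sum_congr rfl (fun t _ => hcongr t), Finset.sum_const, smul_eq_mul,
    Finset.card_univ, hcardT]
  exact dvd_mul_right _ _


lemma sq_le_two_pow : ∀ k : ℕ, k * k ≤ 2 ^ (k + 1) := by
  intro k
  induction k with
  | zero => norm_num
  | succ k ih =>
    rcases Nat.lt_or_ge k 3 with hk | hk
    · interval_cases k <;> norm_num
    · have h1 : (k+1) * (k+1) ≤ 2 * (k * k) := by nlinarith
      calc (k+1)*(k+1) ≤ 2 * (k*k) := h1
        _ ≤ 2 * 2 ^ (k+1) := by omega
        _ = 2 ^ (k+2) := by ring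

lemma log_le_sqrt_two_mul (n : ℕ) : Nat.log 2 n ≤ Nat.sqrt (2 * n) := by
  rcases Nat.eq_zero_or_pos n with rfl | hn
  · simp
  apply Nat.le_sqrt.mpr
  calc Nat.log 2 n * Nat.log 2 n ≤ 2 ^ (Nat.log 2 n + 1) := sq_le_two_pow _
    _ = 2 * 2 ^ Nat.log 2 n := by ring
    _ ≤ 2 * n := by
        have := Nat.pow_log_le_self 2 (by omega : n ≠ 0)
        omega

lemma div_le_padicValNat_factorial {p : ℕ} (hp : p.Prime) (m : ℕ) :
    m / p ≤ padicValNat p (Nat.factorial m) := by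
  haveI : Fact p.Prime := ⟨hp⟩
  rcases Nat.lt_or_ge m p with hm | hm
  · rw [Nat.div_eq_of_lt hm]; omega
  rw [padicValNat_factorial (show Nat.log p m < Nat.log p m + 1 by omega)]
  have h1 : 1 ∈ Finset.Ico 1 (Nat.log p m + 1) := by
    simp only [Finset.mem_Ico]
    have := Nat.log_pos hp.one_lt hm
    omega
  calc m / p = m / p ^ 1 := by rw [pow_one]
    _ ≤ ∑ i ∈ Finset.Ico 1 (Nat.log p m + 1), m / p ^ i :=
        Finset.single_le_sum (f := fun i => m / p ^ i) (fun i _ => Nat.zero_le _) h1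

lemma fact_le_numDerangements : ∀ k : ℕ, Nat.factorial (k + 1) ≤ numDerangements (k + 2) := by
  intro k
  induction k with
  | zero => simp [numDerangements_add_two]
  | succ k ih =>
    have h := numDerangements_add_two (k + 1)
    calc Nat.factorial (k + 2) = (k + 2) * Nat.factorial (k + 1) := rfl
      _ ≤ (k + 2) * numDerangements (k + 2) := Nat.mul_le_mul_left _ ih
      _ ≤ (k + 2) * (numDerangements (k + 1) + numDerangements (k + 2)) := by
          apply Nat.mul_le_mul_left; omega
      _ = numDerangements (k + 3) := h.symm

lemma padicValNat_descFactorial_le {p r n : ℕ} (hp : p.Prime) (hr : 0 < r) (hrn : r ≤ n) :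
    padicValNat p (n.descFactorial r) ≤ r * (Nat.log 2 n + 1) := by
  have hn1 : 1 ≤ n := le_trans hr hrn
  have h1 : padicValNat p (n.descFactorial r) ≤ Nat.log p (n.descFactorial r) :=
    padicValNat_le_nat_log _
  have h2 : Nat.log p (n.descFactorial r) ≤ Nat.log 2 (n.descFactorial r) :=
    Nat.log_anti_left one_lt_two hp.two_le
  have h3 : Nat.log 2 (n.descFactorial r) ≤ Nat.log 2 (n ^ r) :=
    Nat.log_mono_right (Nat.descFactorial_le_pow n r)
  have h4 : Nat.log 2 (n ^ r) ≤ r * (Nat.log 2 n + 1) := by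
    have hnr : n ^ r ≠ 0 := pow_ne_zero _ (by omega)
    have h5 : 2 ^ Nat.log 2 (n ^ r) ≤ n ^ r := Nat.pow_log_le_self 2 hnr
    have h6 : n ^ r ≤ (2 ^ (Nat.log 2 n + 1)) ^ r :=
      Nat.pow_le_pow_left (le_of_lt (Nat.lt_pow_succ_log_self one_lt_two n)) r
    have h7 : 2 ^ Nat.log 2 (n ^ r) ≤ 2 ^ ((Nat.log 2 n + 1) * r) := by
      rw [← pow_mul] at h6
      exact le_trans h5 h6
    have h8 := (Nat.pow_le_pow_iff_right one_lt_two).mp h7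
    exact le_of_le_of_eq h8 (mul_comm _ _)
  exact le_trans h1 (le_trans h2 (le_trans h3 h4))

lemma le_of_rDerangement_ne_zero {r n : ℕ} (h : rDerangement r n ≠ 0) : r ≤ n := by
  by_contra h'
  push_neg at h'
  apply h
  rw [rDerangement, Nat.card_eq_zero]
  left
  constructor
  intro σ
  have hrnr : r ≤ n + r := by omega
  have hval : ∀ i : Fin r, r ≤ ((σ.1 (Fin.castLE hrnr i) : Fin (n + r)) : ℕ) := by
    intro i
    by_contra hlt
    push_neg at hlt
    have hne : σ.1 (Fin.castLE hrnr i) ≠ Fin.castLE hrnr i := σ.2.1 _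
    have hsc : σ.1.SameCycle (Fin.castLE hrnr i) (σ.1 (Fin.castLE hrnr i)) := ⟨1, by simp⟩
    exact σ.2.2 _ _ i.isLt hlt (Ne.symm hne) hsc
  have emb : Fin r ↪ {x : Fin (n + r) // r ≤ (x : ℕ)} :=
    ⟨fun i => ⟨σ.1 (Fin.castLE hrnr i), hval i⟩, by
      intro i j hij
      have h1 : σ.1 (Fin.castLE hrnr i) = σ.1 (Fin.castLE hrnr j) := congrArg Subtype.val hij
      have h2 := σ.1.injective h1
      apply Fin.ext
      simpa using congrArg Fin.val h2⟩
  have hcard := Fintype.card_le_of_embedding emb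
  have hU : Fintype.card {x : Fin (n + r) // r ≤ (x : ℕ)} = n := by
    have e : {x : Fin (n + r) // r ≤ (x : ℕ)} ≃ Fin n :=
      ⟨fun x => ⟨(x.1 : ℕ) - r, by have := x.2; have := (x.1).isLt; omega⟩,
       fun y => ⟨⟨(y : ℕ) + r, by omega⟩, by simp⟩,
       fun x => by
        apply Subtype.ext; apply Fin.ext
        have := x.2
        simp
        omega,
       fun y => by
        apply Fin.ext
        simp⟩
    rw [Fintype.card_congr e, Fintype.card_fin]
  rw [Fintype.card_fin, hU] at hcard
  omega

theorem rDerangement_eq_factorial_finite (r : ℕ) (hr : 2 ≤ r)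
    (hp : ∃ p : ℕ, p.Prime ∧ ∀ n : ℕ, r ≤ n → ¬ p ∣ Cr r n)
    (q : ℚ) (hq : q ≠ 0) :
    {nm : ℕ × ℕ | 0 < nm.1 ∧ 0 < nm.2 ∧
      (rDerangement r nm.1 : ℚ) = q * nm.2.factorial}.Finite := by
  obtain ⟨p, hpp, hpC⟩ := hp
  haveI : Fact p.Prime := ⟨hpp⟩
  set Vd := padicValNat p q.den with hVd
  set A := p * r with hA
  set B := p * r + p * Vd + p + r + 2 with hB
  set N := 8 * (A * A) + 2 * B + r + q.num.toNat + 6 with hN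
  set M := ((Finset.range N).sup fun i => rDerangement r i * q.den) + 1 with hM
  apply Set.Finite.subset ((Finset.range N ×ˢ Finset.range M).finite_toSet)
  rintro ⟨n, m⟩ ⟨hn, hm, heq⟩
  simp only [Finset.coe_product, Set.mem_prod, Finset.mem_coe, Finset.mem_range]
  have hfm : (0 : ℚ) < (Nat.factorial m : ℚ) := by
    exact_mod_cast Nat.factorial_pos m
  have hD0 : rDerangement r n ≠ 0 := by
    intro h0
    apply hq
    have h1 : q * (Nat.factorial m : ℚ) = 0 := by
      rw [← heq, h0]; simp
    rcases mul_eq_zero.mp h1 with h | h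
    · exact h
    · exact absurd h (ne_of_gt hfm)
  have hrn : r ≤ n := le_of_rDerangement_ne_zero hD0
  have hDpos : 0 < rDerangement r n := Nat.pos_of_ne_zero hD0
  have hDq : (0 : ℚ) < (rDerangement r n : ℚ) := by exact_mod_cast hDpos
  have hqpos : 0 < q := by
    by_contra hqn
    push_neg at hqn
    have h2 : q * (Nat.factorial m : ℚ) ≤ 0 := mul_nonpos_of_nonpos_of_nonneg hqn hfm.le
    rw [← heq] at h2
    linarith
  have hnum : 0 < q.num := Rat.num_pos.mpr hqpos
  have hnum' : 0 < q.num.toNat := by omega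
  have hden : q.den ≠ 0 := q.den_pos.ne'
  -- convert rational equation to a natural number equation
  have hqd : q * (q.den : ℚ) = (q.num : ℚ) := by
    have hdq : ((q.den : ℚ)) ≠ 0 := Nat.cast_ne_zero.mpr hden
    have h0 : (q.num : ℚ) = q * (q.den : ℚ) := (div_eq_iff hdq).mp (Rat.num_div_den q)
    exact h0.symm
  have h1 : (rDerangement r n : ℚ) * (q.den : ℚ) = (q.num : ℚ) * (Nat.factorial m : ℚ) := by
    rw [heq, mul_right_comm, hqd]
  have heqN : rDerangement r n * q.den = q.num.toNat * Nat.factorial m := by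
    have h2 : ((rDerangement r n * q.den : ℕ) : ℚ) = ((q.num.toNat * Nat.factorial m : ℕ) : ℚ) := by
      push_cast
      rw [show ((q.num.toNat : ℚ)) = ((q.num : ℤ) : ℚ) by
        exact_mod_cast congrArg (fun z : ℤ => (z : ℚ)) (Int.toNat_of_nonneg hnum.le)]
      exact h1
    exact_mod_cast h2
  have hnN : n < N := by
    by_contra hge
    push_neg at hge
    -- valuation identities
    have hdesc0 : n.descFactorial r ≠ 0 := fun h =>
      absurd (Nat.descFactorial_eq_zero_iff_lt.mp h) (not_lt.mpr hrn)
    have hdvd : n.descFactorial r ∣ rDerangement r n :=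
      descFactorial_dvd_rDerangement (by omega) hrn
    have hCr : rDerangement r n
        = n.descFactorial r * (rDerangement r n / n.descFactorial r) :=
      (Nat.mul_div_cancel' hdvd).symm
    have hC0 : rDerangement r n / n.descFactorial r ≠ 0 := by
      intro h
      apply hpC n hrn
      show p ∣ Cr r n
      rw [show Cr r n = rDerangement r n / n.descFactorial r from rfl, h]
      exact dvd_zero p
    have hvC : padicValNat p (rDerangement r n / n.descFactorial r) = 0 :=
      padicValNat.eq_zero_of_not_dvd (hpC n hrn)
    have hvD : padicValNat p (rDerangement r n) = padicValNat p (n.descFactorial r) := by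
      conv_lhs => rw [hCr]
      rw [padicValNat.mul hdesc0 hC0, hvC, add_zero]
    have hveq : padicValNat p (rDerangement r n) + Vd
        = padicValNat p q.num.toNat + padicValNat p (Nat.factorial m) := by
      have h3 := congrArg (padicValNat p) heqN
      rw [padicValNat.mul hD0 hden, padicValNat.mul (by omega) (Nat.factorial_ne_zero m)] at h3
      exact h3
    set R := r * (Nat.log 2 n + 1) + Vd with hR
    have hvdesc : padicValNat p (n.descFactorial r) ≤ r * (Nat.log 2 n + 1) :=
      padicValNat_descFactorial_le hpp (by omega) hrn
    have hvm : padicValNat p (Nat.factorial m) ≤ R := by omega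
    -- lower bound on m
    have hDlb : Nat.factorial (n - r - 1) ≤ rDerangement r n := by
      have h5 := fact_le_numDerangements (n - r - 2)
      rw [show n - r - 2 + 2 = n - r by omega, show n - r - 2 + 1 = n - r - 1 by omega] at h5
      exact le_trans h5 (numDerangements_le_rDerangement (by omega) hrn)
    have hmk : n - r - 2 ≤ m := by
      by_contra hmk
      push_neg at hmk
      have hflt : Nat.factorial m < Nat.factorial (n - r - 2) :=
        (Nat.factorial_lt hm).mpr hmk
      have h8 : Nat.factorial (n - r - 1) = (n - r - 1) * Nat.factorial (n - r - 2) := by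
        rw [show n - r - 1 = (n - r - 2) + 1 by omega, Nat.factorial_succ]
      have h9 : q.num.toNat ≤ n - r - 1 := by omega
      have hcontra : q.num.toNat * Nat.factorial m < q.num.toNat * Nat.factorial m := by
        calc q.num.toNat * Nat.factorial m
            < q.num.toNat * Nat.factorial (n - r - 2) :=
              mul_lt_mul_of_pos_left hflt hnum'
          _ ≤ (n - r - 1) * Nat.factorial (n - r - 2) :=
              Nat.mul_le_mul_right _ h9
          _ = Nat.factorial (n - r - 1) := h8.symm
          _ ≤ rDerangement r n := hDlb
          _ ≤ rDerangement r n * q.den :=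
              Nat.le_mul_of_pos_right _ (Nat.pos_of_ne_zero hden)
          _ = q.num.toNat * Nat.factorial m := heqN
      exact absurd hcontra (lt_irrefl _)
    -- the quantitative contradiction
    set s := Nat.sqrt (2 * n) with hs_def
    have hs : Nat.log 2 n ≤ s := log_le_sqrt_two_mul n
    have hs2 : s * s ≤ 2 * n := Nat.sqrt_le (2 * n)
    have h4A : 4 * A ≤ s := by
      apply Nat.le_sqrt.mpr
      have he : (4 * A) * (4 * A) = 16 * (A * A) := by ring
      omega
    have hAs : 4 * (A * s) ≤ s * s := by
      calc 4 * (A * s) = (4 * A) * s := by ring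
        _ ≤ s * s := Nat.mul_le_mul_right s h4A
    have hABn : A * s + B ≤ n := by omega
    have hALs : A * Nat.log 2 n ≤ A * s := Nat.mul_le_mul_left A hs
    have e1 : (R + 1) * p = A * Nat.log 2 n + A + p * Vd + p := by
      rw [hR, hA]; ring
    have hmulle : (R + 1) * p ≤ n - r - 2 := by omega
    have hdivle : R + 1 ≤ (n - r - 2) / p :=
      (Nat.le_div_iff_mul_le hpp.pos).mpr hmulle
    have hdivchain : (n - r - 2) / p ≤ m / p := Nat.div_le_div_right hmk
    have hvml : m / p ≤ padicValNat p (Nat.factorial m) :=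
      div_le_padicValNat_factorial hpp m
    omega
  refine ⟨hnN, ?_⟩
  have h14 : m ≤ Nat.factorial m := Nat.self_le_factorial m
  have h15 : Nat.factorial m ≤ q.num.toNat * Nat.factorial m :=
    Nat.le_mul_of_pos_left _ hnum'
  have h16 : rDerangement r n * q.den
      ≤ (Finset.range N).sup (fun i => rDerangement r i * q.den) :=
    Finset.le_sup (f := fun i => rDerangement r i * q.den) (Finset.mem_range.mpr hnN)
  omega
end
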